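/- arXiv:1802.01383 — 4 statements merged into one kernel-verified Lean document; each statement's English description precedes it below -/
import Mathlib

section
/- The commutator subgroup VB_3' of VB_3 is isomorphic to the presented group with generators A_m, F_m (m ∈ ℤ) and defining relators F_{m+1}^{−1} F_{m+2} F_{m+3}^{−1} F_{m+2} F_{m+1}^{−1} F_m, A_m F_{m+1} A_{m+1} F_{m+2}^{−1} A_{m+2} F_{m+3} A_{m+2}^{−1} F_{m+2}^{−1} A_{m+1}^{−1} F_{m+1} A_m^{−1} F_m^{−1}, and F_m³ (for all m ∈ ℤ), via an isomorphism sending A_m to a_m and F_m to f_m. -/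
/-!
Common setup: the virtual braid group `VB n` and the welded braid group `WB n`
as presented groups, together with the distinguished elements of their
commutator subgroups used in the paper
"Commutator subgroups of virtual and welded braid groups".

Generators: for `i : Fin (n-1)`, `Sum.inl i` represents σ_{i+1} and
`Sum.inr i` represents ρ_{i+1}.
-/

/-- The generating set of `VB n` (and `WB n`). -/
abbrev VBGen (n : ℕ) := (Fin (n - 1)) ⊕ (Fin (n - 1))

/-- The free group letter σ_i, for `1 ≤ i ≤ n-1` (junk value `1` otherwise). -/
def fσ (n i : ℕ) : FreeGroup (VBGen n) :=
  if h : 1 ≤ i ∧ i - 1 < n - 1 then FreeGroup.of (Sum.inl ⟨i - 1, h.2⟩) else 1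

/-- The free group letter ρ_i, for `1 ≤ i ≤ n-1` (junk value `1` otherwise). -/
def fρ (n i : ℕ) : FreeGroup (VBGen n) :=
  if h : 1 ≤ i ∧ i - 1 < n - 1 then FreeGroup.of (Sum.inr ⟨i - 1, h.2⟩) else 1

/-- The defining relators of the virtual braid group `VB n`. -/
def vbRels (n : ℕ) : Set (FreeGroup (VBGen n)) :=
  {r | ∃ i j, 1 ≤ i ∧ i + 2 ≤ j ∧ j ≤ n - 1 ∧
      (r = fσ n i * fσ n j * (fσ n i)⁻¹ * (fσ n j)⁻¹ ∨
       r = fρ n i * fρ n j * (fρ n i)⁻¹ * (fρ n j)⁻¹ ∨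
       r = fσ n i * fρ n j * (fσ n i)⁻¹ * (fρ n j)⁻¹ ∨
       r = fσ n j * fρ n i * (fσ n j)⁻¹ * (fρ n i)⁻¹)} ∪
  {r | ∃ i, 1 ≤ i ∧ i + 1 ≤ n - 1 ∧
      (r = fσ n i * fσ n (i+1) * fσ n i * (fσ n (i+1))⁻¹ * (fσ n i)⁻¹ * (fσ n (i+1))⁻¹ ∨
       r = fρ n i * fρ n (i+1) * fρ n i * (fρ n (i+1))⁻¹ * (fρ n i)⁻¹ * (fρ n (i+1))⁻¹ ∨
       r = fρ n i * fρ n (i+1) * fσ n i * (fρ n (i+1))⁻¹ * (fρ n i)⁻¹ * (fσ n (i+1))⁻¹)} ∪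
  {r | ∃ i, 1 ≤ i ∧ i ≤ n - 1 ∧ r = fρ n i * fρ n i}

/-- The virtual braid group on `n` strands. -/
abbrev VB (n : ℕ) := PresentedGroup (vbRels n)

/-- The generator σ_i of `VB n`. -/
def vσ (n i : ℕ) : VB n := PresentedGroup.mk (vbRels n) (fσ n i)

/-- The generator ρ_i of `VB n`. -/
def vρ (n i : ℕ) : VB n := PresentedGroup.mk (vbRels n) (fρ n i)

/-- a_m = σ_1^m (ρ_1 σ_1 ρ_1 σ_1⁻¹) σ_1^{-m}. -/
def va (n : ℕ) (m : ℤ) : VB n :=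
  (vσ n 1) ^ m * (vρ n 1 * vσ n 1 * vρ n 1 * (vσ n 1)⁻¹) * (vσ n 1) ^ (-m)

/-- b_{m,ε} = σ_1^m (ρ_1^ε σ_2 ρ_1^ε σ_1⁻¹) σ_1^{-m}. -/
def vb (n : ℕ) (m : ℤ) (ε : ℕ) : VB n :=
  (vσ n 1) ^ m * ((vρ n 1) ^ ε * vσ n 2 * (vρ n 1) ^ ε * (vσ n 1)⁻¹) * (vσ n 1) ^ (-m)

/-- c_l = σ_l σ_1⁻¹. -/
def vc (n l : ℕ) : VB n := vσ n l * (vσ n 1)⁻¹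

/-- f_{m,ε} = σ_1^m (ρ_1^ε ρ_2 ρ_1^{ε+1}) σ_1^{-m}; `f_m` is `vf n m 0`. -/
def vf (n : ℕ) (m : ℤ) (ε : ℕ) : VB n :=
  (vσ n 1) ^ m * ((vρ n 1) ^ ε * vρ n 2 * (vρ n 1) ^ (ε + 1)) * (vσ n 1) ^ (-m)

/-- g_{m,l} = σ_1^m (ρ_l ρ_1) σ_1^{-m}. -/
def vg (n : ℕ) (m : ℤ) (l : ℕ) : VB n :=
  (vσ n 1) ^ m * (vρ n l * vρ n 1) * (vσ n 1) ^ (-m)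

/-- The additional relators ρ_i σ_{i+1} σ_i (ρ_{i+1})⁻¹ σ_i⁻¹ σ_{i+1}⁻¹ of the
welded braid group. -/
def wbExtraRels (n : ℕ) : Set (FreeGroup (VBGen n)) :=
  {r | ∃ i, 1 ≤ i ∧ i + 1 ≤ n - 1 ∧
      r = fρ n i * fσ n (i+1) * fσ n i * (fρ n (i+1))⁻¹ * (fσ n i)⁻¹ * (fσ n (i+1))⁻¹}

/-- The defining relators of the welded braid group `WB n`. -/
def wbRels (n : ℕ) : Set (FreeGroup (VBGen n)) := vbRels n ∪ wbExtraRels n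

/-- The welded braid group on `n` strands. -/
abbrev WB (n : ℕ) := PresentedGroup (wbRels n)

/-- The generator σ_i of `WB n`. -/
def wσ (n i : ℕ) : WB n := PresentedGroup.mk (wbRels n) (fσ n i)

/-- The generator ρ_i of `WB n`. -/
def wρ (n i : ℕ) : WB n := PresentedGroup.mk (wbRels n) (fρ n i)

/-- a_m in `WB n`. -/
def wa (n : ℕ) (m : ℤ) : WB n :=
  (wσ n 1) ^ m * (wρ n 1 * wσ n 1 * wρ n 1 * (wσ n 1)⁻¹) * (wσ n 1) ^ (-m)

/-- f_{m,ε} in `WB n`; `f_m` is `wf n m 0`. -/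
def wf (n : ℕ) (m : ℤ) (ε : ℕ) : WB n :=
  (wσ n 1) ^ m * ((wρ n 1) ^ ε * wρ n 2 * (wρ n 1) ^ (ε + 1)) * (wσ n 1) ^ (-m)

/-- c_l in `WB n`. -/
def wc (n l : ℕ) : WB n := wσ n l * (wσ n 1)⁻¹

/-- g_{m,l} in `WB n`. -/
def wg (n : ℕ) (m : ℤ) (l : ℕ) : WB n :=
  (wσ n 1) ^ m * (wρ n l * wρ n 1) * (wσ n 1) ^ (-m)

/-- Relators of the presentation of `VB_3'`: generators `A_m = Sum.inl m`,
`F_m = Sum.inr m` for `m : ℤ`. -/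
def vb3Rels : Set (FreeGroup (ℤ ⊕ ℤ)) :=
  {r | ∃ m : ℤ,
    r = (FreeGroup.of (Sum.inr (m+1) : ℤ ⊕ ℤ))⁻¹ * FreeGroup.of (Sum.inr (m+2)) *
        (FreeGroup.of (Sum.inr (m+3) : ℤ ⊕ ℤ))⁻¹ * FreeGroup.of (Sum.inr (m+2)) *
        (FreeGroup.of (Sum.inr (m+1) : ℤ ⊕ ℤ))⁻¹ * FreeGroup.of (Sum.inr m) ∨
    r = FreeGroup.of (Sum.inl m : ℤ ⊕ ℤ) * FreeGroup.of (Sum.inr (m+1)) *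
        FreeGroup.of (Sum.inl (m+1)) * (FreeGroup.of (Sum.inr (m+2) : ℤ ⊕ ℤ))⁻¹ *
        FreeGroup.of (Sum.inl (m+2)) * FreeGroup.of (Sum.inr (m+3)) *
        (FreeGroup.of (Sum.inl (m+2) : ℤ ⊕ ℤ))⁻¹ * (FreeGroup.of (Sum.inr (m+2) : ℤ ⊕ ℤ))⁻¹ *
        (FreeGroup.of (Sum.inl (m+1) : ℤ ⊕ ℤ))⁻¹ * FreeGroup.of (Sum.inr (m+1)) *
        (FreeGroup.of (Sum.inl m : ℤ ⊕ ℤ))⁻¹ * (FreeGroup.of (Sum.inr m : ℤ ⊕ ℤ))⁻¹ ∨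
    r = (FreeGroup.of (Sum.inr m : ℤ ⊕ ℤ)) ^ 3}

namespace VB3Proof

open scoped commutatorElement

/-! ### Basic elements of VB 3 -/

abbrev s : VB 3 := vσ 3 1
abbrev u : VB 3 := vσ 3 2
abbrev p : VB 3 := vρ 3 1
abbrev q : VB 3 := vρ 3 2

lemma mk_rel {α : Type*} {rels : Set (FreeGroup α)} {r : FreeGroup α} (h : r ∈ rels) :
    PresentedGroup.mk rels r = 1 := by
  exact PresentedGroup.one_of_mem h

lemma hp : p * p = 1 := by
  have : (fρ 3 1 * fρ 3 1) ∈ vbRels 3 := Or.inr ⟨1, by norm_num⟩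
  have h := mk_rel this
  rw [map_mul] at h
  exact h

lemma hq : q * q = 1 := by
  have : (fρ 3 2 * fρ 3 2) ∈ vbRels 3 := Or.inr ⟨2, by norm_num⟩
  have h := mk_rel this
  rw [map_mul] at h
  exact h

lemma hbs : s * u * s = u * s * u := by
  have : (fσ 3 1 * fσ 3 (1+1) * fσ 3 1 * (fσ 3 (1+1))⁻¹ * (fσ 3 1)⁻¹ * (fσ 3 (1+1))⁻¹) ∈ vbRels 3 :=
    Or.inl (Or.inr ⟨1, by norm_num, by norm_num, Or.inl rfl⟩)
  have h := mk_rel this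
  simp only [map_mul, map_inv] at h
  have : s * u * s * u⁻¹ * s⁻¹ * u⁻¹ = 1 := h
  calc s * u * s = (s * u * s * u⁻¹ * s⁻¹ * u⁻¹) * (u * s * u) := by group
    _ = u * s * u := by rw [this]; group

lemma hbr : p * q * p = q * p * q := by
  have : (fρ 3 1 * fρ 3 (1+1) * fρ 3 1 * (fρ 3 (1+1))⁻¹ * (fρ 3 1)⁻¹ * (fρ 3 (1+1))⁻¹) ∈ vbRels 3 :=
    Or.inl (Or.inr ⟨1, by norm_num, by norm_num, Or.inr (Or.inl rfl)⟩)
  have h := mk_rel this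
  simp only [map_mul, map_inv] at h
  have : p * q * p * q⁻¹ * p⁻¹ * q⁻¹ = 1 := h
  calc p * q * p = (p * q * p * q⁻¹ * p⁻¹ * q⁻¹) * (q * p * q) := by group
    _ = q * p * q := by rw [this]; group

lemma hmix : p * q * s = u * p * q := by
  have : (fρ 3 1 * fρ 3 (1+1) * fσ 3 1 * (fρ 3 (1+1))⁻¹ * (fρ 3 1)⁻¹ * (fσ 3 (1+1))⁻¹) ∈ vbRels 3 :=
    Or.inl (Or.inr ⟨1, by norm_num, by norm_num, Or.inr (Or.inr rfl)⟩)
  have h := mk_rel this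
  simp only [map_mul, map_inv] at h
  have : p * q * s * q⁻¹ * p⁻¹ * u⁻¹ = 1 := h
  calc p * q * s = (p * q * s * q⁻¹ * p⁻¹ * u⁻¹) * (u * p * q) := by group
    _ = u * p * q := by rw [this]; group

lemma hp' : p⁻¹ = p := by
  rw [inv_eq_iff_mul_eq_one]; exact hp

lemma hq' : q⁻¹ = q := by
  rw [inv_eq_iff_mul_eq_one]; exact hq

lemma hu : p * q * s * q * p = u := by
  calc p * q * s * q * p = (p * q * s) * q⁻¹ * p⁻¹ := by rw [hp', hq']
    _ = (u * p * q) * q⁻¹ * p⁻¹ := by rw [hmix]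
    _ = u := by group

lemma hui : p * q * s⁻¹ * q * p = u⁻¹ := by
  have : (p * q * s * q * p)⁻¹ = u⁻¹ := by rw [hu]
  calc p * q * s⁻¹ * q * p = p⁻¹ * q⁻¹ * s⁻¹ * q⁻¹ * p⁻¹ := by rw [hp', hq']
    _ = (p * q * s * q * p)⁻¹ := by group
    _ = u⁻¹ := by rw [hu]

/-- (qp)^3 = 1 -/
lemma T0 : (q * p) * (q * p) * (q * p) = 1 := by
  calc (q * p) * (q * p) * (q * p) = q * (p * q * p) * (q * p) := by group
    _ = q * (q * p * q) * (q * p) := by rw [hbr]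
    _ = (q * q) * p * (q * q) * p := by group
    _ = 1 * p * 1 * p := by rw [hq]
    _ = p * p := by group
    _ = 1 := hp


/-! ### The elements a_m, f_m and auxiliary identities -/

/-- `f_m` -/
def fe (m : ℤ) : VB 3 := s ^ m * (q * p) * s ^ (-m)

/-- `a_m` -/
def ae (m : ℤ) : VB 3 := s ^ m * (p * s * p * s⁻¹) * s ^ (-m)

lemma fe_eq (m : ℤ) : vf 3 m 0 = fe m := by
  simp [vf, fe, vρ]

lemma ae_eq (m : ℤ) : va 3 m = ae m := rfl

lemma fei (k : ℤ) : (fe k)⁻¹ = s ^ k * (p * q) * s ^ (-k) := by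
  have h1 : (fe k)⁻¹ = s ^ k * (p⁻¹ * q⁻¹) * s ^ (-k) := by unfold fe; group
  rw [h1, hp', hq']

lemma aei (k : ℤ) : (ae k)⁻¹ = s ^ k * (s * p * s⁻¹ * p) * s ^ (-k) := by
  have h1 : (ae k)⁻¹ = s ^ k * (s * p⁻¹ * s⁻¹ * p⁻¹) * s ^ (-k) := by unfold ae; group
  rw [h1, hp']

/-- braid relation for (psp, qsq) -/
lemma hqsq : q * s * q = p * u * p := by
  calc q * s * q = (p * p) * q * s * q * (p * p) := by rw [hp]; group
    _ = p * (p * q * s * q * p) * p := by group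
    _ = p * u * p := by rw [hu]

lemma hbx : (p * s * p) * (q * s * q) * (p * s * p) = (q * s * q) * (p * s * p) * (q * s * q) := by
  rw [hqsq]
  calc (p * s * p) * (p * u * p) * (p * s * p)
      = p * s * (p * p) * u * (p * p) * s * p := by group
    _ = p * s * 1 * u * 1 * s * p := by rw [hp]
    _ = p * (s * u * s) * p := by group
    _ = p * (u * s * u) * p := by rw [hbs]
    _ = p * u * (p * p) * s * (p * p) * u * p := by rw [hp]; group
    _ = (p * u * p) * (p * s * p) * (p * u * p) := by group

/-- T1 : the F-relator holds in VB 3 -/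
lemma T1 (m : ℤ) :
    (fe (m+1))⁻¹ * fe (m+2) * (fe (m+3))⁻¹ * fe (m+2) * (fe (m+1))⁻¹ * fe m = 1 := by
  rw [fei, fei]
  unfold fe
  calc s ^ (m+1) * (p * q) * s ^ (-(m+1)) * (s ^ (m+2) * (q * p) * s ^ (-(m+2))) *
        (s ^ (m+3) * (p * q) * s ^ (-(m+3))) * (s ^ (m+2) * (q * p) * s ^ (-(m+2))) *
        (s ^ (m+1) * (p * q) * s ^ (-(m+1))) * (s ^ m * (q * p) * s ^ (-m))
      = s ^ m * (s * (p * q * s * q * p) * s * (p * q * s⁻¹ * q * p) * s⁻¹ *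
          (p * q * s⁻¹ * q * p)) * s ^ (-m) := by group
    _ = s ^ m * (s * u * s * u⁻¹ * s⁻¹ * u⁻¹) * s ^ (-m) := by rw [hu, hui]
    _ = s ^ m * ((s * u * s) * (u * s * u)⁻¹) * s ^ (-m) := by group
    _ = s ^ m * ((u * s * u) * (u * s * u)⁻¹) * s ^ (-m) := by rw [hbs]
    _ = 1 := by group


lemma qsqi : (q * s * q)⁻¹ = q * s⁻¹ * q := by
  have : (q * s * q)⁻¹ = q⁻¹ * s⁻¹ * q⁻¹ := by group
  rw [this, hq']

lemma pspi : (p * s * p)⁻¹ = p * s⁻¹ * p := by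
  have : (p * s * p)⁻¹ = p⁻¹ * s⁻¹ * p⁻¹ := by group
  rw [this, hp']

lemma hbx' : (p*s*p) * (q*s*q) * (p*s*p) * (q*s⁻¹*q) * (p*s⁻¹*p) * (q*s⁻¹*q) = 1 := by
  rw [← qsqi, ← pspi]
  calc (p*s*p) * (q*s*q) * (p*s*p) * (q*s*q)⁻¹ * (p*s*p)⁻¹ * (q*s*q)⁻¹
      = ((p*s*p) * (q*s*q) * (p*s*p)) * ((q*s*q) * (p*s*p) * (q*s*q))⁻¹ := by group
    _ = ((p*s*p) * (q*s*q) * (p*s*p)) * ((p*s*p) * (q*s*q) * (p*s*p))⁻¹ := by rw [hbx]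
    _ = 1 := by group

/-- T2 : the A-relator holds in VB 3 -/
lemma T2 (m : ℤ) :
    ae m * fe (m+1) * ae (m+1) * (fe (m+2))⁻¹ * ae (m+2) * fe (m+3) * (ae (m+2))⁻¹ *
      (fe (m+2))⁻¹ * (ae (m+1))⁻¹ * fe (m+1) * (ae m)⁻¹ * (fe m)⁻¹ = 1 := by
  rw [fei, fei, aei, aei, aei]
  unfold fe ae
  calc (s ^ m * (p * s * p * s⁻¹) * s ^ (-m)) * (s ^ (m+1) * (q * p) * s ^ (-(m+1))) *
        (s ^ (m+1) * (p * s * p * s⁻¹) * s ^ (-(m+1))) * (s ^ (m+2) * (p * q) * s ^ (-(m+2))) *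
        (s ^ (m+2) * (p * s * p * s⁻¹) * s ^ (-(m+2))) * (s ^ (m+3) * (q * p) * s ^ (-(m+3))) *
        (s ^ (m+2) * (s * p * s⁻¹ * p) * s ^ (-(m+2))) * (s ^ (m+2) * (p * q) * s ^ (-(m+2))) *
        (s ^ (m+1) * (s * p * s⁻¹ * p) * s ^ (-(m+1))) * (s ^ (m+1) * (q * p) * s ^ (-(m+1))) *
        (s ^ m * (s * p * s⁻¹ * p) * s ^ (-m)) * (s ^ m * (p * q) * s ^ (-m))
      = s ^ m * (p*s*p*q*(p*p)*s*(p*p)*q*p*s*p*q*(p*p)*s⁻¹*(p*p)*q*p*s⁻¹*p*q*(p*p)*s⁻¹*(p*p)*q)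
          * s ^ (-m) := by group
    _ = s ^ m * (p*s*p*q*1*s*1*q*p*s*p*q*1*s⁻¹*1*q*p*s⁻¹*p*q*1*s⁻¹*1*q) * s ^ (-m) := by rw [hp]
    _ = s ^ m * ((p*s*p) * (q*s*q) * (p*s*p) * (q*s⁻¹*q) * (p*s⁻¹*p) * (q*s⁻¹*q)) * s ^ (-m) := by
        group
    _ = s ^ m * (1:VB 3) * s ^ (-m) := by rw [hbx']
    _ = 1 := by group


/-- T3 : f_m^3 = 1 in VB 3 -/
lemma T3 (m : ℤ) : (fe m) ^ (3:ℕ) = 1 := by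
  calc (fe m) ^ (3:ℕ) = fe m * fe m * fe m := by
        rw [pow_succ, pow_succ, pow_one]
    _ = s ^ m * ((q*p) * (q*p) * (q*p)) * s ^ (-m) := by unfold fe; group
    _ = s ^ m * (1:VB 3) * s ^ (-m) := by rw [T0]
    _ = 1 := by group

lemma hpq2 : (q * p) * (q * p) = p * q := by
  have h := T0
  have h1 : (q*p)*(q*p) = (q*p)⁻¹ := by
    calc (q*p)*(q*p) = ((q*p)*(q*p)*(q*p))*(q*p)⁻¹ := by group
      _ = 1 * (q*p)⁻¹ := by rw [T0]
      _ = (q*p)⁻¹ := by group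
  rw [h1]
  calc (q*p)⁻¹ = p⁻¹ * q⁻¹ := by group
    _ = p * q := by rw [hp', hq']

/-- the 1-cocycle (a₀a₁⋯a_{m-1}) realized concretely in VB 3 -/
def ve (m : ℤ) : VB 3 := (ae 0 * s) ^ m * s ^ (-m)

lemma ve_zero : ve 0 = 1 := by unfold ve; group

lemma ve_succ (m : ℤ) : ve (m+1) = ve m * ae m := by
  unfold ve ae
  rw [zpow_add_one]
  group

lemma hps : p * s = ae 0 * s * p := by
  have h : ae 0 * s * p = p * s * (p * p) := by unfold ae; group
  rw [h, hp, mul_one]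

lemma hpsi : p * s⁻¹ = (ae 0 * s)⁻¹ * p := by
  have h : (ae 0 * s) * p * s⁻¹ = p := by rw [← hps]; group
  calc p * s⁻¹ = (ae 0 * s)⁻¹ * ((ae 0 * s) * p * s⁻¹) := by group
    _ = (ae 0 * s)⁻¹ * p := by rw [h]

lemma hpsm : ∀ m : ℤ, p * s ^ m = (ae 0 * s) ^ m * p := by
  intro m
  induction m using Int.induction_on with
  | zero => simp
  | succ k ih =>
      calc p * s ^ ((k:ℤ)+1) = p * s ^ (k:ℤ) * s := by group
        _ = (ae 0 * s) ^ (k:ℤ) * (p * s) := by rw [ih]; group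
        _ = (ae 0 * s) ^ (k:ℤ) * (ae 0 * s * p) := by rw [hps]
        _ = (ae 0 * s) ^ ((k:ℤ)+1) * p := by rw [zpow_add_one]; group
  | pred k ih =>
      calc p * s ^ (-(k:ℤ)-1) = p * s ^ (-(k:ℤ)) * s⁻¹ := by group
        _ = (ae 0 * s) ^ (-(k:ℤ)) * (p * s⁻¹) := by rw [ih]; group
        _ = (ae 0 * s) ^ (-(k:ℤ)) * ((ae 0 * s)⁻¹ * p) := by rw [hpsi]
        _ = (ae 0 * s) ^ (-(k:ℤ)-1) * p := by rw [zpow_sub_one]; group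

lemma hsmp (m : ℤ) : s ^ (-m) * p = p * (ae 0 * s) ^ (-m) := by
  have h := hpsm m
  calc s ^ (-m) * p = s ^ (-m) * p⁻¹ := by rw [hp']
    _ = (p * s ^ m)⁻¹ := by group
    _ = ((ae 0 * s) ^ m * p)⁻¹ := by rw [h]
    _ = p⁻¹ * (ae 0 * s) ^ (-m) := by group
    _ = p * (ae 0 * s) ^ (-m) := by rw [hp']

lemma hpam (m : ℤ) : p * ae m * p = ve m * (ae m)⁻¹ * (ve m)⁻¹ := by
  have key : p * ae m * p = (ae 0 * s) ^ m * (s * p * s⁻¹ * p) * (ae 0 * s) ^ (-m) := by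
    calc p * ae m * p = (p * s ^ m) * (p * s * p * s⁻¹) * (s ^ (-m) * p) := by unfold ae; group
      _ = ((ae 0 * s) ^ m * p) * (p * s * p * s⁻¹) * (p * (ae 0 * s) ^ (-m)) := by
          rw [hpsm, hsmp]
      _ = (ae 0 * s) ^ m * (p * p) * s * p * s⁻¹ * p * (ae 0 * s) ^ (-m) := by group
      _ = (ae 0 * s) ^ m * 1 * s * p * s⁻¹ * p * (ae 0 * s) ^ (-m) := by rw [hp]
      _ = (ae 0 * s) ^ m * (s * p * s⁻¹ * p) * (ae 0 * s) ^ (-m) := by group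
  rw [key, aei m]
  unfold ve
  group

lemma hpfm (m : ℤ) : p * fe m * p = ve m * (fe m * fe m) * (ve m)⁻¹ := by
  have key : p * fe m * p = (ae 0 * s) ^ m * (p * q) * (ae 0 * s) ^ (-m) := by
    calc p * fe m * p = (p * s ^ m) * (q * p) * (s ^ (-m) * p) := by unfold fe; group
      _ = ((ae 0 * s) ^ m * p) * (q * p) * (p * (ae 0 * s) ^ (-m)) := by rw [hpsm, hsmp]
      _ = (ae 0 * s) ^ m * p * q * (p * p) * (ae 0 * s) ^ (-m) := by group
      _ = (ae 0 * s) ^ m * p * q * 1 * (ae 0 * s) ^ (-m) := by rw [hp]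
      _ = (ae 0 * s) ^ m * (p * q) * (ae 0 * s) ^ (-m) := by group
  rw [key, ← hpq2]
  unfold ve fe
  group


lemma ve_pred (m : ℤ) : ve (m-1) = ve m * (ae (m-1))⁻¹ := by
  have h := ve_succ (m-1)
  have h2 : m - 1 + 1 = m := by ring
  rw [h2] at h
  rw [h]
  group

lemma hpsp : p * s * p = ae 0 * s := by
  calc p * s * p = ae 0 * s * (p * p) := by rw [hps]; group
    _ = ae 0 * s := by rw [hp, mul_one]

lemma hu2 : (fe 0)⁻¹ * fe 1 * s = u := by
  rw [fei]
  unfold fe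
  calc s ^ (0:ℤ) * (p * q) * s ^ (-(0:ℤ)) * (s ^ (1:ℤ) * (q * p) * s ^ (-(1:ℤ))) * s
      = p * q * s * q * p := by group
    _ = u := hu

lemma hq2 : fe 0 * p = q := by
  unfold fe
  calc s ^ (0:ℤ) * (q * p) * s ^ (-(0:ℤ)) * p = q * (p * p) := by group
    _ = q := by rw [hp, mul_one]

lemma ae_zero_comm : ae 0 = ⁅p, s⁆ := by
  have : ⁅p, s⁆ = p * s * p⁻¹ * s⁻¹ := rfl
  rw [this, hp']
  unfold ae
  group

lemma fe_zero_comm : fe 0 = ⁅q, p⁆⁻¹ := by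
  have h1 : ⁅q, p⁆ = q * p * q⁻¹ * p⁻¹ := rfl
  have h2 : ⁅q, p⁆ = (q*p) * (q*p) := by rw [h1, hq', hp']; group
  have h3 : fe 0 = q * p := by unfold fe; group
  rw [h2, h3]
  have h4 := T0
  calc q * p = (q*p) * ((q*p)*(q*p)) * ((q*p)*(q*p))⁻¹ := by group
    _ = ((q*p)*(q*p)*(q*p)) * ((q*p)*(q*p))⁻¹ := by group
    _ = 1 * ((q*p)*(q*p))⁻¹ := by rw [T0]
    _ = ((q*p)*(q*p))⁻¹ := by group

lemma ae_conj (m : ℤ) : ae m = s ^ m * ae 0 * s ^ (-m) := by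
  unfold ae; group

lemma fe_conj (m : ℤ) : fe m = s ^ m * fe 0 * s ^ (-m) := by
  unfold fe; group

lemma ae_mem (m : ℤ) : ae m ∈ commutator (VB 3) := by
  rw [ae_conj]
  have h0 : ae 0 ∈ commutator (VB 3) := by
    rw [ae_zero_comm]
    exact Subgroup.commutator_mem_commutator (Subgroup.mem_top _) (Subgroup.mem_top _)
  have hn : (commutator (VB 3)).Normal := Subgroup.commutator_normal ⊤ ⊤
  have := hn.conj_mem _ h0 (s ^ m)
  simpa [zpow_neg] using this

lemma fe_mem (m : ℤ) : fe m ∈ commutator (VB 3) := by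
  rw [fe_conj]
  have h0 : fe 0 ∈ commutator (VB 3) := by
    rw [fe_zero_comm]
    exact Subgroup.inv_mem _
      (Subgroup.commutator_mem_commutator (Subgroup.mem_top _) (Subgroup.mem_top _))
  have hn : (commutator (VB 3)).Normal := Subgroup.commutator_normal ⊤ ⊤
  have := hn.conj_mem _ h0 (s ^ m)
  simpa [zpow_neg] using this

/-! ### The abstract group `G` presented by A_m, F_m -/

/-- The presented group. -/
abbrev G3 := PresentedGroup vb3Rels

/-- generator A_m -/
def Ag (m : ℤ) : G3 := PresentedGroup.of (Sum.inl m)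

/-- generator F_m -/
def Fg (m : ℤ) : G3 := PresentedGroup.of (Sum.inr m)

lemma RfG (m : ℤ) :
    (Fg (m+1))⁻¹ * Fg (m+2) * (Fg (m+3))⁻¹ * Fg (m+2) * (Fg (m+1))⁻¹ * Fg m = 1 := by
  have h : ((FreeGroup.of (Sum.inr (m+1) : ℤ ⊕ ℤ))⁻¹ * FreeGroup.of (Sum.inr (m+2)) *
      (FreeGroup.of (Sum.inr (m+3) : ℤ ⊕ ℤ))⁻¹ * FreeGroup.of (Sum.inr (m+2)) *
      (FreeGroup.of (Sum.inr (m+1) : ℤ ⊕ ℤ))⁻¹ * FreeGroup.of (Sum.inr m)) ∈ vb3Rels :=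
    ⟨m, Or.inl rfl⟩
  have := mk_rel h
  simp only [map_mul, map_inv] at this
  exact this

lemma RaG (m : ℤ) :
    Ag m * Fg (m+1) * Ag (m+1) * (Fg (m+2))⁻¹ * Ag (m+2) * Fg (m+3) * (Ag (m+2))⁻¹ *
      (Fg (m+2))⁻¹ * (Ag (m+1))⁻¹ * Fg (m+1) * (Ag m)⁻¹ * (Fg m)⁻¹ = 1 := by
  have h : (FreeGroup.of (Sum.inl m : ℤ ⊕ ℤ) * FreeGroup.of (Sum.inr (m+1)) *
      FreeGroup.of (Sum.inl (m+1)) * (FreeGroup.of (Sum.inr (m+2) : ℤ ⊕ ℤ))⁻¹ *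
      FreeGroup.of (Sum.inl (m+2)) * FreeGroup.of (Sum.inr (m+3)) *
      (FreeGroup.of (Sum.inl (m+2) : ℤ ⊕ ℤ))⁻¹ * (FreeGroup.of (Sum.inr (m+2) : ℤ ⊕ ℤ))⁻¹ *
      (FreeGroup.of (Sum.inl (m+1) : ℤ ⊕ ℤ))⁻¹ * FreeGroup.of (Sum.inr (m+1)) *
      (FreeGroup.of (Sum.inl m : ℤ ⊕ ℤ))⁻¹ * (FreeGroup.of (Sum.inr m : ℤ ⊕ ℤ))⁻¹) ∈ vb3Rels :=
    ⟨m, Or.inr (Or.inl rfl)⟩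
  have := mk_rel h
  simp only [map_mul, map_inv] at this
  exact this

lemma F3G (m : ℤ) : (Fg m) ^ (3:ℕ) = 1 := by
  have h : ((FreeGroup.of (Sum.inr m : ℤ ⊕ ℤ)) ^ 3) ∈ vb3Rels := ⟨m, Or.inr (Or.inr rfl)⟩
  have := mk_rel h
  simp only [map_pow] at this
  exact this

lemma Fg_sq (m : ℤ) : (Fg m) ^ (2:ℕ) = (Fg m)⁻¹ := by
  have h := F3G m
  calc (Fg m) ^ (2:ℕ) = (Fg m) ^ (3:ℕ) * (Fg m)⁻¹ := by group
    _ = 1 * (Fg m)⁻¹ := by rw [h]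
    _ = (Fg m)⁻¹ := by group


/-! ### The shift automorphism of `G3` -/

/-- images of generators under the shift by `d` -/
def shfun (d : ℤ) : (ℤ ⊕ ℤ) → G3 := fun x =>
  match x with
  | Sum.inl m => Ag (m + d)
  | Sum.inr m => Fg (m + d)

lemma shfun_rels (d : ℤ) : ∀ r ∈ vb3Rels, FreeGroup.lift (shfun d) r = 1 := by
  rintro r ⟨m, (rfl | rfl | rfl)⟩
  · simp only [map_mul, map_inv, FreeGroup.lift_apply_of, shfun]
    have h := RfG (m + d)
    have e1 : m + 1 + d = m + d + 1 := by ring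
    have e2 : m + 2 + d = m + d + 2 := by ring
    have e3 : m + 3 + d = m + d + 3 := by ring
    rw [e1, e2, e3]
    exact h
  · simp only [map_mul, map_inv, FreeGroup.lift_apply_of, shfun]
    have h := RaG (m + d)
    have e1 : m + 1 + d = m + d + 1 := by ring
    have e2 : m + 2 + d = m + d + 2 := by ring
    have e3 : m + 3 + d = m + d + 3 := by ring
    rw [e1, e2, e3]
    exact h
  · simp only [map_pow, FreeGroup.lift_apply_of, shfun]
    exact F3G (m + d)

/-- shift by `d` as a homomorphism -/
def shHom (d : ℤ) : G3 →* G3 := PresentedGroup.toGroup (shfun_rels d)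

@[simp] lemma shHom_A (d m : ℤ) : shHom d (Ag m) = Ag (m + d) :=
  PresentedGroup.toGroup.of _

@[simp] lemma shHom_F (d m : ℤ) : shHom d (Fg m) = Fg (m + d) :=
  PresentedGroup.toGroup.of _

/-- the shift automorphism -/
def shAut : MulAut G3 where
  toFun := shHom 1
  invFun := shHom (-1)
  left_inv := by
    intro x
    have h : (shHom (-1)).comp (shHom 1) = MonoidHom.id G3 := by
      ext z
      cases z with
      | inl m =>
          show shHom (-1) (shHom 1 (Ag m)) = Ag m
          rw [shHom_A, shHom_A]; ring_nf
      | inr m =>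
          show shHom (-1) (shHom 1 (Fg m)) = Fg m
          rw [shHom_F, shHom_F]; ring_nf
    exact DFunLike.congr_fun h x
  right_inv := by
    intro x
    have h : (shHom 1).comp (shHom (-1)) = MonoidHom.id G3 := by
      ext z
      cases z with
      | inl m =>
          show shHom 1 (shHom (-1) (Ag m)) = Ag m
          rw [shHom_A, shHom_A]; ring_nf
      | inr m =>
          show shHom 1 (shHom (-1) (Fg m)) = Fg m
          rw [shHom_F, shHom_F]; ring_nf
    exact DFunLike.congr_fun h x
  map_mul' := map_mul _

lemma shAut_apply (x : G3) : shAut x = shHom 1 x := rfl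

lemma shAut_inv_apply (x : G3) : shAut⁻¹ x = shHom (-1) x := rfl

lemma shAut_zpow_A : ∀ (d m : ℤ), (shAut ^ d) (Ag m) = Ag (m + d) := by
  intro d
  induction d using Int.induction_on with
  | zero => intro m; simp
  | succ k ih =>
      intro m
      rw [zpow_add_one]
      have h0 : (shAut ^ (k:ℤ) * shAut) (Ag m) = (shAut ^ (k:ℤ)) (shAut (Ag m)) := rfl
      rw [h0, shAut_apply, shHom_A, ih]
      ring_nf
  | pred k ih =>
      intro m
      rw [zpow_sub_one]
      have h0 : (shAut ^ (-(k:ℤ)) * shAut⁻¹) (Ag m) = (shAut ^ (-(k:ℤ))) (shAut⁻¹ (Ag m)) := rfl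
      rw [h0, shAut_inv_apply, shHom_A, ih]
      ring_nf

lemma shAut_zpow_F : ∀ (d m : ℤ), (shAut ^ d) (Fg m) = Fg (m + d) := by
  intro d
  induction d using Int.induction_on with
  | zero => intro m; simp
  | succ k ih =>
      intro m
      rw [zpow_add_one]
      have h0 : (shAut ^ (k:ℤ) * shAut) (Fg m) = (shAut ^ (k:ℤ)) (shAut (Fg m)) := rfl
      rw [h0, shAut_apply, shHom_F, ih]
      ring_nf
  | pred k ih =>
      intro m
      rw [zpow_sub_one]
      have h0 : (shAut ^ (-(k:ℤ)) * shAut⁻¹) (Fg m) = (shAut ^ (-(k:ℤ))) (shAut⁻¹ (Fg m)) := rfl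
      rw [h0, shAut_inv_apply, shHom_F, ih]
      ring_nf


/-- shift action of `Multiplicative ℤ` on `G3` -/
def φs : Multiplicative ℤ →* MulAut G3 := zpowersHom _ shAut

/-- the group `K = G3 ⋊ ℤ` -/
abbrev K3 := SemidirectProduct G3 (Multiplicative ℤ) φs

/-- the generator of the `ℤ`-factor -/
def tZ : Multiplicative ℤ := Multiplicative.ofAdd 1

lemma toAdd_tZ_zpow (m : ℤ) : Multiplicative.toAdd (tZ ^ m) = m := by
  simp [tZ]

lemma φs_A (n : Multiplicative ℤ) (j : ℤ) :
    φs n (Ag j) = Ag (j + Multiplicative.toAdd n) := by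
  have : φs n = shAut ^ (Multiplicative.toAdd n) := rfl
  rw [this, shAut_zpow_A]

lemma φs_F (n : Multiplicative ℤ) (j : ℤ) :
    φs n (Fg j) = Fg (j + Multiplicative.toAdd n) := by
  have : φs n = shAut ^ (Multiplicative.toAdd n) := rfl
  rw [this, shAut_zpow_F]

/-- the element (A₀, t) of K3 -/
def xK : K3 := SemidirectProduct.inl (Ag 0) * SemidirectProduct.inr tZ

/-- the cocycle w : ℤ → G3,  w m = A₀A₁⋯A_{m-1} -/
def wG (m : ℤ) : G3 := (xK ^ m).left

lemma xK_right (m : ℤ) : (xK ^ m).right = tZ ^ m := by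
  have h : (xK ^ m).right = SemidirectProduct.rightHom (xK ^ m) := rfl
  rw [h, map_zpow]
  have : SemidirectProduct.rightHom xK = tZ := by
    unfold xK
    rw [map_mul, SemidirectProduct.rightHom_inl, SemidirectProduct.rightHom_inr, one_mul]
  rw [this]

lemma xK_decomp (m : ℤ) :
    xK ^ m = SemidirectProduct.inl (wG m) * SemidirectProduct.inr (tZ ^ m) := by
  rw [← xK_right m]
  exact (SemidirectProduct.inl_left_mul_inr_right _).symm

lemma wG_zero : wG 0 = 1 := by
  unfold wG
  rw [zpow_zero]
  rfl

lemma xK_left : xK.left = Ag 0 := by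
  unfold xK
  rw [SemidirectProduct.mul_left, SemidirectProduct.left_inl, SemidirectProduct.left_inr,
    SemidirectProduct.right_inl, map_one, mul_one]

lemma wG_succ (m : ℤ) : wG (m + 1) = wG m * Ag m := by
  unfold wG
  rw [zpow_add_one, SemidirectProduct.mul_left, xK_right, xK_left, φs_A, toAdd_tZ_zpow,
    zero_add]

lemma wG_pred (m : ℤ) : wG (m - 1) = wG m * (Ag (m-1))⁻¹ := by
  have h := wG_succ (m - 1)
  rw [sub_add_cancel] at h
  rw [h]
  group

lemma wG_cocycle (m k : ℤ) : wG (m + k) = wG m * (shAut ^ m) (wG k) := by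
  unfold wG
  rw [zpow_add, SemidirectProduct.mul_left, xK_right]
  have : φs (tZ ^ m) = shAut ^ m := by
    have h : φs (tZ ^ m) = shAut ^ (Multiplicative.toAdd (tZ ^ m)) := rfl
    rw [h, toAdd_tZ_zpow]
  rw [this]

/-! ### The automorphism `r` of `G3` (conjugation by ρ₁) -/

/-- images of generators under `r` -/
def rfun : (ℤ ⊕ ℤ) → G3 := fun x =>
  match x with
  | Sum.inl m => wG m * (Ag m)⁻¹ * (wG m)⁻¹
  | Sum.inr m => wG m * (Fg m) ^ (2:ℕ) * (wG m)⁻¹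

lemma rfun_rels : ∀ r ∈ vb3Rels, FreeGroup.lift rfun r = 1 := by
  rintro r ⟨m, (rfl | rfl | rfl)⟩
  · -- F-relator family
    simp only [map_mul, map_inv, FreeGroup.lift_apply_of, rfun]
    have hw1 : wG (m+1) = wG m * Ag m := wG_succ m
    have hw2 : wG (m+2) = wG m * Ag m * Ag (m+1) := by
      have h := wG_succ (m+1)
      have e : m + 1 + 1 = m + 2 := by ring
      rw [e] at h
      rw [h, hw1]
    have hw3 : wG (m+3) = wG m * Ag m * Ag (m+1) * Ag (m+2) := by
      have h := wG_succ (m+2)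
      have e : m + 2 + 1 = m + 3 := by ring
      rw [e] at h
      rw [h, hw2]
    rw [Fg_sq, Fg_sq, Fg_sq, Fg_sq, hw1, hw2, hw3]
    calc (wG m * Ag m * (Fg (m+1))⁻¹ * (wG m * Ag m)⁻¹)⁻¹ *
          (wG m * Ag m * Ag (m+1) * (Fg (m+2))⁻¹ * (wG m * Ag m * Ag (m+1))⁻¹) *
          (wG m * Ag m * Ag (m+1) * Ag (m+2) * (Fg (m+3))⁻¹ *
            (wG m * Ag m * Ag (m+1) * Ag (m+2))⁻¹)⁻¹ *
          (wG m * Ag m * Ag (m+1) * (Fg (m+2))⁻¹ * (wG m * Ag m * Ag (m+1))⁻¹) *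
          (wG m * Ag m * (Fg (m+1))⁻¹ * (wG m * Ag m)⁻¹)⁻¹ *
          (wG m * (Fg m)⁻¹ * (wG m)⁻¹)
        = wG m * (Ag m * Fg (m+1) * Ag (m+1) * (Fg (m+2))⁻¹ * Ag (m+2) * Fg (m+3) *
            (Ag (m+2))⁻¹ * (Fg (m+2))⁻¹ * (Ag (m+1))⁻¹ * Fg (m+1) * (Ag m)⁻¹ * (Fg m)⁻¹) *
            (wG m)⁻¹ := by group
      _ = wG m * 1 * (wG m)⁻¹ := by rw [RaG m]
      _ = 1 := by group
  · -- A-relator family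
    simp only [map_mul, map_inv, FreeGroup.lift_apply_of, rfun]
    have hw1 : wG (m+1) = wG m * Ag m := wG_succ m
    have hw2 : wG (m+2) = wG m * Ag m * Ag (m+1) := by
      have h := wG_succ (m+1)
      have e : m + 1 + 1 = m + 2 := by ring
      rw [e] at h
      rw [h, hw1]
    have hw3 : wG (m+3) = wG m * Ag m * Ag (m+1) * Ag (m+2) := by
      have h := wG_succ (m+2)
      have e : m + 2 + 1 = m + 3 := by ring
      rw [e] at h
      rw [h, hw2]
    rw [Fg_sq, Fg_sq, Fg_sq, Fg_sq, hw1, hw2, hw3]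
    calc (wG m * (Ag m)⁻¹ * (wG m)⁻¹) *
          (wG m * Ag m * (Fg (m+1))⁻¹ * (wG m * Ag m)⁻¹) *
          (wG m * Ag m * (Ag (m+1))⁻¹ * (wG m * Ag m)⁻¹) *
          (wG m * Ag m * Ag (m+1) * (Fg (m+2))⁻¹ * (wG m * Ag m * Ag (m+1))⁻¹)⁻¹ *
          (wG m * Ag m * Ag (m+1) * (Ag (m+2))⁻¹ * (wG m * Ag m * Ag (m+1))⁻¹) *
          (wG m * Ag m * Ag (m+1) * Ag (m+2) * (Fg (m+3))⁻¹ *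
            (wG m * Ag m * Ag (m+1) * Ag (m+2))⁻¹) *
          (wG m * Ag m * Ag (m+1) * (Ag (m+2))⁻¹ * (wG m * Ag m * Ag (m+1))⁻¹)⁻¹ *
          (wG m * Ag m * Ag (m+1) * (Fg (m+2))⁻¹ * (wG m * Ag m * Ag (m+1))⁻¹)⁻¹ *
          (wG m * Ag m * (Ag (m+1))⁻¹ * (wG m * Ag m)⁻¹)⁻¹ *
          (wG m * Ag m * (Fg (m+1))⁻¹ * (wG m * Ag m)⁻¹) *
          (wG m * (Ag m)⁻¹ * (wG m)⁻¹)⁻¹ *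
          (wG m * (Fg m)⁻¹ * (wG m)⁻¹)⁻¹
        = wG m * ((Fg (m+1))⁻¹ * Fg (m+2) * (Fg (m+3))⁻¹ * Fg (m+2) * (Fg (m+1))⁻¹ * Fg m) *
            (wG m)⁻¹ := by group
      _ = wG m * 1 * (wG m)⁻¹ := by rw [RfG m]
      _ = 1 := by group
  · -- F³ family
    simp only [map_mul, map_inv, map_pow, FreeGroup.lift_apply_of, rfun]
    rw [Fg_sq]
    rw [show (3:ℕ) = 2 + 1 from rfl, pow_succ, pow_succ, pow_one]
    calc wG m * (Fg m)⁻¹ * (wG m)⁻¹ * (wG m * (Fg m)⁻¹ * (wG m)⁻¹) *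
          (wG m * (Fg m)⁻¹ * (wG m)⁻¹)
        = wG m * ((Fg m) ^ (3:ℕ))⁻¹ * (wG m)⁻¹ := by group
      _ = wG m * (1:G3)⁻¹ * (wG m)⁻¹ := by rw [F3G m]
      _ = 1 := by group

/-- the homomorphism `r : G3 → G3` -/
def rG : G3 →* G3 := PresentedGroup.toGroup rfun_rels

@[simp] lemma rG_A (m : ℤ) : rG (Ag m) = wG m * (Ag m)⁻¹ * (wG m)⁻¹ :=
  PresentedGroup.toGroup.of rfun_rels

@[simp] lemma rG_F (m : ℤ) : rG (Fg m) = wG m * (Fg m) ^ (2:ℕ) * (wG m)⁻¹ :=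
  PresentedGroup.toGroup.of rfun_rels


lemma rG_w : ∀ m : ℤ, rG (wG m) = (wG m)⁻¹ := by
  intro m
  induction m using Int.induction_on with
  | zero => rw [wG_zero, map_one, inv_one]
  | succ k ih =>
      rw [wG_succ, map_mul, ih, rG_A]
      group
  | pred k ih =>
      have h : (-(k:ℤ) - 1) = (-(k:ℤ)) - 1 := by ring
      rw [h, wG_pred, map_mul, ih, map_inv, rG_A, wG_pred]
      group

lemma rG_rG_A (m : ℤ) : rG (rG (Ag m)) = Ag m := by
  rw [rG_A, map_mul, map_mul, map_inv, map_inv, rG_w, rG_A]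
  group

lemma rG_rG_F (m : ℤ) : rG (rG (Fg m)) = Fg m := by
  rw [rG_F, Fg_sq, map_mul, map_mul, map_inv, map_inv, rG_w, rG_F, Fg_sq]
  group

lemma rG_rG (x : G3) : rG (rG x) = x := by
  have h : rG.comp rG = MonoidHom.id G3 := by
    apply PresentedGroup.ext
    intro z
    cases z with
    | inl m => exact rG_rG_A m
    | inr m => exact rG_rG_F m
  exact DFunLike.congr_fun h x

/-- `r` as automorphism -/
def rAut : MulAut G3 where
  toFun := rG
  invFun := rG
  left_inv := rG_rG
  right_inv := rG_rG
  map_mul' := map_mul _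

lemma shAut_w (d m : ℤ) : (shAut ^ d) (wG m) = (wG d)⁻¹ * wG (d + m) := by
  have h := wG_cocycle d m
  rw [h]
  group

/-- `ℤ →* K3`, n ↦ (w_n, n): the τ-image of the ℤ-factor -/
def fτ : Multiplicative ℤ →* K3 where
  toFun n := SemidirectProduct.inl (wG (Multiplicative.toAdd n)) * SemidirectProduct.inr n
  map_one' := by
    show SemidirectProduct.inl (wG (Multiplicative.toAdd (1 : Multiplicative ℤ))) *
      SemidirectProduct.inr (1 : Multiplicative ℤ) = 1
    have h1 : Multiplicative.toAdd (1 : Multiplicative ℤ) = 0 := rfl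
    rw [h1, wG_zero, map_one, map_one, one_mul]
  map_mul' a b := by
    show SemidirectProduct.inl (wG (Multiplicative.toAdd (a * b))) *
        SemidirectProduct.inr (a * b) =
      (SemidirectProduct.inl (wG (Multiplicative.toAdd a)) * SemidirectProduct.inr a) *
      (SemidirectProduct.inl (wG (Multiplicative.toAdd b)) * SemidirectProduct.inr b)
    have hab : Multiplicative.toAdd (a * b) =
        Multiplicative.toAdd a + Multiplicative.toAdd b := rfl
    have hφ : φs a = shAut ^ (Multiplicative.toAdd a) := rfl
    rw [hab, wG_cocycle, map_mul, ← hφ, SemidirectProduct.inl_aut, map_mul, map_inv]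
    group

lemma fτ_apply (g : Multiplicative ℤ) :
    fτ g = SemidirectProduct.inl (wG (Multiplicative.toAdd g)) * SemidirectProduct.inr g := rfl

lemma fτ_conj (g : Multiplicative ℤ) (X : G3) :
    fτ g * SemidirectProduct.inl X * (fτ g)⁻¹ =
      SemidirectProduct.inl
        (wG (Multiplicative.toAdd g) * φs g X * (wG (Multiplicative.toAdd g))⁻¹) := by
  set d := Multiplicative.toAdd g
  calc fτ g * SemidirectProduct.inl X * (fτ g)⁻¹
      = SemidirectProduct.inl (wG d) * (SemidirectProduct.inr g * SemidirectProduct.inl X *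
          SemidirectProduct.inr g⁻¹) * SemidirectProduct.inl (wG d)⁻¹ := by
        rw [fτ_apply, map_inv, map_inv]; group; rfl
    _ = SemidirectProduct.inl (wG d) * SemidirectProduct.inl (φs g X) *
          SemidirectProduct.inl (wG d)⁻¹ := by rw [← SemidirectProduct.inl_aut]
    _ = SemidirectProduct.inl (wG d * φs g X * (wG d)⁻¹) := by
        rw [← map_mul, ← map_mul]

lemma τ_cond : ∀ g : Multiplicative ℤ,
    (SemidirectProduct.inl.comp rG).comp (φs g).toMonoidHom =
      (MulAut.conj (fτ g)).toMonoidHom.comp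
        (SemidirectProduct.inl.comp rG : G3 →* K3) := by
  intro g
  apply PresentedGroup.ext
  intro z
  cases z with
  | inl m =>
      show SemidirectProduct.inl (rG ((φs g) (Ag m))) =
        fτ g * SemidirectProduct.inl (rG (Ag m)) * (fτ g)⁻¹
      rw [fτ_conj, SemidirectProduct.inl_inj, φs_A, rG_A, rG_A]
      have hφ : φs g = shAut ^ (Multiplicative.toAdd g) := rfl
      rw [hφ, map_mul, map_mul, map_inv, map_inv, shAut_w, shAut_zpow_A,
        show Multiplicative.toAdd g + m = m + Multiplicative.toAdd g from by ring]
      group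
  | inr m =>
      show SemidirectProduct.inl (rG ((φs g) (Fg m))) =
        fτ g * SemidirectProduct.inl (rG (Fg m)) * (fτ g)⁻¹
      rw [fτ_conj, SemidirectProduct.inl_inj, φs_F, rG_F, rG_F, Fg_sq, Fg_sq]
      have hφ : φs g = shAut ^ (Multiplicative.toAdd g) := rfl
      rw [hφ, map_mul, map_mul, map_inv, map_inv, shAut_w, shAut_zpow_F,
        show Multiplicative.toAdd g + m = m + Multiplicative.toAdd g from by ring]
      group

/-- τ as an endomorphism of K3 -/
def τK : K3 →* K3 :=
  SemidirectProduct.lift (SemidirectProduct.inl.comp rG) fτ τ_cond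

lemma τK_inl (x : G3) : τK (SemidirectProduct.inl x) = SemidirectProduct.inl (rG x) :=
  SemidirectProduct.lift_inl _ _ _ _

lemma τK_inr (n : Multiplicative ℤ) :
    τK (SemidirectProduct.inr n) =
      SemidirectProduct.inl (wG (Multiplicative.toAdd n)) * SemidirectProduct.inr n :=
  SemidirectProduct.lift_inr _ _ _ _

lemma τK_τK (x : K3) : τK (τK x) = x := by
  have h : τK.comp τK = MonoidHom.id K3 := by
    apply SemidirectProduct.hom_ext
    · apply MonoidHom.ext
      intro x
      show τK (τK (SemidirectProduct.inl x)) = SemidirectProduct.inl x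
      rw [τK_inl, τK_inl, rG_rG]
    · apply MonoidHom.ext_mint
      show τK (τK (SemidirectProduct.inr (Multiplicative.ofAdd 1))) =
        SemidirectProduct.inr (Multiplicative.ofAdd 1)
      rw [τK_inr, map_mul, τK_inl, τK_inr]
      have h1 : Multiplicative.toAdd (Multiplicative.ofAdd (1:ℤ)) = 1 := rfl
      rw [h1, rG_w, ← mul_assoc, ← map_mul, inv_mul_cancel, map_one, one_mul]
  exact DFunLike.congr_fun h x

/-- τ as automorphism of K3 -/
def τAut : MulAut K3 where
  toFun := τK
  invFun := τK
  left_inv := τK_τK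
  right_inv := τK_τK
  map_mul' := map_mul _

lemma τAut_sq : τAut * τAut = 1 := by
  refine DFunLike.ext _ _ fun x => ?_
  show τK (τK x) = x
  exact τK_τK x

/-- the action of C₂ on K3 -/
def φτ : Multiplicative (ZMod 2) →* MulAut K3 where
  toFun c := τAut ^ (Multiplicative.toAdd c).val
  map_one' := by
    show τAut ^ (Multiplicative.toAdd (1 : Multiplicative (ZMod 2))).val = 1
    have h : (Multiplicative.toAdd (1 : Multiplicative (ZMod 2))).val = 0 := rfl
    rw [h, pow_zero]
  map_mul' a b := by
    show τAut ^ (Multiplicative.toAdd (a * b)).val =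
      τAut ^ (Multiplicative.toAdd a).val * τAut ^ (Multiplicative.toAdd b).val
    have h2 : τAut ^ (2:ℕ) = 1 := by rw [pow_two]; exact τAut_sq
    have key : ∀ n : ℕ, τAut ^ n = τAut ^ (n % 2) := by
      intro n
      conv_lhs => rw [← Nat.div_add_mod n 2]
      rw [pow_add, pow_mul, h2, one_pow, one_mul]
    have hval : (Multiplicative.toAdd (a * b)).val =
        ((Multiplicative.toAdd a).val + (Multiplicative.toAdd b).val) % 2 := by
      have h0 : Multiplicative.toAdd (a * b) =
          Multiplicative.toAdd a + Multiplicative.toAdd b := rfl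
      rw [h0, ZMod.val_add]
    rw [hval, ← key, pow_add]

/-- the generator of C₂ -/
def cErr : Multiplicative (ZMod 2) := Multiplicative.ofAdd 1

lemma φτ_gen : φτ cErr = τAut := by
  show τAut ^ (Multiplicative.toAdd (Multiplicative.ofAdd (1 : ZMod 2))).val = τAut
  have h : (Multiplicative.toAdd (Multiplicative.ofAdd (1 : ZMod 2))).val = 1 := rfl
  rw [h, pow_one]


/-! ### The extension E3 and the map Φ : VB 3 → E3 -/

lemma inr_mul_inl {N G : Type*} [Group N] [Group G] {φ : G →* MulAut N} (g : G) (n : N) :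
    (SemidirectProduct.inr g : SemidirectProduct N G φ) * SemidirectProduct.inl n =
      SemidirectProduct.inl (φ g n) * SemidirectProduct.inr g := by
  rw [SemidirectProduct.inl_aut, map_inv]
  group

abbrev E3 := SemidirectProduct K3 (Multiplicative (ZMod 2)) φτ

def CC : G3 := (Fg 0)⁻¹ * Fg 1

def kS : K3 := SemidirectProduct.inr tZ

def kU : K3 := SemidirectProduct.inl CC * kS

def eS : E3 := SemidirectProduct.inl kS

def eU : E3 := SemidirectProduct.inl kU

def eP : E3 := SemidirectProduct.inr cErr

def eQ : E3 := SemidirectProduct.inl (SemidirectProduct.inl (Fg 0)) * eP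

lemma wG_one : wG 1 = Ag 0 := by
  have h := wG_succ 0
  rw [show (0:ℤ) + 1 = 1 from by norm_num] at h
  rw [h, wG_zero, one_mul]

lemma rG_F0 : rG (Fg 0) = (Fg 0) ^ (2:ℕ) := by
  rw [rG_F, wG_zero]
  group

lemma cErr_sq : cErr * cErr = 1 := by decide

lemma φs_tZ (x : G3) : φs tZ x = shAut x := rfl

lemma shF (m : ℤ) : shAut (Fg m) = Fg (m+1) := by
  have h := shAut_zpow_F 1 m
  rw [zpow_one] at h
  exact h

lemma shA (m : ℤ) : shAut (Ag m) = Ag (m+1) := by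
  have h := shAut_zpow_A 1 m
  rw [zpow_one] at h
  exact h

lemma τK_kS : τK kS = SemidirectProduct.inl (Ag 0) * SemidirectProduct.inr tZ := by
  unfold kS
  rw [τK_inr]
  have h : Multiplicative.toAdd tZ = 1 := rfl
  rw [h, wG_one]

lemma φτ_c (x : K3) : φτ cErr x = τK x := by
  rw [φτ_gen]
  rfl

lemma ePP : eP * eP = 1 := by
  unfold eP
  rw [← map_mul, cErr_sq, map_one]

lemma eP_inl (x : K3) : eP * SemidirectProduct.inl x = SemidirectProduct.inl (τK x) * eP := by
  unfold eP
  rw [inr_mul_inl, φτ_c]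

lemma ePQ : eP * eQ = SemidirectProduct.inl (SemidirectProduct.inl ((Fg 0) ^ (2:ℕ))) := by
  unfold eQ
  calc eP * (SemidirectProduct.inl (SemidirectProduct.inl (Fg 0)) * eP)
      = (eP * SemidirectProduct.inl (SemidirectProduct.inl (Fg 0))) * eP := by group
    _ = SemidirectProduct.inl (τK (SemidirectProduct.inl (Fg 0))) * (eP * eP) := by
        rw [eP_inl]; group
    _ = SemidirectProduct.inl (τK (SemidirectProduct.inl (Fg 0))) := by
        rw [ePP, mul_one]
    _ = SemidirectProduct.inl (SemidirectProduct.inl ((Fg 0) ^ (2:ℕ))) := by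
        rw [τK_inl, rG_F0]

lemma eQQ : eQ * eQ = 1 := by
  have h1 : eQ * eQ = SemidirectProduct.inl (SemidirectProduct.inl (Fg 0)) * (eP * eQ) := by
    unfold eQ; group
  rw [h1, ePQ, ← map_mul, ← map_mul]
  have h2 : Fg 0 * (Fg 0) ^ (2:ℕ) = (Fg 0) ^ (3:ℕ) := by group
  rw [h2, F3G, map_one, map_one]

lemma eBraidRho : eP * eQ * eP = eQ * eP * eQ := by
  have h2 : eQ * eP * eQ = eQ * (eP * eQ) := by group
  rw [ePQ, h2, ePQ]
  have hF5 : ((Fg 0) ^ (2:ℕ) : G3) = Fg 0 * ((Fg 0) ^ (2:ℕ)) ^ (2:ℕ) := by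
    have h0 := F3G 0
    calc ((Fg 0) ^ (2:ℕ) : G3)
        = Fg 0 * ((Fg 0) ^ (2:ℕ)) ^ (2:ℕ) * ((Fg 0) ^ (3:ℕ))⁻¹ := by group
      _ = Fg 0 * ((Fg 0) ^ (2:ℕ)) ^ (2:ℕ) * (1:G3)⁻¹ := by rw [h0]
      _ = Fg 0 * ((Fg 0) ^ (2:ℕ)) ^ (2:ℕ) := by group
  have hr2 : rG ((Fg 0) ^ (2:ℕ)) = ((Fg 0) ^ (2:ℕ)) ^ (2:ℕ) := by
    rw [map_pow, rG_F0]
  calc SemidirectProduct.inl (SemidirectProduct.inl ((Fg 0) ^ (2:ℕ))) * eP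
      = SemidirectProduct.inl (SemidirectProduct.inl (Fg 0)) *
          (SemidirectProduct.inl (SemidirectProduct.inl (((Fg 0) ^ (2:ℕ)) ^ (2:ℕ))) * eP) := by
        conv_rhs => rw [← mul_assoc, ← map_mul, ← map_mul, ← hF5]
    _ = SemidirectProduct.inl (SemidirectProduct.inl (Fg 0)) *
          (eP * SemidirectProduct.inl (SemidirectProduct.inl ((Fg 0) ^ (2:ℕ)))) := by
        rw [eP_inl, τK_inl, hr2]
    _ = eQ * SemidirectProduct.inl (SemidirectProduct.inl ((Fg 0) ^ (2:ℕ))) := by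
        unfold eQ; group

lemma hC2 : (Fg 1)⁻¹ * Fg 2 = CC * ((Fg 2)⁻¹ * Fg 3) := by
  have h := RfG 0
  norm_num at h
  unfold CC
  calc (Fg 1)⁻¹ * Fg 2
      = ((Fg 1)⁻¹ * Fg 2 * (Fg 3)⁻¹ * Fg 2 * (Fg 1)⁻¹ * Fg 0) *
          ((Fg 0)⁻¹ * Fg 1 * ((Fg 2)⁻¹ * Fg 3)) := by group
    _ = 1 * ((Fg 0)⁻¹ * Fg 1 * ((Fg 2)⁻¹ * Fg 3)) := by rw [h]
    _ = (Fg 0)⁻¹ * Fg 1 * ((Fg 2)⁻¹ * Fg 3) := by group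

lemma sh_CC : shAut CC = (Fg 1)⁻¹ * Fg 2 := by
  unfold CC
  rw [map_mul, map_inv, shF, shF, show (0:ℤ)+1 = 1 from by norm_num,
    show (1:ℤ)+1 = 2 from by norm_num]

lemma sh_C1 : shAut ((Fg 1)⁻¹ * Fg 2) = (Fg 2)⁻¹ * Fg 3 := by
  rw [map_mul, map_inv, shF, shF, show (1:ℤ)+1 = 2 from by norm_num,
    show (2:ℤ)+1 = 3 from by norm_num]

lemma push1 : SemidirectProduct.inr tZ * SemidirectProduct.inl CC =
    (SemidirectProduct.inl ((Fg 1)⁻¹ * Fg 2) : K3) * SemidirectProduct.inr tZ := by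
  rw [inr_mul_inl, φs_tZ, sh_CC]

lemma push2 : SemidirectProduct.inr tZ * SemidirectProduct.inl ((Fg 1)⁻¹ * Fg 2) =
    (SemidirectProduct.inl ((Fg 2)⁻¹ * Fg 3) : K3) * SemidirectProduct.inr tZ := by
  rw [inr_mul_inl, φs_tZ, sh_C1]

lemma braidK : kS * kU * kS = kU * kS * kU := by
  have hL : kS * kU * kS = SemidirectProduct.inl ((Fg 1)⁻¹ * Fg 2) *
      (SemidirectProduct.inr tZ * (SemidirectProduct.inr tZ * SemidirectProduct.inr tZ)) := by
    calc kS * kU * kS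
        = (SemidirectProduct.inr tZ * SemidirectProduct.inl CC) *
            (SemidirectProduct.inr tZ * (SemidirectProduct.inr tZ *
              SemidirectProduct.inr tZ))*(SemidirectProduct.inr tZ)⁻¹ := by unfold kU kS; group
      _ = (SemidirectProduct.inl ((Fg 1)⁻¹ * Fg 2) * SemidirectProduct.inr tZ) *
            (SemidirectProduct.inr tZ * (SemidirectProduct.inr tZ *
              SemidirectProduct.inr tZ))*(SemidirectProduct.inr tZ)⁻¹ := by rw [push1]
      _ = SemidirectProduct.inl ((Fg 1)⁻¹ * Fg 2) *
            (SemidirectProduct.inr tZ * (SemidirectProduct.inr tZ *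
              SemidirectProduct.inr tZ)) := by group
  have hR : kU * kS * kU = SemidirectProduct.inl (CC * ((Fg 2)⁻¹ * Fg 3)) *
      (SemidirectProduct.inr tZ * (SemidirectProduct.inr tZ * SemidirectProduct.inr tZ)) := by
    calc kU * kS * kU
        = SemidirectProduct.inl CC * SemidirectProduct.inr tZ *
            (SemidirectProduct.inr tZ * SemidirectProduct.inl CC) *
            SemidirectProduct.inr tZ := by unfold kU kS; group
      _ = SemidirectProduct.inl CC * SemidirectProduct.inr tZ *
            (SemidirectProduct.inl ((Fg 1)⁻¹ * Fg 2) * SemidirectProduct.inr tZ) *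
            SemidirectProduct.inr tZ := by rw [push1]
      _ = SemidirectProduct.inl CC *
            (SemidirectProduct.inr tZ * SemidirectProduct.inl ((Fg 1)⁻¹ * Fg 2)) *
            (SemidirectProduct.inr tZ * SemidirectProduct.inr tZ) := by group
      _ = SemidirectProduct.inl CC *
            (SemidirectProduct.inl ((Fg 2)⁻¹ * Fg 3) * SemidirectProduct.inr tZ) *
            (SemidirectProduct.inr tZ * SemidirectProduct.inr tZ) := by rw [push2]
      _ = (SemidirectProduct.inl CC * SemidirectProduct.inl ((Fg 2)⁻¹ * Fg 3)) *
            (SemidirectProduct.inr tZ * (SemidirectProduct.inr tZ *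
              SemidirectProduct.inr tZ)) := by group
      _ = SemidirectProduct.inl (CC * ((Fg 2)⁻¹ * Fg 3)) *
            (SemidirectProduct.inr tZ * (SemidirectProduct.inr tZ *
              SemidirectProduct.inr tZ)) := by rw [← map_mul]
  rw [hL, hR, hC2]

lemma eBraidSigma : eS * eU * eS = eU * eS * eU := by
  unfold eS eU
  rw [← map_mul, ← map_mul, ← map_mul, ← map_mul, braidK]

lemma eMix : eP * eQ * eS = eU * (eP * eQ) := by
  rw [ePQ]
  unfold eS eU kU kS
  rw [← map_mul, ← map_mul]
  congr 1
  have hpush : SemidirectProduct.inr tZ * SemidirectProduct.inl ((Fg 0) ^ (2:ℕ)) =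
      (SemidirectProduct.inl ((Fg 1) ^ (2:ℕ)) : K3) * SemidirectProduct.inr tZ := by
    rw [inr_mul_inl, φs_tZ, map_pow, shF, show (0:ℤ)+1 = 1 from by norm_num]
  have hval : ((Fg 0) ^ (2:ℕ) : G3) = CC * (Fg 1) ^ (2:ℕ) := by
    unfold CC
    have h0 := F3G 0
    have h3 := F3G 1
    calc ((Fg 0) ^ (2:ℕ) : G3)
        = (Fg 0)⁻¹ * (Fg 0) ^ (3:ℕ) := by group
      _ = (Fg 0)⁻¹ * 1 := by rw [h0]
      _ = (Fg 0)⁻¹ * ((Fg 1) ^ (3:ℕ) * ((Fg 1) ^ (3:ℕ))⁻¹) := by group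
      _ = (Fg 0)⁻¹ * (1 * ((Fg 1) ^ (3:ℕ))⁻¹)⁻¹ := by rw [h3]; group
      _ = (Fg 0)⁻¹ * Fg 1 * (Fg 1) ^ (2:ℕ) := by group
  calc SemidirectProduct.inl ((Fg 0) ^ (2:ℕ)) * SemidirectProduct.inr tZ
      = SemidirectProduct.inl (CC * (Fg 1) ^ (2:ℕ)) * SemidirectProduct.inr tZ := by
        rw [← hval]
    _ = SemidirectProduct.inl CC * (SemidirectProduct.inl ((Fg 1) ^ (2:ℕ)) *
          SemidirectProduct.inr tZ) := by rw [map_mul]; group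
    _ = SemidirectProduct.inl CC * (SemidirectProduct.inr tZ *
          SemidirectProduct.inl ((Fg 0) ^ (2:ℕ))) := by rw [hpush]
    _ = SemidirectProduct.inl CC * SemidirectProduct.inr tZ *
          SemidirectProduct.inl ((Fg 0) ^ (2:ℕ)) := by group


/-! ### Φ : VB 3 →* E3 -/

def Φfun : VBGen 3 → E3 := fun x =>
  match x with
  | Sum.inl i => if i.val = 0 then eS else eU
  | Sum.inr i => if i.val = 0 then eP else eQ

lemma fσ1 : fσ 3 1 = FreeGroup.of (Sum.inl (0 : Fin 2)) := rfl
lemma fσ2 : fσ 3 2 = FreeGroup.of (Sum.inl (1 : Fin 2)) := rfl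
lemma fρ1 : fρ 3 1 = FreeGroup.of (Sum.inr (0 : Fin 2)) := rfl
lemma fρ2 : fρ 3 2 = FreeGroup.of (Sum.inr (1 : Fin 2)) := rfl

lemma liftΦ_σ1 : FreeGroup.lift Φfun (fσ 3 1) = eS := by
  rw [fσ1, FreeGroup.lift_apply_of]; rfl
lemma liftΦ_σ2 : FreeGroup.lift Φfun (fσ 3 2) = eU := by
  rw [fσ2, FreeGroup.lift_apply_of]; rfl
lemma liftΦ_ρ1 : FreeGroup.lift Φfun (fρ 3 1) = eP := by
  rw [fρ1, FreeGroup.lift_apply_of]; rfl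
lemma liftΦ_ρ2 : FreeGroup.lift Φfun (fρ 3 2) = eQ := by
  rw [fρ2, FreeGroup.lift_apply_of]; rfl

lemma Φ_rels : ∀ r ∈ vbRels 3, FreeGroup.lift Φfun r = 1 := by
  rintro r ((⟨i, j, hi, hj, hj2, _⟩ | ⟨i, hi, hi2, hcase⟩) | ⟨i, hi, hi2, rfl⟩)
  · omega
  · have hone : i = 1 := by omega
    subst hone
    have e2 : (1 + 1 : ℕ) = 2 := rfl
    rcases hcase with rfl | rfl | rfl
    · rw [e2]
      simp only [map_mul, map_inv]
      rw [liftΦ_σ1, liftΦ_σ2]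
      calc eS * eU * eS * eU⁻¹ * eS⁻¹ * eU⁻¹
          = (eS * eU * eS) * (eU * eS * eU)⁻¹ := by group
        _ = (eU * eS * eU) * (eU * eS * eU)⁻¹ := by rw [eBraidSigma]
        _ = 1 := by group
    · rw [e2]
      simp only [map_mul, map_inv]
      rw [liftΦ_ρ1, liftΦ_ρ2]
      calc eP * eQ * eP * eQ⁻¹ * eP⁻¹ * eQ⁻¹
          = (eP * eQ * eP) * (eQ * eP * eQ)⁻¹ := by group
        _ = (eQ * eP * eQ) * (eQ * eP * eQ)⁻¹ := by rw [eBraidRho]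
        _ = 1 := by group
    · rw [e2]
      simp only [map_mul, map_inv]
      rw [liftΦ_ρ1, liftΦ_ρ2, liftΦ_σ1, liftΦ_σ2]
      calc eP * eQ * eS * eQ⁻¹ * eP⁻¹ * eU⁻¹
          = (eP * eQ * eS) * (eU * (eP * eQ))⁻¹ * (eU * eU⁻¹) := by group
        _ = (eU * (eP * eQ)) * (eU * (eP * eQ))⁻¹ * (eU * eU⁻¹) := by rw [eMix]
        _ = 1 := by group
  · have hone : i = 1 ∨ i = 2 := by omega
    rcases hone with rfl | rfl
    · rw [map_mul, liftΦ_ρ1]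
      exact ePP
    · rw [map_mul, liftΦ_ρ2]
      exact eQQ

/-- the homomorphism Φ : VB 3 → E3 -/
def Φ : VB 3 →* E3 := PresentedGroup.toGroup Φ_rels

lemma Φ_mk (w : FreeGroup (VBGen 3)) :
    Φ (PresentedGroup.mk (vbRels 3) w) = FreeGroup.lift Φfun w := rfl

lemma Φ_s : Φ s = eS := liftΦ_σ1
lemma Φ_u : Φ u = eU := liftΦ_σ2
lemma Φ_p : Φ p = eP := liftΦ_ρ1
lemma Φ_q : Φ q = eQ := liftΦ_ρ2

/-! ### Θ : G3 →* VB 3 and Ψ : E3 →* VB 3 -/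

def Θfun : (ℤ ⊕ ℤ) → VB 3 := fun x =>
  match x with
  | Sum.inl m => ae m
  | Sum.inr m => fe m

lemma Θ_rels : ∀ r ∈ vb3Rels, FreeGroup.lift Θfun r = 1 := by
  rintro r ⟨m, (rfl | rfl | rfl)⟩
  · simp only [map_mul, map_inv, FreeGroup.lift_apply_of, Θfun]
    exact T1 m
  · simp only [map_mul, map_inv, FreeGroup.lift_apply_of, Θfun]
    exact T2 m
  · simp only [map_pow, FreeGroup.lift_apply_of, Θfun]
    exact T3 m

/-- Θ : G3 → VB 3, A_m ↦ a_m, F_m ↦ f_m -/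
def Θ : G3 →* VB 3 := PresentedGroup.toGroup Θ_rels

@[simp] lemma Θ_A (m : ℤ) : Θ (Ag m) = ae m := PresentedGroup.toGroup.of Θ_rels
@[simp] lemma Θ_F (m : ℤ) : Θ (Fg m) = fe m := PresentedGroup.toGroup.of Θ_rels

lemma Θ_w : ∀ m : ℤ, Θ (wG m) = ve m := by
  intro m
  induction m using Int.induction_on with
  | zero => rw [wG_zero, map_one, ve_zero]
  | succ k ih =>
      rw [wG_succ, map_mul, ih, Θ_A, ve_succ]
  | pred k ih =>
      have h : (-(k:ℤ) - 1) = (-(k:ℤ)) - 1 := by ring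
      rw [h, wG_pred, map_mul, map_inv, ih, Θ_A, ve_pred]

/-- the ℤ-part of Ψ -/
def ψZ : Multiplicative ℤ →* VB 3 := zpowersHom _ s

lemma ψZ_apply (n : Multiplicative ℤ) : ψZ n = s ^ (Multiplicative.toAdd n) := rfl

lemma ΨK_cond : ∀ g : Multiplicative ℤ,
    Θ.comp (φs g).toMonoidHom = (MulAut.conj (ψZ g)).toMonoidHom.comp Θ := by
  intro g
  apply PresentedGroup.ext
  intro z
  set d := Multiplicative.toAdd g
  cases z with
  | inl m =>
      show Θ ((φs g) (Ag m)) = ψZ g * Θ (Ag m) * (ψZ g)⁻¹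
      rw [φs_A, Θ_A, Θ_A, ψZ_apply]
      unfold ae
      group
  | inr m =>
      show Θ ((φs g) (Fg m)) = ψZ g * Θ (Fg m) * (ψZ g)⁻¹
      rw [φs_F, Θ_F, Θ_F, ψZ_apply]
      unfold fe
      group

/-- ΨK : K3 → VB 3 -/
def ΨK : K3 →* VB 3 := SemidirectProduct.lift Θ ψZ ΨK_cond

lemma ΨK_inl (x : G3) : ΨK (SemidirectProduct.inl x) = Θ x :=
  SemidirectProduct.lift_inl _ _ _ _

lemma ΨK_inr (n : Multiplicative ℤ) : ΨK (SemidirectProduct.inr n) =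
    s ^ (Multiplicative.toAdd n) := SemidirectProduct.lift_inr _ _ _ _

/-- the C₂-part of Ψ -/
def ψC : Multiplicative (ZMod 2) →* VB 3 where
  toFun c := p ^ (Multiplicative.toAdd c).val
  map_one' := by
    show p ^ (Multiplicative.toAdd (1 : Multiplicative (ZMod 2))).val = 1
    have h : (Multiplicative.toAdd (1 : Multiplicative (ZMod 2))).val = 0 := rfl
    rw [h, pow_zero]
  map_mul' a b := by
    show p ^ (Multiplicative.toAdd (a * b)).val =
      p ^ (Multiplicative.toAdd a).val * p ^ (Multiplicative.toAdd b).val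
    have h2 : p ^ (2:ℕ) = 1 := by rw [pow_two]; exact hp
    have key : ∀ n : ℕ, p ^ n = p ^ (n % 2) := by
      intro n
      conv_lhs => rw [← Nat.div_add_mod n 2]
      rw [pow_add, pow_mul, h2, one_pow, one_mul]
    have hval : (Multiplicative.toAdd (a * b)).val =
        ((Multiplicative.toAdd a).val + (Multiplicative.toAdd b).val) % 2 := by
      have h0 : Multiplicative.toAdd (a * b) =
          Multiplicative.toAdd a + Multiplicative.toAdd b := rfl
      rw [h0, ZMod.val_add]
    rw [hval, ← key, pow_add]

lemma ψC_gen : ψC cErr = p := by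
  show p ^ (Multiplicative.toAdd (Multiplicative.ofAdd (1 : ZMod 2))).val = p
  have h : (Multiplicative.toAdd (Multiplicative.ofAdd (1 : ZMod 2))).val = 1 := rfl
  rw [h, pow_one]

lemma ΨK_τK : ΨK.comp τK = (MulAut.conj p).toMonoidHom.comp ΨK := by
  apply SemidirectProduct.hom_ext
  · apply PresentedGroup.ext
    intro z
    cases z with
    | inl m =>
        show ΨK (τK (SemidirectProduct.inl (Ag m))) = p * ΨK (SemidirectProduct.inl (Ag m)) * p⁻¹
        rw [τK_inl, rG_A, ΨK_inl, ΨK_inl, map_mul, map_mul, map_inv, map_inv, Θ_w, Θ_A, hp']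
        exact (hpam m).symm
    | inr m =>
        show ΨK (τK (SemidirectProduct.inl (Fg m))) = p * ΨK (SemidirectProduct.inl (Fg m)) * p⁻¹
        rw [τK_inl, rG_F, ΨK_inl, ΨK_inl, map_mul, map_mul, map_inv, map_pow, Θ_w, Θ_F, hp']
        have h2 : (fe m) ^ (2:ℕ) = fe m * fe m := by rw [pow_two]
        rw [h2]
        exact (hpfm m).symm
  · apply MonoidHom.ext_mint
    show ΨK (τK (SemidirectProduct.inr (Multiplicative.ofAdd 1))) =
      p * ΨK (SemidirectProduct.inr (Multiplicative.ofAdd 1)) * p⁻¹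
    rw [τK_inr, map_mul, ΨK_inl, ΨK_inr]
    have h1 : Multiplicative.toAdd (Multiplicative.ofAdd (1:ℤ)) = 1 := rfl
    rw [h1, wG_one, Θ_A, hp', zpow_one, ← hpsp]

lemma Ψ_cond : ∀ c : Multiplicative (ZMod 2),
    ΨK.comp (φτ c).toMonoidHom = (MulAut.conj (ψC c)).toMonoidHom.comp ΨK := by
  intro c
  have hφτ : φτ c = τAut ^ (Multiplicative.toAdd c).val := rfl
  have hψC : ψC c = p ^ (Multiplicative.toAdd c).val := rfl
  have hcases : ∀ x : ZMod 2, x.val = 0 ∨ x.val = 1 := by decide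
  rcases hcases (Multiplicative.toAdd c) with h | h
  · rw [hφτ, hψC, h, pow_zero, pow_zero]
    ext x
    show ΨK x = 1 * ΨK x * 1⁻¹
    group
  · rw [hφτ, hψC, h, pow_one, pow_one]
    ext x
    show ΨK (τK x) = p * ΨK x * p⁻¹
    exact DFunLike.congr_fun ΨK_τK x

/-- Ψ : E3 → VB 3 -/
def Ψ : E3 →* VB 3 := SemidirectProduct.lift ΨK ψC Ψ_cond

lemma Ψ_inl (x : K3) : Ψ (SemidirectProduct.inl x) = ΨK x :=
  SemidirectProduct.lift_inl _ _ _ _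

lemma Ψ_inr (c : Multiplicative (ZMod 2)) : Ψ (SemidirectProduct.inr c) = ψC c :=
  SemidirectProduct.lift_inr _ _ _ _


/-! ### Ψ ∘ Φ = id and Φ ∘ Θ = inl ∘ inl -/

lemma ΨΦ : Ψ.comp Φ = MonoidHom.id (VB 3) := by
  apply PresentedGroup.ext
  intro z
  cases z with
  | inl i =>
      fin_cases i
      · show Ψ (Φ s) = s
        rw [Φ_s]
        unfold eS kS
        rw [Ψ_inl, ΨK_inr]
        have h : Multiplicative.toAdd tZ = 1 := rfl
        rw [h, zpow_one]
      · show Ψ (Φ u) = u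
        rw [Φ_u]
        unfold eU kU kS CC
        rw [Ψ_inl, map_mul, ΨK_inl, ΨK_inr, map_mul, map_inv, Θ_F, Θ_F]
        have h : Multiplicative.toAdd tZ = 1 := rfl
        rw [h, zpow_one, ← hu2]
        done
  | inr i =>
      fin_cases i
      · show Ψ (Φ p) = p
        rw [Φ_p]
        unfold eP
        rw [Ψ_inr, ψC_gen]
      · show Ψ (Φ q) = q
        rw [Φ_q]
        unfold eQ eP
        rw [map_mul, Ψ_inl, ΨK_inl, Θ_F, Ψ_inr, ψC_gen, hq2]

lemma ΨΦ_apply (x : VB 3) : Ψ (Φ x) = x := DFunLike.congr_fun ΨΦ x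

lemma ePSP : eP * eS * eP =
    SemidirectProduct.inl (SemidirectProduct.inl (Ag 0) * SemidirectProduct.inr tZ) := by
  unfold eS
  calc eP * SemidirectProduct.inl kS * eP
      = SemidirectProduct.inl (τK kS) * (eP * eP) := by rw [eP_inl]; group
    _ = SemidirectProduct.inl (τK kS) := by rw [ePP, mul_one]
    _ = SemidirectProduct.inl (SemidirectProduct.inl (Ag 0) * SemidirectProduct.inr tZ) := by
        rw [τK_kS]

lemma eS_zpow (m : ℤ) : eS ^ m = SemidirectProduct.inl (SemidirectProduct.inr (tZ ^ m)) := by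
  unfold eS kS
  rw [← map_zpow, ← map_zpow]

lemma eQP : eQ * eP = SemidirectProduct.inl (SemidirectProduct.inl (Fg 0)) := by
  unfold eQ
  calc SemidirectProduct.inl (SemidirectProduct.inl (Fg 0)) * eP * eP
      = SemidirectProduct.inl (SemidirectProduct.inl (Fg 0)) * (eP * eP) := by group
    _ = SemidirectProduct.inl (SemidirectProduct.inl (Fg 0)) := by rw [ePP, mul_one]

lemma conj_eS (m : ℤ) (x : G3) :
    eS ^ m * SemidirectProduct.inl (SemidirectProduct.inl x) * eS ^ (-m) =
      SemidirectProduct.inl (SemidirectProduct.inl ((shAut ^ m) x)) := by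
  rw [eS_zpow, eS_zpow]
  rw [← map_mul, ← map_mul]
  congr 1
  rw [inr_mul_inl]
  have hφ : φs (tZ ^ m) = shAut ^ m := by
    have h : φs (tZ ^ m) = shAut ^ (Multiplicative.toAdd (tZ ^ m)) := rfl
    rw [h, toAdd_tZ_zpow]
  rw [hφ]
  calc SemidirectProduct.inl ((shAut ^ m) x) * SemidirectProduct.inr (tZ ^ m) *
        SemidirectProduct.inr (tZ ^ (-m))
      = SemidirectProduct.inl ((shAut ^ m) x) *
          (SemidirectProduct.inr (tZ ^ m) * SemidirectProduct.inr (tZ ^ (-m))) := by group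
    _ = SemidirectProduct.inl ((shAut ^ m) x) := by
        rw [← map_mul, ← zpow_add, add_neg_cancel, zpow_zero, map_one, mul_one]

lemma ΦΘ : Φ.comp Θ =
    (SemidirectProduct.inl : K3 →* E3).comp (SemidirectProduct.inl : G3 →* K3) := by
  apply PresentedGroup.ext
  intro z
  cases z with
  | inl m =>
      show Φ (Θ (Ag m)) = SemidirectProduct.inl (SemidirectProduct.inl (Ag m))
      rw [Θ_A]
      unfold ae
      rw [map_mul, map_mul, map_mul, map_mul, map_mul, map_inv, map_zpow, map_zpow, Φ_s, Φ_p]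
      have h1 : eP * eS * eP * eS⁻¹ = SemidirectProduct.inl (SemidirectProduct.inl (Ag 0)) := by
        rw [ePSP]
        unfold eS kS
        rw [← map_inv, ← map_mul]
        congr 1
      calc eS ^ m * (eP * eS * eP * eS⁻¹) * eS ^ (-m)
          = eS ^ m * SemidirectProduct.inl (SemidirectProduct.inl (Ag 0)) * eS ^ (-m) := by
            rw [h1]
        _ = SemidirectProduct.inl (SemidirectProduct.inl ((shAut ^ m) (Ag 0))) := conj_eS m _
        _ = SemidirectProduct.inl (SemidirectProduct.inl (Ag m)) := by
            rw [shAut_zpow_A, zero_add]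
  | inr m =>
      show Φ (Θ (Fg m)) = SemidirectProduct.inl (SemidirectProduct.inl (Fg m))
      rw [Θ_F]
      unfold fe
      rw [map_mul, map_mul, map_mul, map_zpow, map_zpow, Φ_q, Φ_p, Φ_s]
      calc eS ^ m * (eQ * eP) * eS ^ (-m)
          = eS ^ m * SemidirectProduct.inl (SemidirectProduct.inl (Fg 0)) * eS ^ (-m) := by
            rw [eQP]
        _ = SemidirectProduct.inl (SemidirectProduct.inl ((shAut ^ m) (Fg 0))) := conj_eS m _
        _ = SemidirectProduct.inl (SemidirectProduct.inl (Fg m)) := by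
            rw [shAut_zpow_F, zero_add]

lemma ΦΘ_apply (g : G3) :
    Φ (Θ g) = SemidirectProduct.inl (SemidirectProduct.inl g) := DFunLike.congr_fun ΦΘ g

/-! ### The projections and identification of the commutator subgroup -/

lemma rightHom_τK : SemidirectProduct.rightHom.comp τK =
    (SemidirectProduct.rightHom : K3 →* Multiplicative ℤ) := by
  apply SemidirectProduct.hom_ext
  · apply PresentedGroup.ext
    intro z
    show (SemidirectProduct.rightHom : K3 →* Multiplicative ℤ)
        (τK (SemidirectProduct.inl (PresentedGroup.of z))) =
      (SemidirectProduct.rightHom : K3 →* Multiplicative ℤ)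
        (SemidirectProduct.inl (PresentedGroup.of z))
    rw [τK_inl, SemidirectProduct.rightHom_inl, SemidirectProduct.rightHom_inl]
  · apply MonoidHom.ext_mint
    show (SemidirectProduct.rightHom : K3 →* Multiplicative ℤ)
        (τK (SemidirectProduct.inr (Multiplicative.ofAdd 1))) =
      (SemidirectProduct.rightHom : K3 →* Multiplicative ℤ)
        (SemidirectProduct.inr (Multiplicative.ofAdd 1))
    rw [τK_inr, map_mul, SemidirectProduct.rightHom_inl, SemidirectProduct.rightHom_inr,
      one_mul]

lemma πZ_cond : ∀ c : Multiplicative (ZMod 2),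
    (SemidirectProduct.rightHom : K3 →* Multiplicative ℤ).comp (φτ c).toMonoidHom =
      (MulAut.conj ((1 : Multiplicative (ZMod 2) →* Multiplicative ℤ) c)).toMonoidHom.comp
        SemidirectProduct.rightHom := by
  intro c
  have hφτ : φτ c = τAut ^ (Multiplicative.toAdd c).val := rfl
  have hcases : ∀ x : ZMod 2, x.val = 0 ∨ x.val = 1 := by decide
  ext x
  show SemidirectProduct.rightHom ((φτ c) x) =
    (1 : Multiplicative ℤ) * SemidirectProduct.rightHom x * (1 : Multiplicative ℤ)⁻¹
  rw [one_mul, inv_one, mul_one]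
  rcases hcases (Multiplicative.toAdd c) with h | h
  · rw [hφτ, h, pow_zero]
    rfl
  · rw [hφτ, h, pow_one]
    exact DFunLike.congr_fun rightHom_τK x

/-- the projection E3 → ℤ -/
def πZ : E3 →* Multiplicative ℤ :=
  SemidirectProduct.lift SemidirectProduct.rightHom 1 πZ_cond

lemma Θ_mem_commutator (g : G3) : Θ g ∈ commutator (VB 3) := by
  have h : g ∈ (commutator (VB 3)).comap Θ := by
    apply PresentedGroup.generated_by
    intro j
    cases j with
    | inl m =>
        show Θ (Ag m) ∈ commutator (VB 3)
        rw [Θ_A]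
        exact ae_mem m
    | inr m =>
        show Θ (Fg m) ∈ commutator (VB 3)
        rw [Θ_F]
        exact fe_mem m
  exact h

lemma mem_commutator_iff (x : VB 3) (hx : x ∈ commutator (VB 3)) :
    ∃ g : G3, Θ g = x := by
  have hπC : SemidirectProduct.rightHom (Φ x) = 1 := by
    have hle := Abelianization.commutator_subset_ker
      ((SemidirectProduct.rightHom : E3 →* Multiplicative (ZMod 2)).comp Φ)
    exact hle hx
  have hk : ∃ k : K3, SemidirectProduct.inl k = Φ x := by
    have : Φ x ∈ (SemidirectProduct.inl : K3 →* E3).range := by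
      rw [SemidirectProduct.range_inl_eq_ker_rightHom]
      exact hπC
    exact this
  obtain ⟨k, hkx⟩ := hk
  have hπZ : πZ (Φ x) = 1 := by
    have hle := Abelianization.commutator_subset_ker (πZ.comp Φ)
    exact hle hx
  have hrk : SemidirectProduct.rightHom k = 1 := by
    have : πZ (SemidirectProduct.inl k) = SemidirectProduct.rightHom k :=
      SemidirectProduct.lift_inl _ _ _ _
    rw [hkx, hπZ] at this
    exact this.symm
  have hg : ∃ g : G3, SemidirectProduct.inl g = k := by
    have : k ∈ (SemidirectProduct.inl : G3 →* K3).range := by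
      rw [SemidirectProduct.range_inl_eq_ker_rightHom]
      exact hrk
    exact this
  obtain ⟨g, hgk⟩ := hg
  refine ⟨g, ?_⟩
  have : Φ (Θ g) = Φ x := by
    rw [ΦΘ_apply, hgk, hkx]
  calc Θ g = Ψ (Φ (Θ g)) := (ΨΦ_apply _).symm
    _ = Ψ (Φ x) := by rw [this]
    _ = x := ΨΦ_apply x

/-- Θ corestricted to the commutator subgroup -/
def Θ' : G3 →* ↥(commutator (VB 3)) :=
  Θ.codRestrict _ Θ_mem_commutator

lemma Θ'_injective : Function.Injective Θ' := by
  intro g g' h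
  have h2 : Θ g = Θ g' := congrArg Subtype.val h
  have h3 : SemidirectProduct.inl (SemidirectProduct.inl g) =
      (SemidirectProduct.inl (SemidirectProduct.inl g') : E3) := by
    rw [← ΦΘ_apply, ← ΦΘ_apply, h2]
  exact SemidirectProduct.inl_injective (SemidirectProduct.inl_injective h3)

lemma Θ'_surjective : Function.Surjective Θ' := by
  rintro ⟨x, hx⟩
  obtain ⟨g, hg⟩ := mem_commutator_iff x hx
  exact ⟨g, Subtype.ext hg⟩

end VB3Proof

/-- `VB_3'` is isomorphic to the presented group with generators
`A_m, F_m` (`m ∈ ℤ`) and the relators of `vb3Rels`, via `A_m ↦ a_m`, `F_m ↦ f_m`. -/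
theorem VB3_commutator_presentation :
    ∃ ha : ∀ m : ℤ, va 3 m ∈ commutator (VB 3),
    ∃ hf : ∀ m : ℤ, vf 3 m 0 ∈ commutator (VB 3),
    ∃ φ : PresentedGroup vb3Rels ≃* ↥(commutator (VB 3)),
      (∀ m : ℤ, φ (PresentedGroup.of (Sum.inl m)) = ⟨va 3 m, ha m⟩) ∧
      (∀ m : ℤ, φ (PresentedGroup.of (Sum.inr m)) = ⟨vf 3 m 0, hf m⟩) := by
  refine ⟨fun m => by rw [VB3Proof.ae_eq]; exact VB3Proof.ae_mem m,
    fun m => by rw [VB3Proof.fe_eq]; exact VB3Proof.fe_mem m, ?_⟩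
  refine ⟨MulEquiv.ofBijective VB3Proof.Θ'
    ⟨VB3Proof.Θ'_injective, VB3Proof.Θ'_surjective⟩, ?_, ?_⟩
  · intro m
    apply Subtype.ext
    show VB3Proof.Θ (PresentedGroup.of (Sum.inl m)) = va 3 m
    rw [show (PresentedGroup.of (Sum.inl m) : PresentedGroup vb3Rels) = VB3Proof.Ag m from rfl,
      VB3Proof.Θ_A, VB3Proof.ae_eq]
  · intro m
    apply Subtype.ext
    show VB3Proof.Θ (PresentedGroup.of (Sum.inr m)) = vf 3 m 0
    rw [show (PresentedGroup.of (Sum.inr m) : PresentedGroup vb3Rels) = VB3Proof.Fg m from rfl,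
      VB3Proof.Θ_F, VB3Proof.fe_eq]
end

section
/- For every n ≥ 3, the commutator subgroup VB_n' equals the subgroup of VB_n generated by the set {a_m : m ∈ ℤ} ∪ {b_{m,0}, b_{m,1} : m ∈ ℤ} ∪ {f_m : m ∈ ℤ} ∪ {c_l : 3 ≤ l ≤ n−1} ∪ {g_{m,l} : m ∈ ℤ, 3 ≤ l ≤ n−1}. -/
/-!
Reidemeister–Schreier for the homomorphism `VB n → ℤ × ℤ/2` counting σ-letters and ρ-letters
(the latter mod 2). The commutator subgroup lies in its kernel, which is generated by the
Schreier elements `t s t'⁻¹` for the transversal `t = σ₁ ^ m ρ₁ ^ ε` and the generators `s`; each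
of these is trivial, one of the listed elements or the inverse of one. Conversely, each listed
element is a conjugate of some `y x⁻¹` with `x` and `y` conjugate (`σ_i`, resp. `ρ_i`, is
conjugate to `σ_{i+1}`, resp. `ρ_{i+1}`), hence a commutator.
-/

open Multiplicative

theorem IsConj.mul_inv_mem_commutator {G : Type*} [Group G] {a b : G} (h : IsConj a b) :
    b * a⁻¹ ∈ commutator G := by
  obtain ⟨c, rfl⟩ := isConj_iff.mp h
  exact Subgroup.commutator_mem_commutator (Subgroup.mem_top c) (Subgroup.mem_top a)

theorem MonoidHom.ker_le_of_schreier_mem {G A : Type*} [Group G] [Group A] (φ : G →* A)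
    {H : Subgroup G} {S : Set G} (hS : Subgroup.closure S = ⊤) (t : A → G) (ht : t 1 = 1)
    (hH : ∀ a, ∀ s ∈ S, t a * s * (t (a * φ s))⁻¹ ∈ H) : φ.ker ≤ H := by
  have key : ∀ g, g * (t (φ g))⁻¹ ∈ H := fun g => by
    induction (hS ▸ Subgroup.mem_top g : g ∈ Subgroup.closure S)
      using Subgroup.closure_induction_right with
    | one => simp [ht]
    | mul_right x _ s hs ih => simpa [mul_assoc] using mul_mem ih (hH (φ x) s hs)
    | mul_inv_cancel x _ s hs ih =>
      simpa [mul_assoc] using mul_mem ih (inv_mem (hH (φ (x * s⁻¹)) s hs))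
  intro g hg
  simpa [φ.mem_ker.mp hg, ht] using key g

namespace VB

variable {n i j k l : ℕ}

theorem mk_fσ : PresentedGroup.mk (vbRels n) (fσ n i) = vσ n i := rfl

theorem mk_fρ : PresentedGroup.mk (vbRels n) (fρ n i) = vρ n i := rfl

theorem commute_σ_σ (hi : 1 ≤ i) (hij : i + 2 ≤ j) (hj : j ≤ n - 1) :
    Commute (vσ n i) (vσ n j) := by
  have h := PresentedGroup.one_of_mem (rels := vbRels n)
    (Or.inl (Or.inl ⟨i, j, hi, hij, hj, Or.inl rfl⟩))
  simp only [map_mul, map_inv, mk_fσ] at h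
  exact commutatorElement_eq_one_iff_commute.mp h

theorem commute_σ_ρ (hi : 1 ≤ i) (hij : i + 2 ≤ j) (hj : j ≤ n - 1) :
    Commute (vσ n j) (vρ n i) := by
  have h := PresentedGroup.one_of_mem (rels := vbRels n)
    (Or.inl (Or.inl ⟨i, j, hi, hij, hj, Or.inr (Or.inr (Or.inr rfl))⟩))
  simp only [map_mul, map_inv, mk_fσ, mk_fρ] at h
  exact commutatorElement_eq_one_iff_commute.mp h

theorem isConj_σ_succ (hi : 1 ≤ i) (hin : i + 1 ≤ n - 1) : IsConj (vσ n i) (vσ n (i + 1)) := by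
  have h := PresentedGroup.one_of_mem (rels := vbRels n)
    (Or.inl (Or.inr ⟨i, hi, hin, Or.inr (Or.inr rfl)⟩))
  simp only [map_mul, map_inv, mk_fσ, mk_fρ] at h
  exact isConj_iff.mpr ⟨vρ n i * vρ n (i + 1), by rw [← mul_inv_eq_one, ← h]; group⟩

theorem isConj_ρ_succ (hi : 1 ≤ i) (hin : i + 1 ≤ n - 1) : IsConj (vρ n i) (vρ n (i + 1)) := by
  have h := PresentedGroup.one_of_mem (rels := vbRels n)
    (Or.inl (Or.inr ⟨i, hi, hin, Or.inr (Or.inl rfl)⟩))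
  simp only [map_mul, map_inv, mk_fρ] at h
  exact isConj_iff.mpr ⟨vρ n i * vρ n (i + 1), by rw [← mul_inv_eq_one, ← h]; group⟩

theorem ρ_mul_self (hi : 1 ≤ i) (hin : i ≤ n - 1) : vρ n i * vρ n i = 1 :=
  PresentedGroup.one_of_mem (rels := vbRels n) (Or.inr ⟨i, hi, hin, rfl⟩)

theorem inv_ρ (hi : 1 ≤ i) (hin : i ≤ n - 1) : (vρ n i)⁻¹ = vρ n i :=
  inv_eq_of_mul_eq_one_right (ρ_mul_self hi hin)

theorem isConj_σ_one (hl : 1 ≤ l) (hln : l ≤ n - 1) : IsConj (vσ n 1) (vσ n l) := by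
  induction l, hl using Nat.le_induction with
  | base => exact IsConj.refl _
  | succ l hl ih => exact (ih (by omega)).trans (isConj_σ_succ hl hln)

theorem isConj_ρ_one (hl : 1 ≤ l) (hln : l ≤ n - 1) : IsConj (vρ n 1) (vρ n l) := by
  induction l, hl using Nat.le_induction with
  | base => exact IsConj.refl _
  | succ l hl ih => exact (ih (by omega)).trans (isConj_ρ_succ hl hln)

theorem of_inl (hk : k < n - 1) : (PresentedGroup.of (Sum.inl ⟨k, hk⟩) : VB n) = vσ n (k + 1) := by
  simp only [vσ, fσ, dif_pos (⟨by omega, by simpa using hk⟩ : 1 ≤ k + 1 ∧ k + 1 - 1 < n - 1)]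
  rfl

theorem of_inr (hk : k < n - 1) : (PresentedGroup.of (Sum.inr ⟨k, hk⟩) : VB n) = vρ n (k + 1) := by
  simp only [vρ, fρ, dif_pos (⟨by omega, by simpa using hk⟩ : 1 ≤ k + 1 ∧ k + 1 - 1 < n - 1)]
  rfl

def letterValue : VBGen n → Multiplicative (ℤ × ZMod 2) :=
  Sum.elim (fun _ => ofAdd (1, 0)) (fun _ => ofAdd (0, 1))

theorem lift_letterValue_fσ (hi : 1 ≤ i) (hin : i ≤ n - 1) :
    FreeGroup.lift letterValue (fσ n i) = ofAdd (1, 0) := by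
  rw [fσ, dif_pos ⟨hi, by omega⟩, FreeGroup.lift_apply_of]
  rfl

theorem lift_letterValue_fρ (hi : 1 ≤ i) (hin : i ≤ n - 1) :
    FreeGroup.lift letterValue (fρ n i) = ofAdd (0, 1) := by
  rw [fρ, dif_pos ⟨hi, by omega⟩, FreeGroup.lift_apply_of]
  rfl

theorem lift_letterValue_of_mem_vbRels : ∀ r ∈ vbRels n, FreeGroup.lift letterValue r = 1 := by
  rintro r ((⟨i, j, hi, hij, hj, rfl | rfl | rfl | rfl⟩ | ⟨i, hi, hin, rfl | rfl | rfl⟩) |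
      ⟨i, hi, hin, rfl⟩) <;>
    simp (disch := omega) only [map_mul, map_inv, lift_letterValue_fσ, lift_letterValue_fρ] <;> rfl

def letterCount : VB n →* Multiplicative (ℤ × ZMod 2) :=
  PresentedGroup.toGroup lift_letterValue_of_mem_vbRels

def transversal (p : ℤ × ZMod 2) : VB n := vσ n 1 ^ p.1 * vρ n 1 ^ p.2.val

theorem transversal_mk_zero (m : ℤ) : transversal (m, 0) = vσ n 1 ^ m := by
  simp [transversal]

theorem transversal_mk_one (m : ℤ) : transversal (m, 1) = vσ n 1 ^ m * vρ n 1 :=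
  congrArg (vσ n 1 ^ m * ·) (pow_one (vρ n 1))

variable (n) in
def commutatorGenerators : Set (VB n) :=
  {x | ∃ m : ℤ, x = va n m} ∪
  {x | ∃ m : ℤ, x = vb n m 0 ∨ x = vb n m 1} ∪
  {x | ∃ m : ℤ, x = vf n m 0} ∪
  {x | ∃ l, 3 ≤ l ∧ l ≤ n - 1 ∧ x = vc n l} ∪
  {x | ∃ (m : ℤ) (l : ℕ), 3 ≤ l ∧ l ≤ n - 1 ∧ x = vg n m l}

theorem va_mem_closure (m : ℤ) : va n m ∈ Subgroup.closure (commutatorGenerators n) :=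
  Subgroup.subset_closure (Or.inl (Or.inl (Or.inl (Or.inl ⟨m, rfl⟩))))

theorem vb_mem_closure (m : ℤ) {e : ℕ} (he : e < 2) :
    vb n m e ∈ Subgroup.closure (commutatorGenerators n) := by
  obtain rfl | rfl : e = 0 ∨ e = 1 := by omega
  exacts [Subgroup.subset_closure (Or.inl (Or.inl (Or.inl (Or.inr ⟨m, Or.inl rfl⟩)))),
    Subgroup.subset_closure (Or.inl (Or.inl (Or.inl (Or.inr ⟨m, Or.inr rfl⟩))))]

theorem vc_mem_closure (hl : 3 ≤ l) (hln : l ≤ n - 1) :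
    vc n l ∈ Subgroup.closure (commutatorGenerators n) :=
  Subgroup.subset_closure (Or.inl (Or.inr ⟨l, hl, hln, rfl⟩))

theorem vg_mem_closure (m : ℤ) (hl : 1 ≤ l) (hln : l ≤ n - 1) :
    vg n m l ∈ Subgroup.closure (commutatorGenerators n) := by
  obtain rfl | rfl | hl3 : l = 1 ∨ l = 2 ∨ 3 ≤ l := by omega
  · have : vg n m 1 = 1 := by simp [vg, ρ_mul_self le_rfl hln]
    exact this ▸ one_mem _
  · have : vg n m 2 = vf n m 0 := by simp [vg, vf]
    exact this ▸ Subgroup.subset_closure (Or.inl (Or.inl (Or.inr ⟨m, rfl⟩)))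
  · exact Subgroup.subset_closure (Or.inr ⟨m, l, hl3, hln, rfl⟩)

theorem commute_σ_transversal (hi : 3 ≤ i) (hin : i ≤ n - 1) (p : ℤ × ZMod 2) :
    Commute (vσ n i) (transversal p) :=
  ((commute_σ_σ le_rfl hi hin).symm.zpow_right _).mul_right
    ((commute_σ_ρ le_rfl hi hin).pow_right _)

theorem transversal_mul_σ_mem (p : ℤ × ZMod 2) (hi : 1 ≤ i) (hin : i ≤ n - 1) :
    transversal p * vσ n i * (transversal (p + (1, 0)))⁻¹ ∈
      Subgroup.closure (commutatorGenerators n) := by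
  have h1n : 1 ≤ n - 1 := hi.trans hin
  obtain ⟨m, ε⟩ := p
  have hconj : transversal (m, ε) * vσ n i * (transversal ((m, ε) + (1, 0)))⁻¹ =
      vσ n 1 ^ m * (vρ n 1 ^ ε.val * vσ n i * vρ n 1 ^ ε.val * (vσ n 1)⁻¹) * vσ n 1 ^ (-m) := by
    simp only [transversal, Prod.mk_add_mk, add_zero, mul_inv_rev, ← inv_pow, inv_ρ le_rfl h1n]
    group
  obtain rfl | rfl | hi3 : i = 1 ∨ i = 2 ∨ 3 ≤ i := by omega
  · obtain rfl | rfl := (by decide : ∀ ε : ZMod 2, ε = 0 ∨ ε = 1) ε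
    · exact (by simpa using hconj : _ = (1 : VB n)) ▸ one_mem _
    · exact (by simpa [va, ZMod.val_one_eq_one_mod] using hconj : _ = va n m) ▸ va_mem_closure m
  · exact hconj ▸ vb_mem_closure m ε.val_lt
  · have hσ : transversal ((m, ε) + (1, 0)) = vσ n 1 * transversal (m, ε) := by
      simp only [transversal, Prod.mk_add_mk, add_zero, add_comm m 1, zpow_add, zpow_one, mul_assoc]
    have : transversal (m, ε) * vσ n i * (transversal ((m, ε) + (1, 0)))⁻¹ = vc n i := by
      rw [hσ, mul_inv_rev, ← (commute_σ_transversal hi3 hin _).eq]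
      simp [vc, mul_assoc]
    exact this ▸ vc_mem_closure hi3 hin

theorem transversal_mul_ρ_mem (p : ℤ × ZMod 2) (hi : 1 ≤ i) (hin : i ≤ n - 1) :
    transversal p * vρ n i * (transversal (p + (0, 1)))⁻¹ ∈
      Subgroup.closure (commutatorGenerators n) := by
  obtain ⟨m, ε⟩ := p
  obtain rfl | rfl := (by decide : ∀ ε : ZMod 2, ε = 0 ∨ ε = 1) ε
  · have : transversal (m, 0) * vρ n i * (transversal ((m, 0) + (0, 1)))⁻¹ = vg n m i := by
      rw [Prod.mk_add_mk, add_zero, zero_add, transversal_mk_zero, transversal_mk_one, vg,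
        mul_inv_rev, inv_ρ le_rfl (hi.trans hin)]
      group
    exact this ▸ vg_mem_closure m hi hin
  · have : transversal (m, 1) * vρ n i * (transversal ((m, 1) + (0, 1)))⁻¹ = (vg n m i)⁻¹ := by
      rw [Prod.mk_add_mk, add_zero, show (1 + 1 : ZMod 2) = 0 from rfl, transversal_mk_zero,
        transversal_mk_one, vg]
      simp only [mul_inv_rev, inv_ρ le_rfl (hi.trans hin), inv_ρ hi hin]
      group
    exact this ▸ inv_mem (vg_mem_closure m hi hin)

theorem commutator_le_closure :
    commutator (VB n) ≤ Subgroup.closure (commutatorGenerators n) := by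
  refine (Abelianization.commutator_subset_ker letterCount).trans <|
    letterCount.ker_le_of_schreier_mem (PresentedGroup.closure_range_of _)
      (fun a => transversal (toAdd a)) (by simp [transversal]) ?_
  rintro a _ ⟨⟨k, hk⟩ | ⟨k, hk⟩, rfl⟩ <;>
    simp only [letterCount, PresentedGroup.toGroup.of, letterValue, Sum.elim_inl, Sum.elim_inr,
      toAdd_mul, toAdd_ofAdd]
  · exact of_inl hk ▸ transversal_mul_σ_mem _ (by omega) (by omega)
  · exact of_inr hk ▸ transversal_mul_ρ_mem _ (by omega) (by omega)

theorem conj_mem_commutator {x y : VB n} (h : IsConj x y) (m : ℤ) :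
    vσ n 1 ^ m * (y * x⁻¹) * vσ n 1 ^ (-m) ∈ commutator (VB n) := by
  rw [zpow_neg]
  exact Subgroup.Normal.conj_mem inferInstance _ h.mul_inv_mem_commutator _

theorem closure_le_commutator (hn : 3 ≤ n) :
    Subgroup.closure (commutatorGenerators n) ≤ commutator (VB n) := by
  have h1 : 1 ≤ n - 1 := by omega
  have h2 : 2 ≤ n - 1 := by omega
  have hρσ : IsConj (vσ n 1) (vρ n 1 * vσ n 1 * (vρ n 1)⁻¹) := isConj_iff.mpr ⟨_, rfl⟩
  rw [Subgroup.closure_le]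
  rintro x ((((⟨m, rfl⟩ | ⟨m, rfl | rfl⟩) | ⟨m, rfl⟩) | ⟨l, hl, hln, rfl⟩) | ⟨m, l, hl, hln, rfl⟩)
  · simpa [va, inv_ρ le_rfl h1] using conj_mem_commutator hρσ m
  · simpa [vb] using conj_mem_commutator (isConj_σ_one (n := n) (by omega) h2) m
  · simpa [vb, inv_ρ le_rfl h1] using
      conj_mem_commutator ((isConj_σ_one (by omega) h2).trans (isConj_iff.mpr ⟨vρ n 1, rfl⟩)) m
  · simpa [vf, inv_ρ le_rfl h1] using conj_mem_commutator (isConj_ρ_one (n := n) (by omega) h2) m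
  · exact (isConj_σ_one (by omega) hln).mul_inv_mem_commutator
  · simpa [vg, inv_ρ le_rfl h1] using conj_mem_commutator (isConj_ρ_one (n := n) (by omega) hln) m

end VB

/-- For `n ≥ 3`, `VB_n'` is the subgroup generated by
`{a_m} ∪ {b_{m,0}, b_{m,1}} ∪ {f_m} ∪ {c_l : 3 ≤ l ≤ n-1} ∪ {g_{m,l} : 3 ≤ l ≤ n-1}`. -/
theorem VB_commutator_infinite_generators (n : ℕ) (hn : 3 ≤ n) :
    commutator (VB n) = Subgroup.closure
      ({x | ∃ m : ℤ, x = va n m} ∪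
       {x | ∃ m : ℤ, x = vb n m 0 ∨ x = vb n m 1} ∪
       {x | ∃ m : ℤ, x = vf n m 0} ∪
       {x | ∃ l, 3 ≤ l ∧ l ≤ n - 1 ∧ x = vc n l} ∪
       {x | ∃ (m : ℤ) (l : ℕ), 3 ≤ l ∧ l ≤ n - 1 ∧ x = vg n m l}) :=
  le_antisymm VB.commutator_le_closure (VB.closure_le_commutator hn)
end

section
/- The commutator subgroup WB_3' of the welded braid group WB_3 equals the subgroup of WB_3 generated by the 4 elements a_0, f_0, f_1, f_2 (the images in WB_3 of the corresponding elements of VB_3); in particular, WB_3' is finitely generated. -/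
/-!
Write `c = ρ₂ρ₁ = f₀`. The relations of `WB₃` give `ρ₂ = cρ₁`, `σ₂ = c⁻¹σ₁c` and `c³ = 1`, so
`WB₃` is generated by `σ₁`, `ρ₁` and `c`. In these terms the braid relation becomes the recurrence
`f_{m+3} = f_{m+2} f_{m+1}⁻¹ f_m f_{m+1}⁻¹ f_{m+2}` and the welded relation the recurrence
`a_{m+1} = f_{m+1} a_m⁻¹ f_m f_{m+1} f_{m+2}`, so `H = ⟨a₀, f₀, f₁, f₂⟩` contains every `a_m` and
`f_m`. Conjugation by `σ₁` shifts the index `m`, and conjugation by `ρ₁` maps `σ₁ ↦ a₀σ₁`,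
`c ↦ c⁻¹`, `a₀ ↦ a₀⁻¹`; hence `H` is normal. Modulo `H` only `σ₁` and `ρ₁` survive, and they
commute because `a₀ = [ρ₁, σ₁]`, so `WB₃' ≤ H`. Conversely `a₀ = [ρ₁, σ₁]`, `f₀ = [ρ₁, ρ₂]`, and
every `f_m` is conjugate to `f₀`.
-/

open scoped commutatorElement

namespace Subgroup

variable {G : Type*} [Group G]

theorem mem_normalizer_closure_of_conj_mem {S : Set G} {g : G}
    (h₁ : ∀ x ∈ S, MulAut.conj g x ∈ closure S) (h₂ : ∀ x ∈ S, MulAut.conj g⁻¹ x ∈ closure S) :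
    g ∈ normalizer (closure S) := by
  have conj_mem {k : G} (hk : ∀ x ∈ S, MulAut.conj k x ∈ closure S) {h : G}
      (hh : h ∈ closure S) : k * h * k⁻¹ ∈ closure S :=
    closure_le ((closure S).comap (MulAut.conj k).toMonoidHom) |>.2 hk hh
  refine mem_normalizer_iff.2 fun h => ⟨conj_mem h₁, fun hh => ?_⟩
  simpa [mul_assoc] using conj_mem h₂ hh

theorem commutator_le_of_closure_sup_eq_top {H : Subgroup G} [H.Normal] {T : Set G}
    (hT : closure T ⊔ H = ⊤) (hTH : ∀ a ∈ T, ∀ b ∈ T, ⁅a, b⁆ ∈ H) : _root_.commutator G ≤ H := by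
  rw [← Normal.quotient_commutative_iff_commutator_le]
  have hgen : closure (QuotientGroup.mk' H '' T) = ⊤ := by
    rw [← MonoidHom.map_closure, ← map_top_of_surjective _ (QuotientGroup.mk'_surjective H), ← hT,
      map_sup, QuotientGroup.map_mk'_self, sup_bot_eq]
  have : IsMulCommutative (closure (QuotientGroup.mk' H '' T)) := by
    refine isMulCommutative_closure ?_
    rintro _ ⟨a, ha, rfl⟩ _ ⟨b, hb, rfl⟩
    rw [← commutatorElement_eq_one_iff_mul_comm, ← map_commutatorElement, QuotientGroup.mk'_apply,
      QuotientGroup.eq_one_iff]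
    exact hTH a ha b hb
  exact ⟨⟨fun x y => setLike_mul_comm (hgen ▸ mem_top x) (hgen ▸ mem_top y)⟩⟩

end Subgroup

theorem commutatorElement_mem_commutator {G : Type*} [Group G] (g h : G) :
    ⁅g, h⁆ ∈ commutator G := by
  rw [commutator_eq_closure]; exact Subgroup.subset_closure (commutator_mem_commutatorSet g h)

theorem Int.forall_of_iff_add_one {P : ℤ → Prop} (h : ∀ m, P m ↔ P (m + 1)) (h₀ : P 0) (m : ℤ) :
    P m := by
  induction m using Int.induction_on with
  | zero => exact h₀
  | succ k ih => exact (h k).1 ih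
  | pred k ih => exact (h _).2 (by rwa [sub_add_cancel])

section Relations

variable {n i : ℕ}

theorem mk_fσ : PresentedGroup.mk (wbRels n) (fσ n i) = wσ n i := rfl

theorem mk_fρ : PresentedGroup.mk (wbRels n) (fρ n i) = wρ n i := rfl

theorem wρ_mul_self (hi : 1 ≤ i) (hn : i ≤ n - 1) : wρ n i * wρ n i = 1 :=
  PresentedGroup.one_of_mem (Or.inl <| Or.inr ⟨i, hi, hn, rfl⟩)

theorem wρ_inv (hi : 1 ≤ i) (hn : i ≤ n - 1) : (wρ n i)⁻¹ = wρ n i :=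
  inv_eq_of_mul_eq_one_right (wρ_mul_self hi hn)

theorem wσ_braid (hi : 1 ≤ i) (hn : i + 1 ≤ n - 1) :
    wσ n i * wσ n (i + 1) * wσ n i = wσ n (i + 1) * wσ n i * wσ n (i + 1) := by
  have h := PresentedGroup.one_of_mem (rels := wbRels n)
    (Or.inl <| Or.inl <| Or.inr ⟨i, hi, hn, Or.inl rfl⟩)
  rw [← mul_inv_eq_one]
  simpa only [map_mul, map_inv, mk_fσ, mul_inv_rev, ← mul_assoc] using h

theorem wρ_braid (hi : 1 ≤ i) (hn : i + 1 ≤ n - 1) :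
    wρ n i * wρ n (i + 1) * wρ n i = wρ n (i + 1) * wρ n i * wρ n (i + 1) := by
  have h := PresentedGroup.one_of_mem (rels := wbRels n)
    (Or.inl <| Or.inl <| Or.inr ⟨i, hi, hn, Or.inr <| Or.inl rfl⟩)
  rw [← mul_inv_eq_one]
  simpa only [map_mul, map_inv, mk_fρ, mul_inv_rev, ← mul_assoc] using h

theorem wρ_mul_wρ_mul_wσ (hi : 1 ≤ i) (hn : i + 1 ≤ n - 1) :
    wρ n i * wρ n (i + 1) * wσ n i = wσ n (i + 1) * wρ n i * wρ n (i + 1) := by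
  have h := PresentedGroup.one_of_mem (rels := wbRels n)
    (Or.inl <| Or.inl <| Or.inr ⟨i, hi, hn, Or.inr <| Or.inr rfl⟩)
  rw [← mul_inv_eq_one]
  simpa only [map_mul, map_inv, mk_fσ, mk_fρ, mul_inv_rev, ← mul_assoc] using h

theorem wρ_mul_wσ_mul_wσ (hi : 1 ≤ i) (hn : i + 1 ≤ n - 1) :
    wρ n i * wσ n (i + 1) * wσ n i = wσ n (i + 1) * wσ n i * wρ n (i + 1) := by
  have h := PresentedGroup.one_of_mem (rels := wbRels n) (Or.inr ⟨i, hi, hn, rfl⟩)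
  rw [← mul_inv_eq_one]
  simpa only [map_mul, map_inv, mk_fσ, mk_fρ, mul_inv_rev, ← mul_assoc] using h

end Relations

namespace WB3

open Subgroup

local notation "σ₁" => wσ 3 1
local notation "σ₂" => wσ 3 2
local notation "ρ₁" => wρ 3 1
local notation "ρ₂" => wρ 3 2

theorem ρ₁_mul_self : ρ₁ * ρ₁ = 1 := wρ_mul_self le_rfl (by norm_num)

theorem ρ₂_mul_self : ρ₂ * ρ₂ = 1 := wρ_mul_self (by norm_num) (by norm_num)

theorem ρ₁_inv : ρ₁⁻¹ = ρ₁ := wρ_inv le_rfl (by norm_num)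

theorem ρ₂_inv : ρ₂⁻¹ = ρ₂ := wρ_inv (by norm_num) (by norm_num)

theorem wa_zero_eq : wa 3 0 = ρ₁ * σ₁ * ρ₁ * σ₁⁻¹ := by simp [wa]

theorem wf_zero_eq : wf 3 0 0 = ρ₂ * ρ₁ := by simp [wf]

theorem conj_wa (m k : ℤ) : MulAut.conj (σ₁ ^ m) (wa 3 k) = wa 3 (m + k) := by
  simp only [MulAut.conj_apply, wa]; group

theorem conj_wf (m k : ℤ) : MulAut.conj (σ₁ ^ m) (wf 3 k 0) = wf 3 (m + k) 0 := by
  simp only [MulAut.conj_apply, wf]; group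

theorem wa_eq_conj (m : ℤ) : wa 3 m = σ₁ ^ m * wa 3 0 * σ₁ ^ (-m) := by
  rw [zpow_neg, ← MulAut.conj_apply, conj_wa, add_zero]

theorem wf_eq_conj (m : ℤ) : wf 3 m 0 = σ₁ ^ m * wf 3 0 0 * σ₁ ^ (-m) := by
  rw [zpow_neg, ← MulAut.conj_apply, conj_wf, add_zero]

theorem wf_zero_inv_mul_inv : (wf 3 0 0)⁻¹ * (wf 3 0 0)⁻¹ = wf 3 0 0 := by
  have h := wρ_braid (n := 3) le_rfl (by norm_num)
  rw [wf_zero_eq, mul_inv_rev, ρ₁_inv, ρ₂_inv]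
  calc ρ₁ * ρ₂ * (ρ₁ * ρ₂) = ρ₂ * ρ₁ * (ρ₂ * ρ₂) := by rw [← mul_assoc, h]; group
    _ = ρ₂ * ρ₁ := by rw [ρ₂_mul_self, mul_one]

theorem wf_zero_eq_commutator : wf 3 0 0 = ⁅ρ₁, ρ₂⁆ := by
  rw [commutatorElement_def, ρ₁_inv, ρ₂_inv, ← wf_zero_inv_mul_inv, wf_zero_eq, mul_inv_rev,
    ρ₁_inv, ρ₂_inv]
  group

theorem wa_zero_eq_commutator : wa 3 0 = ⁅ρ₁, σ₁⁆ := by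
  rw [wa_zero_eq, commutatorElement_def, ρ₁_inv]

theorem ρ₂_eq : ρ₂ = wf 3 0 0 * ρ₁ := by
  rw [wf_zero_eq, mul_assoc, ρ₁_mul_self, mul_one]

theorem σ₂_eq : σ₂ = (wf 3 0 0)⁻¹ * σ₁ * wf 3 0 0 := by
  have h := wρ_mul_wρ_mul_wσ (n := 3) le_rfl (by norm_num)
  rw [wf_zero_eq, mul_inv_rev, ρ₁_inv, ρ₂_inv]
  calc σ₂ = σ₂ * ρ₁ * ρ₂ * (ρ₂ * ρ₁) := by
        rw [mul_assoc _ ρ₂, ← mul_assoc ρ₂, ρ₂_mul_self, one_mul, mul_assoc, ρ₁_mul_self, mul_one]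
    _ = ρ₁ * ρ₂ * σ₁ * (ρ₂ * ρ₁) := by rw [← h]

theorem conj_ρ₁_σ₁ : MulAut.conj ρ₁ σ₁ = wa 3 0 * σ₁ := by
  rw [MulAut.conj_apply, wa_zero_eq, ρ₁_inv]; group

theorem conj_ρ₁_wa_zero : MulAut.conj ρ₁ (wa 3 0) = (wa 3 0)⁻¹ := by
  simp only [MulAut.conj_apply, wa_zero_eq, mul_inv_rev, inv_inv, ρ₁_inv, ← mul_assoc,
    ρ₁_mul_self, one_mul]

theorem conj_ρ₁_wf_zero : MulAut.conj ρ₁ (wf 3 0 0) = (wf 3 0 0)⁻¹ := by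
  simp only [MulAut.conj_apply, wf_zero_eq, mul_inv_rev, ρ₁_inv, ρ₂_inv, mul_assoc,
    ρ₁_mul_self, mul_one]

theorem conj_ρ₁_wf (m : ℤ) :
    MulAut.conj ρ₁ (wf 3 m 0) = MulAut.conj ((wa 3 0 * σ₁) ^ m) (wf 3 0 0)⁻¹ := by
  rw [wf_eq_conj, map_mul, map_mul, map_zpow, map_zpow, conj_ρ₁_σ₁, conj_ρ₁_wf_zero,
    MulAut.conj_apply, zpow_neg]

theorem wf_three_eq :
    wf 3 3 0 = wf 3 2 0 * (wf 3 1 0)⁻¹ * wf 3 0 0 * ((wf 3 1 0)⁻¹ * wf 3 2 0) := by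
  have h : (wf 3 1 0)⁻¹ * wf 3 2 0 * σ₁ ^ 3
      = (wf 3 0 0)⁻¹ * wf 3 1 0 * (wf 3 2 0)⁻¹ * wf 3 3 0 * σ₁ ^ 3 := by
    rw [wf_eq_conj 1, wf_eq_conj 2, wf_eq_conj 3]
    calc _ = σ₁ * σ₂ * σ₁ := by rw [σ₂_eq]; group
      _ = σ₂ * σ₁ * σ₂ := wσ_braid (n := 3) le_rfl (by norm_num)
      _ = _ := by rw [σ₂_eq]; group
  rw [mul_right_cancel h]
  group

theorem wa_one_eq :
    wa 3 1 = wf 3 1 0 * (wa 3 0)⁻¹ * (wf 3 0 0 * wf 3 1 0 * wf 3 2 0) := by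
  have welded := wρ_mul_wσ_mul_wσ (n := 3) le_rfl (by norm_num)
  have h : wf 3 0 0 * (wa 3 0 * σ₁) * (wf 3 0 0)⁻¹ * (wa 3 0 * σ₁)
      = (wf 3 0 0)⁻¹ * σ₁ * wf 3 0 0 * σ₁ * wf 3 0 0 := by
    calc _ = MulAut.conj ρ₁ (σ₂ * σ₁) := by
          simp only [σ₂_eq, map_mul, map_inv, conj_ρ₁_σ₁, conj_ρ₁_wf_zero, inv_inv]
      _ = σ₂ * σ₁ * (ρ₂ * ρ₁⁻¹) := by
          rw [MulAut.conj_apply, ← mul_assoc, welded]; group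
      _ = _ := by rw [ρ₁_inv, ← wf_zero_eq, σ₂_eq]
  calc wa 3 1 = σ₁ * wf 3 0 0 * σ₁⁻¹ * (wa 3 0)⁻¹ * (wf 3 0 0)⁻¹
        * (wf 3 0 0 * (wa 3 0 * σ₁) * (wf 3 0 0)⁻¹ * (wa 3 0 * σ₁)) * σ₁ ^ (-2 : ℤ) := by
        rw [wa_eq_conj 1]; group
    _ = wf 3 1 0 * (wa 3 0)⁻¹ * ((wf 3 0 0)⁻¹ * (wf 3 0 0)⁻¹ * wf 3 1 0 * wf 3 2 0) := by
        rw [h, wf_eq_conj 1, wf_eq_conj 2]; group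
    _ = _ := by rw [wf_zero_inv_mul_inv]

theorem wf_add_three (m : ℤ) : wf 3 (m + 3) 0
    = wf 3 (m + 2) 0 * (wf 3 (m + 1) 0)⁻¹ * wf 3 m 0 * ((wf 3 (m + 1) 0)⁻¹ * wf 3 (m + 2) 0) := by
  simpa only [map_mul, map_inv, conj_wf, add_zero] using congrArg (MulAut.conj (σ₁ ^ m)) wf_three_eq

theorem wa_add_one (m : ℤ) :
    wa 3 (m + 1) = wf 3 (m + 1) 0 * (wa 3 m)⁻¹ * (wf 3 m 0 * wf 3 (m + 1) 0 * wf 3 (m + 2) 0) := by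
  simpa only [map_mul, map_inv, conj_wa, conj_wf, add_zero] using
    congrArg (MulAut.conj (σ₁ ^ m)) wa_one_eq

theorem closure_σ₁_ρ₁_sup_eq_top {K : Subgroup (WB 3)} (hK : wf 3 0 0 ∈ K) :
    closure {σ₁, ρ₁} ⊔ K = ⊤ := by
  have hσ₁ : σ₁ ∈ closure {σ₁, ρ₁} ⊔ K := mem_sup_left (subset_closure (by simp))
  have hρ₁ : ρ₁ ∈ closure {σ₁, ρ₁} ⊔ K := mem_sup_left (subset_closure (by simp))
  have hc : wf 3 0 0 ∈ closure {σ₁, ρ₁} ⊔ K := mem_sup_right hK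
  rw [eq_top_iff, ← PresentedGroup.closure_range_of, closure_le]
  rintro _ ⟨⟨i, hi⟩ | ⟨i, hi⟩, rfl⟩ <;> interval_cases i
  · exact hσ₁
  · exact (σ₂_eq ▸ mul_mem (mul_mem (inv_mem hc) hσ₁) hc : σ₂ ∈ _)
  · exact hρ₁
  · exact (ρ₂_eq ▸ mul_mem hc hρ₁ : ρ₂ ∈ _)

local notation "H" => closure ({wa 3 0, wf 3 0 0, wf 3 1 0, wf 3 2 0} : Set (WB 3))

theorem wf_mem (m : ℤ) : wf 3 m 0 ∈ H := by
  refine (Int.forall_of_iff_add_one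
    (P := fun m => wf 3 m 0 ∈ H ∧ wf 3 (m + 1) 0 ∈ H ∧ wf 3 (m + 2) 0 ∈ H) (fun m => ?_)
    ⟨subset_closure (by simp), subset_closure (by simp), subset_closure (by simp)⟩ m).1
  simp only [add_assoc, Int.reduceAdd]
  constructor
  · rintro ⟨h₀, h₁, h₂⟩
    refine ⟨h₁, h₂, ?_⟩
    rw [wf_add_three, mul_mem_cancel_right (mul_mem (inv_mem h₁) h₂)]
    exact mul_mem (mul_mem h₂ (inv_mem h₁)) h₀
  · rintro ⟨h₁, h₂, h₃⟩
    refine ⟨?_, h₁, h₂⟩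
    rwa [wf_add_three, mul_mem_cancel_right (mul_mem (inv_mem h₁) h₂),
      mul_mem_cancel_left (mul_mem h₂ (inv_mem h₁))] at h₃

theorem wa_mem (m : ℤ) : wa 3 m ∈ H := by
  refine Int.forall_of_iff_add_one (P := fun m => wa 3 m ∈ H) (fun m => ?_)
    (subset_closure (by simp)) m
  rw [wa_add_one, mul_mem_cancel_right (mul_mem (mul_mem (wf_mem _) (wf_mem _)) (wf_mem _)),
    mul_mem_cancel_left (wf_mem _), inv_mem_iff]

theorem σ₁_mem_normalizer : σ₁ ∈ normalizer H := by
  have h (m : ℤ) : ∀ x ∈ ({wa 3 0, wf 3 0 0, wf 3 1 0, wf 3 2 0} : Set (WB 3)),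
      MulAut.conj (σ₁ ^ m) x ∈ H := by
    simp only [Set.mem_insert_iff, Set.mem_singleton_iff]
    rintro x (rfl | rfl | rfl | rfl) <;> simp only [conj_wa, conj_wf, wa_mem, wf_mem]
  exact mem_normalizer_closure_of_conj_mem (by simpa using h 1) (by simpa using h (-1))

theorem ρ₁_mem_normalizer : ρ₁ ∈ normalizer H := by
  have hg : wa 3 0 * σ₁ ∈ normalizer H := mul_mem (le_normalizer (wa_mem 0)) σ₁_mem_normalizer
  have h : ∀ x ∈ ({wa 3 0, wf 3 0 0, wf 3 1 0, wf 3 2 0} : Set (WB 3)),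
      MulAut.conj ρ₁ x ∈ H := by
    simp only [Set.mem_insert_iff, Set.mem_singleton_iff]
    rintro x (rfl | rfl | rfl | rfl)
    · rw [conj_ρ₁_wa_zero]; exact inv_mem (wa_mem 0)
    all_goals
      rw [conj_ρ₁_wf, MulAut.conj_apply]
      exact (mem_normalizer_iff.1 (zpow_mem hg _) _).1 (inv_mem (wf_mem 0))
  exact mem_normalizer_closure_of_conj_mem h (ρ₁_inv ▸ h)

theorem closure_normal : (H).Normal := by
  rw [← normalizer_eq_top_iff, eq_top_iff,
    ← closure_σ₁_ρ₁_sup_eq_top (subset_closure (by simp) : wf 3 0 0 ∈ H)]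
  refine sup_le ((closure_le _).2 ?_) le_normalizer
  simp [Set.insert_subset_iff, σ₁_mem_normalizer, ρ₁_mem_normalizer]

theorem wf_mem_commutator (m : ℤ) : wf 3 m 0 ∈ commutator (WB 3) := by
  rw [wf_eq_conj, zpow_neg, wf_zero_eq_commutator]
  exact (commutator_normal ..).conj_mem _ (commutatorElement_mem_commutator _ _) _

theorem closure_le_commutator : H ≤ commutator (WB 3) := by
  simp [closure_le, Set.insert_subset_iff, wa_zero_eq_commutator,
    commutatorElement_mem_commutator, wf_mem_commutator]

theorem commutator_le_closure : commutator (WB 3) ≤ H := by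
  have := closure_normal
  refine commutator_le_of_closure_sup_eq_top (closure_σ₁_ρ₁_sup_eq_top (subset_closure (by simp)))
    ?_
  have h : ⁅ρ₁, σ₁⁆ ∈ H := wa_zero_eq_commutator ▸ wa_mem 0
  simp only [Set.mem_insert_iff, Set.mem_singleton_iff]
  rintro a (rfl | rfl) b (rfl | rfl)
  · simp
  · exact commutatorElement_inv ρ₁ σ₁ ▸ inv_mem h
  · exact h
  · simp

end WB3

/-- `WB_3'` is the subgroup of `WB_3` generated by the four
elements `a_0, f_0, f_1, f_2`. -/
theorem WB3_commutator_generators :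
    commutator (WB 3) = Subgroup.closure {wa 3 0, wf 3 0 0, wf 3 1 0, wf 3 2 0} :=
  le_antisymm WB3.commutator_le_closure WB3.closure_le_commutator
end

section
/- For every n ≥ 4, the commutator subgroup WB_n' of the welded braid group WB_n equals the subgroup of WB_n generated by the n elements f_0, f_1, f_2, c_3, c_4, …, c_{n−1} (images in WB_n of the corresponding elements of VB_n); in particular, WB_n' can be generated by n elements. -/
namespace WBAux

open Subgroup

variable {n : ℕ}

theorem mk_rel {r : FreeGroup (VBGen n)} (h : r ∈ wbRels n) :
    PresentedGroup.mk (wbRels n) r = 1 := by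
  apply (QuotientGroup.eq_one_iff _).mpr
  exact Subgroup.subset_normalClosure h

theorem fσ_def {i : ℕ} (h1 : 1 ≤ i) (h2 : i - 1 < n - 1) :
    fσ n i = FreeGroup.of (Sum.inl ⟨i - 1, h2⟩) := dif_pos ⟨h1, h2⟩

theorem fρ_def {i : ℕ} (h1 : 1 ≤ i) (h2 : i - 1 < n - 1) :
    fρ n i = FreeGroup.of (Sum.inr ⟨i - 1, h2⟩) := dif_pos ⟨h1, h2⟩

theorem mk_fσ (i : ℕ) : PresentedGroup.mk (wbRels n) (fσ n i) = wσ n i := rfl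
theorem mk_fρ (i : ℕ) : PresentedGroup.mk (wbRels n) (fρ n i) = wρ n i := rfl

/-- turn a relator membership into an equation -/
theorem rel_eq {a b : FreeGroup (VBGen n)} (h : a * b⁻¹ ∈ wbRels n) :
    PresentedGroup.mk (wbRels n) a = PresentedGroup.mk (wbRels n) b := by
  have h0 := mk_rel h
  rw [map_mul, map_inv, mul_inv_eq_one] at h0
  exact h0

theorem rho_sq {i : ℕ} (h1 : 1 ≤ i) (h2 : i ≤ n - 1) : wρ n i * wρ n i = 1 := by
  have : fρ n i * fρ n i ∈ wbRels n := Or.inl (Or.inr ⟨i, h1, h2, rfl⟩)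
  have h0 := mk_rel this
  rw [map_mul, mk_fρ] at h0
  exact h0

theorem braid_σ {i : ℕ} (h1 : 1 ≤ i) (h2 : i + 1 ≤ n - 1) :
    wσ n i * wσ n (i+1) * wσ n i = wσ n (i+1) * wσ n i * wσ n (i+1) := by
  have h : (fσ n i * fσ n (i+1) * fσ n i * (fσ n (i+1))⁻¹ * (fσ n i)⁻¹ * (fσ n (i+1))⁻¹ : FreeGroup (VBGen n)) ∈ wbRels n :=
    Or.inl (Or.inl (Or.inr ⟨i, h1, h2, Or.inl rfl⟩))
  have h0 := mk_rel h
  simp only [map_mul, map_inv, mk_fσ] at h0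
  rw [← mul_inv_eq_one]
  rw [show wσ n i * wσ n (i+1) * wσ n i * (wσ n (i+1) * wσ n i * wσ n (i+1))⁻¹
      = wσ n i * wσ n (i+1) * wσ n i * (wσ n (i+1))⁻¹ * (wσ n i)⁻¹ * (wσ n (i+1))⁻¹ by group]
  exact h0

theorem braid_ρ {i : ℕ} (h1 : 1 ≤ i) (h2 : i + 1 ≤ n - 1) :
    wρ n i * wρ n (i+1) * wρ n i = wρ n (i+1) * wρ n i * wρ n (i+1) := by
  have h : (fρ n i * fρ n (i+1) * fρ n i * (fρ n (i+1))⁻¹ * (fρ n i)⁻¹ * (fρ n (i+1))⁻¹ : FreeGroup (VBGen n)) ∈ wbRels n :=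
    Or.inl (Or.inl (Or.inr ⟨i, h1, h2, Or.inr (Or.inl rfl)⟩))
  have h0 := mk_rel h
  simp only [map_mul, map_inv, mk_fρ] at h0
  rw [← mul_inv_eq_one]
  rw [show wρ n i * wρ n (i+1) * wρ n i * (wρ n (i+1) * wρ n i * wρ n (i+1))⁻¹
      = wρ n i * wρ n (i+1) * wρ n i * (wρ n (i+1))⁻¹ * (wρ n i)⁻¹ * (wρ n (i+1))⁻¹ by group]
  exact h0

theorem mixed_rel {i : ℕ} (h1 : 1 ≤ i) (h2 : i + 1 ≤ n - 1) :
    wρ n i * wρ n (i+1) * wσ n i = wσ n (i+1) * wρ n i * wρ n (i+1) := by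
  have h : (fρ n i * fρ n (i+1) * fσ n i * (fρ n (i+1))⁻¹ * (fρ n i)⁻¹ * (fσ n (i+1))⁻¹ : FreeGroup (VBGen n)) ∈ wbRels n :=
    Or.inl (Or.inl (Or.inr ⟨i, h1, h2, Or.inr (Or.inr rfl)⟩))
  have h0 := mk_rel h
  simp only [map_mul, map_inv, mk_fρ, mk_fσ] at h0
  rw [← mul_inv_eq_one]
  rw [show wρ n i * wρ n (i+1) * wσ n i * (wσ n (i+1) * wρ n i * wρ n (i+1))⁻¹
      = wρ n i * wρ n (i+1) * wσ n i * (wρ n (i+1))⁻¹ * (wρ n i)⁻¹ * (wσ n (i+1))⁻¹ by group]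
  exact h0

theorem welded_rel {i : ℕ} (h1 : 1 ≤ i) (h2 : i + 1 ≤ n - 1) :
    wρ n i * wσ n (i+1) * wσ n i = wσ n (i+1) * wσ n i * wρ n (i+1) := by
  have h : (fρ n i * fσ n (i+1) * fσ n i * (fρ n (i+1))⁻¹ * (fσ n i)⁻¹ * (fσ n (i+1))⁻¹ : FreeGroup (VBGen n)) ∈ wbRels n :=
    Or.inr ⟨i, h1, h2, rfl⟩
  have h0 := mk_rel h
  simp only [map_mul, map_inv, mk_fρ, mk_fσ] at h0
  rw [← mul_inv_eq_one]
  rw [show wρ n i * wσ n (i+1) * wσ n i * (wσ n (i+1) * wσ n i * wρ n (i+1))⁻¹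
      = wρ n i * wσ n (i+1) * wσ n i * (wρ n (i+1))⁻¹ * (wσ n i)⁻¹ * (wσ n (i+1))⁻¹ by group]
  exact h0

theorem comm_σσ {i j : ℕ} (h1 : 1 ≤ i) (h2 : i + 2 ≤ j) (h3 : j ≤ n - 1) :
    wσ n i * wσ n j = wσ n j * wσ n i := by
  have h : (fσ n i * fσ n j * (fσ n i)⁻¹ * (fσ n j)⁻¹ : FreeGroup (VBGen n)) ∈ wbRels n :=
    Or.inl (Or.inl (Or.inl ⟨i, j, h1, h2, h3, Or.inl rfl⟩))
  have h0 := mk_rel h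
  simp only [map_mul, map_inv, mk_fσ] at h0
  rw [← mul_inv_eq_one]
  rw [show wσ n i * wσ n j * (wσ n j * wσ n i)⁻¹
      = wσ n i * wσ n j * (wσ n i)⁻¹ * (wσ n j)⁻¹ by group]
  exact h0

theorem comm_ρρ {i j : ℕ} (h1 : 1 ≤ i) (h2 : i + 2 ≤ j) (h3 : j ≤ n - 1) :
    wρ n i * wρ n j = wρ n j * wρ n i := by
  have h : (fρ n i * fρ n j * (fρ n i)⁻¹ * (fρ n j)⁻¹ : FreeGroup (VBGen n)) ∈ wbRels n :=
    Or.inl (Or.inl (Or.inl ⟨i, j, h1, h2, h3, Or.inr (Or.inl rfl)⟩))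
  have h0 := mk_rel h
  simp only [map_mul, map_inv, mk_fρ] at h0
  rw [← mul_inv_eq_one]
  rw [show wρ n i * wρ n j * (wρ n j * wρ n i)⁻¹
      = wρ n i * wρ n j * (wρ n i)⁻¹ * (wρ n j)⁻¹ by group]
  exact h0

theorem comm_σρ {i j : ℕ} (h1 : 1 ≤ i) (h2 : i + 2 ≤ j) (h3 : j ≤ n - 1) :
    wσ n i * wρ n j = wρ n j * wσ n i := by
  have h : (fσ n i * fρ n j * (fσ n i)⁻¹ * (fρ n j)⁻¹ : FreeGroup (VBGen n)) ∈ wbRels n :=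
    Or.inl (Or.inl (Or.inl ⟨i, j, h1, h2, h3, Or.inr (Or.inr (Or.inl rfl))⟩))
  have h0 := mk_rel h
  simp only [map_mul, map_inv, mk_fσ, mk_fρ] at h0
  rw [← mul_inv_eq_one]
  rw [show wσ n i * wρ n j * (wρ n j * wσ n i)⁻¹
      = wσ n i * wρ n j * (wσ n i)⁻¹ * (wρ n j)⁻¹ by group]
  exact h0

theorem comm_σρ' {i j : ℕ} (h1 : 1 ≤ i) (h2 : i + 2 ≤ j) (h3 : j ≤ n - 1) :
    wσ n j * wρ n i = wρ n i * wσ n j := by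
  have h : (fσ n j * fρ n i * (fσ n j)⁻¹ * (fρ n i)⁻¹ : FreeGroup (VBGen n)) ∈ wbRels n :=
    Or.inl (Or.inl (Or.inl ⟨i, j, h1, h2, h3, Or.inr (Or.inr (Or.inr rfl))⟩))
  have h0 := mk_rel h
  simp only [map_mul, map_inv, mk_fσ, mk_fρ] at h0
  rw [← mul_inv_eq_one]
  rw [show wσ n j * wρ n i * (wρ n i * wσ n j)⁻¹
      = wσ n j * wρ n i * (wσ n j)⁻¹ * (wρ n i)⁻¹ by group]
  exact h0

end WBAux
namespace WBAux

section Core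

variable (n : ℕ)

/-- s = σ₁ -/ def es : WB n := wσ n 1
/-- t = σ₂ -/ def et : WB n := wσ n 2
/-- v = σ₃ -/ def ev : WB n := wσ n 3
/-- r = ρ₁ -/ def er : WB n := wρ n 1
/-- u = ρ₂ -/ def eu : WB n := wρ n 2
/-- w = ρ₃ -/ def ew : WB n := wρ n 3

def F0 : WB n := eu n * er n
def F1 : WB n := es n * F0 n * (es n)⁻¹
def F2 : WB n := es n * F1 n * (es n)⁻¹
def Fm1 : WB n := (es n)⁻¹ * F0 n * es n
def Fm2 : WB n := (es n)⁻¹ * Fm1 n * es n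
def D0 : WB n := et n * (es n)⁻¹
def D1 : WB n := es n * D0 n * (es n)⁻¹
def D2 : WB n := es n * D1 n * (es n)⁻¹
def Dm1 : WB n := (es n)⁻¹ * D0 n * es n
def X : WB n := er n * es n * er n * (es n)⁻¹
def Y : WB n := es n * X n * (es n)⁻¹
def Z : WB n := (es n)⁻¹ * X n * es n
def CC : WB n := ev n * (es n)⁻¹
def EE : WB n := CC n * D1 n
def A0 : WB n := (D0 n)⁻¹ * (CC n)⁻¹ * Fm1 n * CC n * F0 n
def Am : WB n := (Dm1 n)⁻¹ * (CC n)⁻¹ * Fm2 n * CC n * Fm1 n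
def MU : WB n := Am n * (Fm1 n)⁻¹ * Dm1 n * F1 n

variable {n}
variable (hn : 4 ≤ n)
include hn

theorem hr : er n * er n = 1 := rho_sq le_rfl (by omega)
theorem hu : eu n * eu n = 1 := rho_sq (by omega) (by omega)
theorem hw : ew n * ew n = 1 := rho_sq (by omega) (by omega)
theorem inv_r : (er n)⁻¹ = er n := inv_eq_of_mul_eq_one_right (hr hn)
theorem inv_u : (eu n)⁻¹ = eu n := inv_eq_of_mul_eq_one_right (hu hn)
theorem inv_w : (ew n)⁻¹ = ew n := inv_eq_of_mul_eq_one_right (hw hn)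
theorem hbr1 : es n * et n * es n = et n * es n * et n := braid_σ le_rfl (by omega)
theorem hmix : er n * eu n * es n = et n * er n * eu n := mixed_rel le_rfl (by omega)
theorem hweld1 : er n * et n * es n = et n * es n * eu n := welded_rel le_rfl (by omega)
theorem hweld2 : eu n * ev n * et n = ev n * et n * ew n := welded_rel (by omega) (by omega)
theorem hvs : es n * ev n = ev n * es n := comm_σσ le_rfl (by omega) (by omega)
theorem hvr : ev n * er n = er n * ev n := comm_σρ' le_rfl (by omega) (by omega)
theorem hws : es n * ew n = ew n * es n := comm_σρ le_rfl (by omega) (by omega)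
theorem hwr : ew n * er n = er n * ew n := (comm_ρρ le_rfl (by omega) (by omega)).symm

/-- t = rusur -/
theorem ht : et n = er n * eu n * es n * eu n * er n := by
  have h := hmix hn
  have : et n * (er n * eu n) = (er n * eu n * es n * eu n * er n) * (er n * eu n) := by
    rw [show (er n * eu n * es n * eu n * er n) * (er n * eu n)
        = er n * eu n * es n * eu n * (er n * er n) * eu n by group, hr hn,
      show er n * eu n * es n * eu n * 1 * eu n = er n * eu n * es n * (eu n * eu n) by group,
      hu hn, mul_one, ← mul_assoc, ← h]
  exact mul_right_cancel this

/-- D0 = F0⁻¹ F1 -/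
theorem hD0 : D0 n = (F0 n)⁻¹ * F1 n := by
  simp only [D0, F0, F1, mul_inv_rev, inv_r hn, inv_u hn]
  rw [ht hn]; group

end Core
end WBAux
namespace WBAux
section Core2
variable {n : ℕ}

/-- generic conjugation combinators -/
theorem gconj_mul {g a b a' b' : WB n} (h1 : g⁻¹ * a * g = a') (h2 : g⁻¹ * b * g = b') :
    g⁻¹ * (a * b) * g = a' * b' := by rw [← h1, ← h2]; group

theorem gconj_inv {g a b : WB n} (h : g⁻¹ * a * g = b) : g⁻¹ * a⁻¹ * g = b⁻¹ := by
  rw [← h]; group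

variable (hn : 4 ≤ n)
include hn

/-- u = F0 * r -/
theorem hF0r : eu n = F0 n * er n := by
  rw [F0, show eu n * er n * er n = eu n * (er n * er n) by group, hr hn, mul_one]

theorem comm_inv_left {a b : WB n} (h : a * b = b * a) : b * a⁻¹ = a⁻¹ * b := by
  have h2 := congrArg (fun z => a⁻¹ * z * a⁻¹) h
  simpa [mul_assoc] using h2

/- conjugation by r atoms, in the form (er n)⁻¹ * x * er n = x' -/
theorem rs : (er n)⁻¹ * es n * er n = X n * es n := by rw [inv_r hn, X]; group

theorem rsi : (er n)⁻¹ * (es n)⁻¹ * er n = (es n)⁻¹ * (X n)⁻¹ := by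
  rw [inv_r hn,
    show (es n)⁻¹ * (X n)⁻¹ = (es n)⁻¹ * (es n * (er n)⁻¹ * (es n)⁻¹ * (er n)⁻¹) by rw [X]; group,
    inv_r hn]
  group

theorem rF0 : (er n)⁻¹ * F0 n * er n = (F0 n)⁻¹ := by
  rw [inv_r hn, show er n * F0 n * er n = er n * eu n * (er n * er n) by rw [F0]; group, hr hn,
    show (F0 n)⁻¹ = (er n)⁻¹ * (eu n)⁻¹ by rw [F0]; group, inv_r hn, inv_u hn]
  group

theorem rF1 : (er n)⁻¹ * F1 n * er n = X n * (F1 n)⁻¹ * (X n)⁻¹ := by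
  have h := gconj_mul (gconj_mul (rs hn) (rF0 hn)) (rsi hn)
  rw [show es n * F0 n * ((es n)⁻¹ : WB n) = F1 n from rfl] at h
  rw [h, F1]; group

theorem rX : (er n)⁻¹ * X n * er n = (X n)⁻¹ := by
  rw [inv_r hn, show er n * X n * er n = (er n * er n) * (es n * er n * (es n)⁻¹ * er n) by
    rw [X]; group, hr hn,
    show (X n)⁻¹ = es n * (er n)⁻¹ * (es n)⁻¹ * (er n)⁻¹ by rw [X]; group, inv_r hn]
  group

theorem rC : (er n)⁻¹ * CC n * er n = CC n * (X n)⁻¹ := by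
  rw [inv_r hn, show er n * CC n * er n = er n * ev n * ((es n)⁻¹ * er n) by rw [CC]; group,
    ← hvr hn, show ev n * er n * ((es n)⁻¹ * er n) = ev n * (er n * (es n)⁻¹ * er n) by group,
    show er n * (es n)⁻¹ * er n = (er n)⁻¹ * (es n)⁻¹ * er n by rw [inv_r hn], rsi hn, CC]
  group

theorem rD0 : (er n)⁻¹ * D0 n * er n = F0 n * X n * (F1 n)⁻¹ * (X n)⁻¹ := by
  have h := gconj_mul (gconj_inv (rF0 hn)) (rF1 hn)
  rw [← hD0 hn] at h
  rw [h]; group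

theorem rD1 : (er n)⁻¹ * D1 n * er n = X n * F1 n * Y n * (F2 n)⁻¹ * (Y n)⁻¹ * (X n)⁻¹ := by
  have h := gconj_mul (gconj_mul (rs hn) (rD0 hn)) (rsi hn)
  rw [show es n * D0 n * ((es n)⁻¹ : WB n) = D1 n from rfl] at h
  rw [h, Y, F2, X, F1]; group

theorem rEE : (er n)⁻¹ * EE n * er n
    = CC n * (X n)⁻¹ * (X n * F1 n * Y n * (F2 n)⁻¹ * (Y n)⁻¹ * (X n)⁻¹) := by
  have h := gconj_mul (rC hn) (rD1 hn)
  rw [show CC n * D1 n = EE n from rfl] at h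
  exact h

/-- welded(2) in the form u·E = E·w -/
theorem hEw : eu n * EE n = EE n * ew n := by
  have hvt : ev n * et n = EE n * (es n * es n) := by
    simp only [EE, CC, D1, D0]; group
  have hssw : es n * es n * ew n = ew n * (es n * es n) := by
    rw [show es n * es n * ew n = es n * (es n * ew n) by group, hws hn,
      show es n * (ew n * es n) = (es n * ew n) * es n by group, hws hn]
    group
  have key : (eu n * EE n) * (es n * es n) = (EE n * ew n) * (es n * es n) := by
    rw [show (eu n * EE n) * (es n * es n) = eu n * (EE n * (es n * es n)) by group, ← hvt,
      show eu n * (ev n * et n) = eu n * ev n * et n by group, hweld2 hn, hvt,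
      show EE n * (es n * es n) * ew n = EE n * (es n * es n * ew n) by group, hssw]
    group
  exact mul_right_cancel key

theorem hwdef : ew n = (EE n)⁻¹ * eu n * EE n := by
  rw [show (EE n)⁻¹ * eu n * EE n = (EE n)⁻¹ * (eu n * EE n) by group, hEw hn]; group

/-- G3' : w·r = D1⁻¹ C⁻¹ F0 C F1 Y F2⁻¹ Y⁻¹ X⁻¹ -/
theorem hG3 : ew n * er n = (D1 n)⁻¹ * (CC n)⁻¹ * F0 n * CC n * F1 n * Y n * (F2 n)⁻¹ *
    (Y n)⁻¹ * (X n)⁻¹ := by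
  rw [hwdef hn, hF0r hn,
    show (EE n)⁻¹ * (F0 n * er n) * EE n * er n
       = (EE n)⁻¹ * F0 n * ((er n)⁻¹ * EE n * er n) by rw [inv_r hn]; group,
    rEE hn, EE, X]
  group

/-- shift identity s⁻¹ (wr) s = (wr) Z⁻¹ -/
theorem hshift : (es n)⁻¹ * (ew n * er n) * es n = (ew n * er n) * (Z n)⁻¹ := by
  have hsub : (es n)⁻¹ * er n * es n = er n * (Z n)⁻¹ := by
    rw [show er n * (Z n)⁻¹ = er n * ((er n)⁻¹ * ((es n)⁻¹ * (er n)⁻¹ * es n)) by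
        rw [Z, X]; group, inv_r hn,
      show er n * (er n * ((es n)⁻¹ * er n * es n)) = (er n * er n) * ((es n)⁻¹ * er n * es n) by
        group, hr hn]
    group
  rw [show (es n)⁻¹ * (ew n * er n) * es n = ((es n)⁻¹ * ew n) * (er n * es n) by group,
    (comm_inv_left hn (hws hn)).symm,
    show (ew n * (es n)⁻¹) * (er n * es n) = ew n * ((es n)⁻¹ * er n * es n) by group, hsub]
  group

end Core2
end WBAux
namespace WBAux
section Core3
variable {n : ℕ} (hn : 4 ≤ n)

/- conjugation by s⁻¹ atoms -/
omit hn in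
theorem sD1 : (es n)⁻¹ * D1 n * es n = D0 n := by rw [D1]; group
omit hn in
theorem sD0 : (es n)⁻¹ * D0 n * es n = Dm1 n := rfl
omit hn in
theorem sF0 : (es n)⁻¹ * F0 n * es n = Fm1 n := rfl
omit hn in
theorem sFm1 : (es n)⁻¹ * Fm1 n * es n = Fm2 n := rfl
omit hn in
theorem sF1 : (es n)⁻¹ * F1 n * es n = F0 n := by rw [F1]; group
omit hn in
theorem sF2 : (es n)⁻¹ * F2 n * es n = F1 n := by rw [F2]; group
omit hn in
theorem sY : (es n)⁻¹ * Y n * es n = X n := by rw [Y]; group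
omit hn in
theorem sX : (es n)⁻¹ * X n * es n = Z n := rfl

include hn in
theorem sCC : (es n)⁻¹ * CC n * es n = CC n := by
  rw [CC, show (es n)⁻¹ * (ev n * (es n)⁻¹) * es n = ((es n)⁻¹ * ev n) * ((es n)⁻¹ * es n) by
    group, (comm_inv_left hn (hvs hn)).symm]
  group

include hn in
/-- E1 : w·r = A0 X F1⁻¹ X⁻¹ -/
theorem hE1 : ew n * er n = A0 n * X n * (F1 n)⁻¹ * (X n)⁻¹ := by
  have hmid := gconj_mul (gconj_mul (gconj_mul (gconj_mul (gconj_mul (gconj_mul (gconj_mul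
      (gconj_mul (gconj_inv (sD1 (n := n))) (gconj_inv (sCC hn))) (sF0 (n := n)))
      (sCC hn)) (sF1 (n := n))) (sY (n := n))) (gconj_inv (sF2 (n := n))))
      (gconj_inv (sY (n := n)))) (gconj_inv (sX (n := n)))
  have key : (ew n * er n) * (Z n)⁻¹ = (A0 n * X n * (F1 n)⁻¹ * (X n)⁻¹) * (Z n)⁻¹ := by
    rw [← hshift hn, hG3 hn, hmid, A0]
  exact mul_right_cancel key

include hn in
/-- E6' : w·r = Am Z F0⁻¹ -/
theorem hE6 : ew n * er n = Am n * Z n * (F0 n)⁻¹ := by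
  have hmid := gconj_mul (gconj_mul (gconj_mul (gconj_mul (gconj_mul (gconj_mul (gconj_mul
      (gconj_inv (sD0 (n := n))) (gconj_inv (sCC hn))) (sFm1 (n := n)))
      (sCC hn)) (sF0 (n := n))) (sX (n := n))) (gconj_inv (sF1 (n := n))))
      (gconj_inv (sX (n := n)))
  have key : (ew n * er n) * (Z n)⁻¹ = (Am n * Z n * (F0 n)⁻¹) * (Z n)⁻¹ := by
    rw [← hshift hn, hE1 hn,
      show A0 n * X n * (F1 n)⁻¹ * (X n)⁻¹
         = (D0 n)⁻¹ * (CC n)⁻¹ * Fm1 n * CC n * F0 n * X n * (F1 n)⁻¹ * (X n)⁻¹ by rw [A0],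
      hmid, Am]
  exact mul_right_cancel key

end Core3
end WBAux
namespace WBAux
section Core4
variable {n : ℕ} (hn : 4 ≤ n)
include hn

theorem hW2 : Y n = F1 n * (X n)⁻¹ * (F0 n)⁻¹ * D0 n * F2 n := by
  refine Eq.symm ?_
  calc F1 n * (X n)⁻¹ * (F0 n)⁻¹ * D0 n * F2 n
      = es n * eu n * (es n)⁻¹ * ((er n)⁻¹ * (er n)⁻¹) * (eu n)⁻¹ *
        (et n * (es n * (eu n * (er n * ((es n)⁻¹ * (es n)⁻¹))))) := by
        simp only [F2, F1, F0, D0, X]; group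
    _ = es n * eu n * (es n)⁻¹ * (eu n)⁻¹ *
        (et n * (es n * (eu n * (er n * ((es n)⁻¹ * (es n)⁻¹))))) := by
        rw [show ((er n)⁻¹ * (er n)⁻¹ : WB n) = (er n * er n)⁻¹ by group, hr hn]; group
    _ = es n * eu n * (es n)⁻¹ * (eu n)⁻¹ *
        ((er n * et n * es n) * (er n * ((es n)⁻¹ * (es n)⁻¹))) := by
        rw [hweld1 hn]; group
    _ = es n * eu n * (es n)⁻¹ * (eu n)⁻¹ *
        ((er n * (er n * eu n * es n * eu n * er n) * es n) *
          (er n * ((es n)⁻¹ * (es n)⁻¹))) := by rw [← ht hn]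
    _ = es n * eu n * (es n)⁻¹ * ((eu n)⁻¹ * ((er n * er n) *
        (eu n * (es n * (eu n * (er n * (es n * (er n * ((es n)⁻¹ * (es n)⁻¹))))))))) := by
        group
    _ = es n * (eu n * eu n) * (er n * (es n * (er n * ((es n)⁻¹ * (es n)⁻¹)))) := by
        rw [hr hn]; group
    _ = Y n := by rw [hu hn, Y, X]; group

theorem hW2m : X n = F0 n * (Z n)⁻¹ * (Fm1 n)⁻¹ * Dm1 n * F1 n := by
  have hmid := gconj_mul (gconj_mul (gconj_mul (gconj_mul (sF1 (n := n))
    (gconj_inv (sX (n := n)))) (gconj_inv (sF0 (n := n)))) (sD0 (n := n))) (sF2 (n := n))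
  rw [show X n = (es n)⁻¹ * Y n * es n from (sY (n := n)).symm, hW2 hn, hmid]

theorem hZval : Z n = (Am n)⁻¹ * (ew n * er n) * F0 n := by rw [hE6 hn]; group

theorem hXval : X n = (ew n * er n)⁻¹ * MU n := by
  rw [hW2m hn, hZval hn, MU]; group

theorem hMain : ew n * er n = MU n * (F1 n)⁻¹ * (MU n)⁻¹ * A0 n := by
  have h := hE1 hn
  rw [hXval hn] at h
  have h2 : (A0 n * ((ew n * er n)⁻¹ * (MU n * (F1 n)⁻¹ * (MU n)⁻¹))) * (ew n * er n)
      = 1 * (ew n * er n) := by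
    rw [one_mul]; conv_rhs => rw [h]
    group
  have h3 := mul_right_cancel h2
  have h4 : (ew n * er n)⁻¹ * (MU n * (F1 n)⁻¹ * (MU n)⁻¹) = (A0 n)⁻¹ :=
    eq_inv_of_mul_eq_one_right h3
  rw [show MU n * (F1 n)⁻¹ * (MU n)⁻¹ * A0 n
      = ((ew n * er n) * ((ew n * er n)⁻¹ * (MU n * (F1 n)⁻¹ * (MU n)⁻¹))) * A0 n by group, h4]
  group

theorem hXfinal : X n = (MU n * (F1 n)⁻¹ * (MU n)⁻¹ * A0 n)⁻¹ * MU n := by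
  rw [← hMain hn]; exact hXval hn

end Core4
end WBAux
namespace WBAux
section Mem
open Subgroup
variable (n : ℕ)

/-- the generating set of the statement -/
def genSet : Set (WB n) :=
  {wf n 0 0, wf n 1 0, wf n 2 0} ∪ {x | ∃ l, 3 ≤ l ∧ l ≤ n - 1 ∧ x = wc n l}

/-- the subgroup generated by f₀, f₁, f₂, c₃, …, c_{n-1} -/
def HH : Subgroup (WB n) := Subgroup.closure (genSet n)

def ffz (m : ℤ) : WB n := es n ^ m * F0 n * es n ^ (-m)
def ddz (m : ℤ) : WB n := es n ^ m * D0 n * es n ^ (-m)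

variable {n}

theorem wf_eq_ffz (m : ℤ) : wf n m 0 = ffz n m := by
  simp only [wf, ffz, F0, es, eu, er, pow_zero, pow_one, one_mul, zero_add]

theorem wc_eq (l : ℕ) : wc n l = wσ n l * (es n)⁻¹ := rfl

theorem mem_ffz0 : ffz n 0 ∈ HH n :=
  (wf_eq_ffz 0) ▸ subset_closure (Or.inl (Set.mem_insert _ _))
theorem mem_ffz1 : ffz n 1 ∈ HH n :=
  (wf_eq_ffz 1) ▸ subset_closure (Or.inl (Set.mem_insert_of_mem _ (Set.mem_insert _ _)))
theorem mem_ffz2 : ffz n 2 ∈ HH n :=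
  (wf_eq_ffz 2) ▸ subset_closure
    (Or.inl (Set.mem_insert_of_mem _ (Set.mem_insert_of_mem _ rfl)))
theorem mem_wc {l : ℕ} (h3 : 3 ≤ l) (hl : l ≤ n - 1) : wσ n l * (es n)⁻¹ ∈ HH n :=
  subset_closure (Or.inr ⟨l, h3, hl, rfl⟩)

theorem ffz_zero : ffz n 0 = F0 n := by simp only [ffz]; group
theorem ffz_one : ffz n 1 = F1 n := by simp only [ffz, F1]; group
theorem ffz_two : ffz n 2 = F2 n := by
  simp only [ffz, F2, F1, show (2:ℤ) = 1 + 1 by norm_num, zpow_add, zpow_one, zpow_neg]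
  group
theorem ffz_m1 : ffz n (-1) = Fm1 n := by simp only [ffz, Fm1]; group
theorem ffz_m2 : ffz n (-2) = Fm2 n := by
  simp only [ffz, Fm2, Fm1, show ((-2):ℤ) = -1 + -1 by norm_num, zpow_add, zpow_neg, zpow_one,
    neg_add, neg_neg]
  group
theorem ddz_zero : ddz n 0 = D0 n := by simp only [ddz]; group
theorem ddz_one : ddz n 1 = D1 n := by simp only [ddz, D1]; group
theorem ddz_m1 : ddz n (-1) = Dm1 n := by simp only [ddz, Dm1]; group

variable (hn : 4 ≤ n)
include hn

/-- braid recursion at level 0 : D1 = D0 * D2 -/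
theorem hD2 : D1 n = D0 n * D2 n := by
  refine Eq.symm ?_
  calc D0 n * D2 n
      = (et n * es n * et n) * ((es n)⁻¹ * ((es n)⁻¹ * (es n)⁻¹)) := by
        simp only [D2, D1, D0]; group
    _ = (es n * et n * es n) * ((es n)⁻¹ * ((es n)⁻¹ * (es n)⁻¹)) := by rw [hbr1 hn]
    _ = D1 n := by simp only [D1, D0]; group

theorem ddz_rec (m : ℤ) : ddz n (m + 1) = ddz n m * ddz n (m + 2) := by
  rw [show ddz n (m+1) = es n ^ m * D1 n * es n ^ (-m) by simp only [ddz, D1, D0]; group,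
    show ddz n m * ddz n (m+2) = es n ^ m * (D0 n * D2 n) * es n ^ (-m) by
      simp only [ddz, D2, D1, D0]; group,
    ← hD2 hn]

theorem ddz_f (m : ℤ) : ddz n m = (ffz n m)⁻¹ * ffz n (m + 1) := by
  rw [show ddz n m = es n ^ m * D0 n * es n ^ (-m) from rfl,
    show (ffz n m)⁻¹ * ffz n (m+1) = es n ^ m * ((F0 n)⁻¹ * F1 n) * es n ^ (-m) by
      simp only [ffz, F1]; group, ← hD0 hn]

theorem mem_ddz (m : ℤ) : ddz n m ∈ HH n := by
  have key : ∀ m : ℤ, ddz n m ∈ HH n ∧ ddz n (m + 1) ∈ HH n := by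
    intro m
    induction m using Int.induction_on with
    | zero =>
      constructor
      · rw [ddz_f hn 0]
        exact mul_mem (inv_mem mem_ffz0) mem_ffz1
      · rw [show ((0:ℤ)+1) = 1 by norm_num, ddz_f hn 1]
        exact mul_mem (inv_mem mem_ffz1) mem_ffz2
    | succ k ih =>
      refine ⟨ih.2, ?_⟩
      have h2 : ddz n ((k : ℤ) + 2) = (ddz n k)⁻¹ * ddz n (k + 1) := by
        rw [ddz_rec hn k]; group
      rw [show ((k : ℤ) + 1) + 1 = (k : ℤ) + 2 by ring, h2]
      exact mul_mem (inv_mem ih.1) ih.2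
    | pred k ih =>
      have h2 : ddz n (-(k : ℤ) - 1) = ddz n (-k) * (ddz n (-k + 1))⁻¹ := by
        have h := ddz_rec hn (-(k : ℤ) - 1)
        rw [show (-(k:ℤ) - 1) + 1 = -k by ring, show (-(k:ℤ) - 1) + 2 = -k + 1 by ring] at h
        rw [h]; group
      constructor
      · rw [h2]
        exact mul_mem ih.1 (inv_mem ih.2)
      · rw [show (-(k:ℤ) - 1) + 1 = -(k:ℤ) by ring]
        exact ih.1
  exact (key m).1

theorem ffz_rec (m : ℤ) : ffz n (m + 1) = ffz n m * ddz n m := by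
  rw [ddz_f hn m]; group

theorem mem_ffz (m : ℤ) : ffz n m ∈ HH n := by
  induction m using Int.induction_on with
  | zero => exact mem_ffz0
  | succ k ih => rw [ffz_rec hn k]; exact mul_mem ih (mem_ddz hn k)
  | pred k ih =>
    have h := ffz_rec hn (-(k:ℤ) - 1)
    rw [show (-(k:ℤ) - 1) + 1 = -k by ring] at h
    rw [show ffz n (-(k:ℤ) - 1) = ffz n (-(k:ℤ)) * (ddz n (-(k:ℤ) - 1))⁻¹ by rw [h]; group]
    exact mul_mem ih (inv_mem (mem_ddz hn _))

end Mem
end WBAux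
namespace WBAux
section Mem2
open Subgroup
variable {n : ℕ}

theorem sffz (m : ℤ) : es n * ffz n m * (es n)⁻¹ = ffz n (m+1) := by
  simp only [ffz]; group

theorem sffz' (m : ℤ) : (es n)⁻¹ * ffz n m * es n = ffz n (m-1) := by
  simp only [ffz]; group

variable (hn : 4 ≤ n)
include hn

theorem conj_wc {l : ℕ} (h3 : 3 ≤ l) (hl : l ≤ n - 1) :
    es n * (wσ n l * (es n)⁻¹) * (es n)⁻¹ = wσ n l * (es n)⁻¹ ∧
    (es n)⁻¹ * (wσ n l * (es n)⁻¹) * es n = wσ n l * (es n)⁻¹ := by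
  have hcomm : es n * wσ n l = wσ n l * es n := comm_σσ le_rfl h3 hl
  constructor
  · rw [show es n * (wσ n l * (es n)⁻¹) * (es n)⁻¹ = (es n * wσ n l) * ((es n)⁻¹ * (es n)⁻¹) by
      group, hcomm]
    group
  · rw [show (es n)⁻¹ * (wσ n l * (es n)⁻¹) * es n = ((es n)⁻¹ * wσ n l) * ((es n)⁻¹ * es n) by
      group, ← comm_inv_left hn hcomm]
    group

theorem hconj {x : WB n} (hx : x ∈ HH n) :
    es n * x * (es n)⁻¹ ∈ HH n ∧ (es n)⁻¹ * x * es n ∈ HH n := by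
  induction hx using Subgroup.closure_induction with
  | mem y hy =>
    rcases hy with hy | ⟨l, h3, hl, rfl⟩
    · have hy' : y = ffz n 0 ∨ y = ffz n 1 ∨ y = ffz n 2 := by
        rcases hy with h | h | h
        · exact Or.inl (by rw [h, wf_eq_ffz])
        · exact Or.inr (Or.inl (by rw [h, wf_eq_ffz]))
        · exact Or.inr (Or.inr (by rw [Set.eq_of_mem_singleton h, wf_eq_ffz]))
      have key : ∀ m : ℤ, es n * ffz n m * (es n)⁻¹ ∈ HH n ∧
          (es n)⁻¹ * ffz n m * es n ∈ HH n := fun m =>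
        ⟨(sffz m) ▸ mem_ffz hn (m+1), (sffz' m) ▸ mem_ffz hn (m-1)⟩
      rcases hy' with rfl | rfl | rfl
      · exact key 0
      · exact key 1
      · exact key 2
    · rw [wc_eq, (conj_wc hn h3 hl).1 , (conj_wc hn h3 hl).2]
      exact ⟨mem_wc h3 hl, mem_wc h3 hl⟩
  | one =>
    constructor
    · rw [mul_one, mul_inv_cancel]; exact one_mem _
    · rw [mul_one, inv_mul_cancel]; exact one_mem _
  | mul x y hx hy ihx ihy =>
    constructor
    · rw [show es n * (x * y) * (es n)⁻¹ = (es n * x * (es n)⁻¹) * (es n * y * (es n)⁻¹) by group]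
      exact mul_mem ihx.1 ihy.1
    · rw [show (es n)⁻¹ * (x * y) * es n = ((es n)⁻¹ * x * es n) * ((es n)⁻¹ * y * es n) by group]
      exact mul_mem ihx.2 ihy.2
  | inv x hx ihx =>
    constructor
    · rw [show es n * x⁻¹ * (es n)⁻¹ = (es n * x * (es n)⁻¹)⁻¹ by group]
      exact inv_mem ihx.1
    · rw [show (es n)⁻¹ * x⁻¹ * es n = ((es n)⁻¹ * x * es n)⁻¹ by group]
      exact inv_mem ihx.2

theorem hzconj (m : ℤ) {x : WB n} (hx : x ∈ HH n) : es n ^ m * x * es n ^ (-m) ∈ HH n := by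
  induction m using Int.induction_on with
  | zero => simpa using hx
  | succ k ih =>
    rw [show es n ^ ((k:ℤ)+1) * x * es n ^ (-((k:ℤ)+1))
        = es n * (es n ^ (k:ℤ) * x * es n ^ (-(k:ℤ))) * (es n)⁻¹ by group]
    exact (hconj hn ih).1
  | pred k ih =>
    rw [show es n ^ (-(k:ℤ)-1) * x * es n ^ (-(-(k:ℤ)-1))
        = (es n)⁻¹ * (es n ^ (-(k:ℤ)) * x * es n ^ (-(-(k:ℤ)))) * es n by group]
    exact (hconj hn ih).2

theorem mem_CC : CC n ∈ HH n := mem_wc (le_refl 3) (by omega)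

theorem mem_A0 : A0 n ∈ HH n := by
  rw [A0, ← ddz_zero, ← ffz_m1, ← ffz_zero]
  exact mul_mem (mul_mem (mul_mem (mul_mem (inv_mem (mem_ddz hn 0)) (inv_mem (mem_CC hn)))
    (mem_ffz hn _)) (mem_CC hn)) (mem_ffz hn _)

theorem mem_Am : Am n ∈ HH n := by
  rw [Am, ← ddz_m1, ← ffz_m2, ← ffz_m1]
  exact mul_mem (mul_mem (mul_mem (mul_mem (inv_mem (mem_ddz hn _)) (inv_mem (mem_CC hn)))
    (mem_ffz hn _)) (mem_CC hn)) (mem_ffz hn _)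

theorem mem_MU : MU n ∈ HH n := by
  rw [MU, ← ddz_m1, ← ffz_m1, ← ffz_one]
  exact mul_mem (mul_mem (mul_mem (mem_Am hn) (inv_mem (mem_ffz hn _))) (mem_ddz hn _))
    (mem_ffz hn _)

theorem mem_G3 : ew n * er n ∈ HH n := by
  rw [hMain hn, ← ffz_one]
  exact mul_mem (mul_mem (mul_mem (mem_MU hn) (inv_mem (mem_ffz hn _))) (inv_mem (mem_MU hn)))
    (mem_A0 hn)

theorem mem_X : X n ∈ HH n := by
  rw [hXfinal hn, ← ffz_one]
  exact mul_mem (inv_mem (mul_mem (mul_mem (mul_mem (mem_MU hn) (inv_mem (mem_ffz hn _)))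
    (inv_mem (mem_MU hn))) (mem_A0 hn))) (mem_MU hn)

/-- the inner word r·σ₂·r·s⁻¹, used in the Schreier generator case σ₂, ε = 1 -/
theorem hrtr : er n * et n * er n * (es n)⁻¹ = F0 n * X n * (F1 n)⁻¹ := by
  rw [show er n * et n * er n * (es n)⁻¹
      = ((er n)⁻¹ * D0 n * er n) * ((er n * er n)⁻¹ * (er n * es n * er n * (es n)⁻¹)) by
        rw [inv_r hn, D0]; group, hr hn, rD0 hn,
    show er n * es n * er n * (es n)⁻¹ = X n from rfl]
  group

theorem mem_rtr : er n * et n * er n * (es n)⁻¹ ∈ HH n := by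
  rw [hrtr hn, ← ffz_zero, ← ffz_one]
  exact mul_mem (mul_mem (mem_ffz hn _) (mem_X hn)) (inv_mem (mem_ffz hn _))

/-- g_l ∈ H for all 3 ≤ l ≤ n-1 -/
theorem mem_gg : ∀ l, 3 ≤ l → l ≤ n - 1 → wρ n l * er n ∈ HH n := by
  intro l h3 hl
  induction l, h3 using Nat.le_induction with
  | base => exact mem_G3 hn
  | succ l h3 ih =>
    have hl' : l ≤ n - 1 := by omega
    have hll : l + 1 ≤ n - 1 := hl
    have h1l : 1 ≤ l := by omega
    have hwld := welded_rel (n := n) h1l hll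
    have hidr : wρ n (l+1) = (wσ n (l+1) * wσ n l)⁻¹ * wρ n l * (wσ n (l+1) * wσ n l) := by
      rw [show (wσ n (l+1) * wσ n l)⁻¹ * wρ n l * (wσ n (l+1) * wσ n l)
          = (wσ n (l+1) * wσ n l)⁻¹ * (wρ n l * wσ n (l+1) * wσ n l) by group, hwld]
      group
    have hcr1 : wσ n l * er n = er n * wσ n l := comm_σρ' le_rfl h3 hl'
    have hcr2 : wσ n (l+1) * er n = er n * wσ n (l+1) := comm_σρ' le_rfl (by omega) hll
    have hcs : es n * wσ n l = wσ n l * es n := comm_σσ le_rfl h3 hl'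
    have hid2 : wρ n (l+1) * er n
        = (wσ n (l+1) * wσ n l)⁻¹ * (wρ n l * er n) * (wσ n (l+1) * wσ n l) := by
      rw [hidr, show (wσ n (l+1) * wσ n l)⁻¹ * wρ n l * (wσ n (l+1) * wσ n l) * er n
          = (wσ n (l+1) * wσ n l)⁻¹ * wρ n l * wσ n (l+1) * (wσ n l * er n) by group, hcr1,
        show (wσ n (l+1) * wσ n l)⁻¹ * wρ n l * wσ n (l+1) * (er n * wσ n l)
          = (wσ n (l+1) * wσ n l)⁻¹ * wρ n l * (wσ n (l+1) * er n) * wσ n l by group, hcr2]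
      group
    have hid3 : wσ n (l+1) * wσ n l
        = (wσ n (l+1) * (es n)⁻¹) * (wσ n l * (es n)⁻¹) * es n ^ (2:ℤ) := by
      rw [show (wσ n (l+1) * (es n)⁻¹) * (wσ n l * (es n)⁻¹) * es n ^ (2:ℤ)
          = wσ n (l+1) * ((es n)⁻¹ * wσ n l) * ((es n)⁻¹ * es n ^ (2:ℤ)) by group,
        ← comm_inv_left hn hcs]
      have : (es n)⁻¹ * es n ^ (2:ℤ) = es n := by group
      rw [show wσ n (l+1) * (wσ n l * (es n)⁻¹) * ((es n)⁻¹ * es n ^ (2:ℤ))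
          = wσ n (l+1) * wσ n l * ((es n)⁻¹ * ((es n)⁻¹ * es n ^ (2:ℤ))) by group, this]
      group
    rw [hid2, hid3]
    have hinner : (wσ n (l+1) * (es n)⁻¹) * (wσ n l * (es n)⁻¹) ∈ HH n :=
      mul_mem (mem_wc (by omega) hll) (mem_wc h3 hl')
    have hmem : ((wσ n (l+1) * (es n)⁻¹) * (wσ n l * (es n)⁻¹))⁻¹ * (wρ n l * er n) *
        ((wσ n (l+1) * (es n)⁻¹) * (wσ n l * (es n)⁻¹)) ∈ HH n :=
      mul_mem (mul_mem (inv_mem hinner) (ih hl')) hinner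
    have := hzconj hn (-2 : ℤ) hmem
    rw [show (-(-2 : ℤ)) = (2:ℤ) by norm_num] at this
    rw [show ((wσ n (l+1) * (es n)⁻¹) * (wσ n l * (es n)⁻¹) * es n ^ (2:ℤ))⁻¹ * (wρ n l * er n) *
        ((wσ n (l+1) * (es n)⁻¹) * (wσ n l * (es n)⁻¹) * es n ^ (2:ℤ))
        = es n ^ (-2 : ℤ) * (((wσ n (l+1) * (es n)⁻¹) * (wσ n l * (es n)⁻¹))⁻¹ * (wρ n l * er n) *
          ((wσ n (l+1) * (es n)⁻¹) * (wσ n l * (es n)⁻¹))) * es n ^ (2:ℤ) by group]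
    exact this

end Mem2
end WBAux
namespace WBAux
section Phi
open Subgroup
variable {n : ℕ}

/-- the abelianization target -/
abbrev Tgt := Multiplicative (ℤ × ZMod 2)

def φgen (n : ℕ) : VBGen n → Tgt :=
  Sum.elim (fun _ => Multiplicative.ofAdd ((1 : ℤ), (0 : ZMod 2)))
    (fun _ => Multiplicative.ofAdd ((0 : ℤ), (1 : ZMod 2)))

theorem lift_fσ {i : ℕ} (h1 : 1 ≤ i) (h2 : i - 1 < n - 1) :
    FreeGroup.lift (φgen n) (fσ n i) = Multiplicative.ofAdd ((1 : ℤ), (0 : ZMod 2)) := by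
  rw [fσ_def h1 h2, FreeGroup.lift_apply_of]; rfl

theorem lift_fρ {i : ℕ} (h1 : 1 ≤ i) (h2 : i - 1 < n - 1) :
    FreeGroup.lift (φgen n) (fρ n i) = Multiplicative.ofAdd ((0 : ℤ), (1 : ZMod 2)) := by
  rw [fρ_def h1 h2, FreeGroup.lift_apply_of]; rfl

theorem φrels : ∀ r ∈ wbRels n, FreeGroup.lift (φgen n) r = 1 := by
  rintro r (((⟨i, j, h1, h2, h3, hr⟩ | ⟨i, h1, h2, hr⟩) | ⟨i, h1, h2, hr⟩) | ⟨i, h1, h2, hr⟩)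
  · have hi1 : 1 ≤ i := h1
    have hi2 : i - 1 < n - 1 := by omega
    have hj1 : 1 ≤ j := by omega
    have hj2 : j - 1 < n - 1 := by omega
    rcases hr with rfl | rfl | rfl | rfl <;>
      simp only [map_mul, map_inv, lift_fσ hi1 hi2, lift_fσ hj1 hj2, lift_fρ hi1 hi2,
        lift_fρ hj1 hj2, ← ofAdd_neg, ← ofAdd_add, Prod.mk_add_mk, Prod.neg_mk,
        ofAdd_eq_one, Prod.mk_eq_zero] <;>
      exact ⟨by omega, by decide⟩
  · have hi1 : 1 ≤ i := h1
    have hi2 : i - 1 < n - 1 := by omega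
    have hi1' : 1 ≤ i + 1 := by omega
    have hi2' : i + 1 - 1 < n - 1 := by omega
    rcases hr with rfl | rfl | rfl <;>
      simp only [map_mul, map_inv, lift_fσ hi1 hi2, lift_fσ hi1' hi2', lift_fρ hi1 hi2,
        lift_fρ hi1' hi2', ← ofAdd_neg, ← ofAdd_add, Prod.mk_add_mk, Prod.neg_mk,
        ofAdd_eq_one, Prod.mk_eq_zero] <;>
      exact ⟨by omega, by decide⟩
  · have hi1 : 1 ≤ i := h1
    have hi2 : i - 1 < n - 1 := by omega
    subst hr
    simp only [map_mul, lift_fρ hi1 hi2, ← ofAdd_add, Prod.mk_add_mk,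
      ofAdd_eq_one, Prod.mk_eq_zero]
    exact ⟨by omega, by decide⟩
  · have hi1 : 1 ≤ i := h1
    have hi2 : i - 1 < n - 1 := by omega
    have hi1' : 1 ≤ i + 1 := by omega
    have hi2' : i + 1 - 1 < n - 1 := by omega
    subst hr
    simp only [map_mul, map_inv, lift_fσ hi1 hi2, lift_fσ hi1' hi2', lift_fρ hi1 hi2,
      lift_fρ hi1' hi2', ← ofAdd_neg, ← ofAdd_add, Prod.mk_add_mk, Prod.neg_mk,
      ofAdd_eq_one, Prod.mk_eq_zero]
    exact ⟨by omega, by decide⟩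

/-- the abelianization homomorphism -/
def φW (n : ℕ) : WB n →* Tgt := PresentedGroup.toGroup (f := φgen n) φrels

theorem φW_mk (x : FreeGroup (VBGen n)) :
    φW n (PresentedGroup.mk (wbRels n) x) = FreeGroup.lift (φgen n) x := rfl

theorem φW_of (g : VBGen n) : φW n (PresentedGroup.of g) = φgen n g :=
  PresentedGroup.toGroup.of _

variable (hn : 4 ≤ n)
include hn

theorem φW_s : φW n (es n) = Multiplicative.ofAdd ((1 : ℤ), (0 : ZMod 2)) :=
  (φW_mk _).trans (lift_fσ le_rfl (by omega))

theorem φW_r : φW n (er n) = Multiplicative.ofAdd ((0 : ℤ), (1 : ZMod 2)) :=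
  (φW_mk _).trans (lift_fρ le_rfl (by omega))

end Phi
end WBAux
namespace WBAux
section Rep
open Subgroup
variable {n : ℕ}

theorem zmod2_cases : ∀ e : ZMod 2, e = 0 ∨ e = 1 := by decide

def rep (n : ℕ) (p : Tgt) : WB n :=
  es n ^ (p.toAdd.1) * (if p.toAdd.2 = 1 then er n else 1)

theorem rep_ofAdd (m : ℤ) (e : ZMod 2) :
    rep n (Multiplicative.ofAdd (m, e)) = es n ^ m * (if e = 1 then er n else 1) := rfl

def RRset (n : ℕ) : Set (WB n) := Set.range (rep n)

variable (hn : 4 ≤ n)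
include hn

theorem φ_rep (p : Tgt) : φW n (rep n p) = p := by
  obtain ⟨⟨m, e⟩, rfl⟩ : ∃ q : ℤ × ZMod 2, Multiplicative.ofAdd q = p := ⟨p.toAdd, rfl⟩
  rw [rep_ofAdd, map_mul, map_zpow, φW_s hn]
  rcases zmod2_cases e with rfl | rfl
  · rw [if_neg (by decide), map_one, mul_one, ← ofAdd_zsmul]
    congr 1
    simp
  · rw [if_pos rfl, φW_r hn, ← ofAdd_zsmul, ← ofAdd_add]
    congr 1
    simp [Prod.ext_iff]

theorem hR1 : (1 : WB n) ∈ RRset n := by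
  refine ⟨1, ?_⟩
  rw [show (1 : Tgt) = Multiplicative.ofAdd ((0 : ℤ), (0 : ZMod 2)) from rfl, rep_ofAdd,
    if_neg (by decide)]
  group

theorem hRtrans : Subgroup.IsComplement (((φW n).ker : Subgroup (WB n)) : Set (WB n)) (RRset n) := by
  rw [Subgroup.isComplement_iff_existsUnique_mul_inv_mem]
  intro g
  refine ⟨⟨rep n (φW n g), Set.mem_range_self _⟩, ?_, ?_⟩
  · show g * (rep n (φW n g))⁻¹ ∈ (φW n).ker
    rw [MonoidHom.mem_ker, map_mul, map_inv, φ_rep hn, mul_inv_cancel]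
  · rintro ⟨y, q, rfl⟩ hy
    have h1 : φW n (rep n q) = φW n g := by
      have : g * (rep n q)⁻¹ ∈ (φW n).ker := hy
      rw [MonoidHom.mem_ker, map_mul, map_inv] at this
      exact (mul_inv_eq_one.mp this).symm
    apply Subtype.ext
    show rep n q = rep n (φW n g)
    rw [← h1, φ_rep hn]

theorem toFun_eq (g : WB n) :
    ((Subgroup.IsComplement.toRightFun (hRtrans hn) g : WB n)) = rep n (φW n g) := by
  have hEU := Subgroup.isComplement_iff_existsUnique_mul_inv_mem.mp (hRtrans hn) g
  have h1 := Subgroup.IsComplement.mul_inv_toRightFun_mem (hRtrans hn) g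
  have h2 : g * ((⟨rep n (φW n g), Set.mem_range_self _⟩ : RRset n) : WB n)⁻¹ ∈
      ((φW n).ker : Subgroup (WB n)) := by
    show g * (rep n (φW n g))⁻¹ ∈ (φW n).ker
    rw [MonoidHom.mem_ker, map_mul, map_inv, φ_rep hn, mul_inv_cancel]
  have h3 := hEU.unique h1 h2
  exact congrArg Subtype.val h3

theorem of_inl (i : Fin (n - 1)) :
    (PresentedGroup.of (Sum.inl i) : WB n) = wσ n (i.val + 1) := by
  have hi := i.isLt
  have hfin : (⟨i.val + 1 - 1, by omega⟩ : Fin (n - 1)) = i := by ext; simp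
  rw [wσ, fσ_def (by omega) (by omega), hfin]
  rfl

theorem of_inr (i : Fin (n - 1)) :
    (PresentedGroup.of (Sum.inr i) : WB n) = wρ n (i.val + 1) := by
  have hi := i.isLt
  have hfin : (⟨i.val + 1 - 1, by omega⟩ : Fin (n - 1)) = i := by ext; simp
  rw [wρ, fρ_def (by omega) (by omega), hfin]
  rfl

end Rep
end WBAux
namespace WBAux
section Cases
open Subgroup
variable {n : ℕ} (hn : 4 ≤ n)
include hn

theorem mem_F0 : F0 n ∈ HH n := ffz_zero ▸ mem_ffz hn 0

theorem schreier_gen_mem (p : Tgt) (g : VBGen n) :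
    rep n p * PresentedGroup.of g * (rep n (p * φW n (PresentedGroup.of g)))⁻¹ ∈ HH n := by
  obtain ⟨⟨m, e⟩, rfl⟩ : ∃ q : ℤ × ZMod 2, Multiplicative.ofAdd q = p := ⟨p.toAdd, rfl⟩
  cases g with
  | inl i =>
    have hi := i.isLt
    rw [of_inl hn,
      show φW n (wσ n (i.val + 1)) = Multiplicative.ofAdd ((1 : ℤ), (0 : ZMod 2)) from
        (φW_mk _).trans (lift_fσ (by omega) (by omega)),
      ← ofAdd_add, Prod.mk_add_mk, add_zero, rep_ofAdd, rep_ofAdd]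
    rcases zmod2_cases e with rfl | rfl
    · rw [if_neg (by decide), mul_one, mul_one]
      rcases hiv : i.val with _ | _ | k
      · rw [show es n ^ m * wσ n (0 + 1) * (es n ^ (m + 1))⁻¹ = 1 by
          rw [show wσ n 1 = es n from rfl]; group]
        exact one_mem _
      · rw [show es n ^ m * wσ n (1 + 1) * (es n ^ (m + 1))⁻¹ = ddz n m by
          rw [show wσ n 2 = et n from rfl]; simp only [ddz, D0]; group]
        exact mem_ddz hn m
      · rw [show es n ^ m * wσ n (k + 2 + 1) * (es n ^ (m + 1))⁻¹
            = es n ^ m * (wσ n (k + 3) * (es n)⁻¹) * es n ^ (-m) by group]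
        exact hzconj hn m (mem_wc (by omega) (by omega))
    · 
      rw [if_pos (show (1 : ZMod 2) = 1 from rfl)]
      rcases hiv : i.val with _ | _ | k
      · rw [show es n ^ m * er n * wσ n (0 + 1) * (es n ^ (m + 1) * er n)⁻¹
            = es n ^ m * (er n * es n * (er n)⁻¹ * (es n)⁻¹) * es n ^ (-m) by
              rw [show wσ n 1 = es n from rfl]; group, inv_r hn,
          show er n * es n * er n * (es n)⁻¹ = X n from rfl]
        exact hzconj hn m (mem_X hn)
      · rw [show es n ^ m * er n * wσ n (1 + 1) * (es n ^ (m + 1) * er n)⁻¹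
            = es n ^ m * (er n * et n * (er n)⁻¹ * (es n)⁻¹) * es n ^ (-m) by
              rw [show wσ n 2 = et n from rfl]; group, inv_r hn]
        exact hzconj hn m (mem_rtr hn)
      · have hc : wσ n (k + 3) * er n = er n * wσ n (k + 3) :=
          comm_σρ' le_rfl (by omega) (by omega)
        rw [show es n ^ m * er n * wσ n (k + 2 + 1) * (es n ^ (m + 1) * er n)⁻¹
            = es n ^ m * (er n * wσ n (k + 3) * (er n)⁻¹ * (es n)⁻¹) * es n ^ (-m) by group,
          inv_r hn, ← hc,
          show es n ^ m * (wσ n (k + 3) * er n * er n * (es n)⁻¹) * es n ^ (-m)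
            = es n ^ m * (wσ n (k + 3) * (er n * er n) * (es n)⁻¹) * es n ^ (-m) by group,
          hr hn,
          show es n ^ m * (wσ n (k + 3) * 1 * (es n)⁻¹) * es n ^ (-m)
            = es n ^ m * (wσ n (k + 3) * (es n)⁻¹) * es n ^ (-m) by group]
        exact hzconj hn m (mem_wc (by omega) (by omega))
  | inr i =>
    have hi := i.isLt
    rw [of_inr hn,
      show φW n (wρ n (i.val + 1)) = Multiplicative.ofAdd ((0 : ℤ), (1 : ZMod 2)) from
        (φW_mk _).trans (lift_fρ (by omega) (by omega)),
      ← ofAdd_add, Prod.mk_add_mk, add_zero, rep_ofAdd, rep_ofAdd]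
    rcases zmod2_cases e with rfl | rfl
    · rw [if_neg (by decide), if_pos (by decide), mul_one]
      rcases hiv : i.val with _ | _ | k
      · rw [show es n ^ m * wρ n (0 + 1) * (es n ^ m * er n)⁻¹ = 1 by
          rw [show wρ n 1 = er n from rfl]; group]
        exact one_mem _
      · rw [show es n ^ m * wρ n (1 + 1) * (es n ^ m * er n)⁻¹
            = es n ^ m * (eu n * (er n)⁻¹) * es n ^ (-m) by
              rw [show wρ n 2 = eu n from rfl]; group, inv_r hn,
          show eu n * er n = F0 n from rfl]
        exact hzconj hn m (mem_F0 hn)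
      · rw [show es n ^ m * wρ n (k + 2 + 1) * (es n ^ m * er n)⁻¹
            = es n ^ m * (wρ n (k + 3) * (er n)⁻¹) * es n ^ (-m) by group, inv_r hn]
        exact hzconj hn m (mem_gg hn (k + 3) (by omega) (by omega))
    · rw [if_pos rfl, if_neg (by decide), mul_one]
      rcases hiv : i.val with _ | _ | k
      · rw [show es n ^ m * er n * wρ n (0 + 1) * (es n ^ m)⁻¹
            = es n ^ m * (er n * er n) * es n ^ (-m) by
              rw [show wρ n 1 = er n from rfl]; group, hr hn,
          show es n ^ m * 1 * es n ^ (-m) = 1 by group]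
        exact one_mem _
      · have hrequ : er n * eu n = (F0 n)⁻¹ := by
          rw [F0, mul_inv_rev, inv_r hn, inv_u hn]
        rw [show es n ^ m * er n * wρ n (1 + 1) * (es n ^ m)⁻¹
            = es n ^ m * (er n * eu n) * es n ^ (-m) by
              rw [show wρ n 2 = eu n from rfl]; group, hrequ]
        exact hzconj hn m (inv_mem (mem_F0 hn))
      · have hid : er n * wρ n (k + 3) = (wρ n (k + 3) * er n)⁻¹ := by
          rw [mul_inv_rev, inv_r hn,
            inv_eq_of_mul_eq_one_right (rho_sq (by omega) (by omega))]
        rw [show es n ^ m * er n * wρ n (k + 2 + 1) * (es n ^ m)⁻¹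
            = es n ^ m * (er n * wρ n (k + 3)) * es n ^ (-m) by group, hid]
        exact hzconj hn m (inv_mem (mem_gg hn (k + 3) (by omega) (by omega)))

end Cases
end WBAux
namespace WBAux
section Final
open Subgroup
open scoped commutatorElement
variable {n : ℕ} (hn : 4 ≤ n)
include hn

theorem ker_le_HH : (φW n).ker ≤ HH n := by
  rw [← Subgroup.closure_mul_image_eq (hRtrans hn) (hR1 hn)
    (PresentedGroup.closure_range_of (wbRels n)), Subgroup.closure_le]
  rintro x ⟨g, hg, rfl⟩
  rw [Set.mem_mul] at hg
  obtain ⟨t, ht, y, hy, rfl⟩ := hg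
  obtain ⟨p, rfl⟩ := ht
  obtain ⟨gen, rfl⟩ := hy
  dsimp only
  rw [toFun_eq hn, map_mul, φ_rep hn]
  exact schreier_gen_mem hn p gen

theorem comm_f (m : ℤ) : wf n m 0 ∈ commutator (WB n) := by
  have h0 : eu n * er n = ⁅er n * eu n, er n⁆ := by
    refine Eq.symm ?_
    calc ⁅er n * eu n, er n⁆
        = (er n * eu n * er n) * (eu n * (er n * er n)) := by
          rw [commutatorElement_def, mul_inv_rev, inv_r hn, inv_u hn]; group
      _ = (eu n * er n * eu n) * (eu n * 1) := by
          have hb : er n * eu n * er n = eu n * er n * eu n := braid_ρ le_rfl (by omega)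
          rw [hb, hr hn]
      _ = eu n * er n * (eu n * eu n) := by group
      _ = eu n * er n := by rw [hu hn]; group
  have hcom : wf n m 0 = ⁅es n ^ m * (er n * eu n) * es n ^ (-m),
      es n ^ m * er n * es n ^ (-m)⁆ := by
    rw [wf_eq_ffz, show ffz n m = es n ^ m * (eu n * er n) * es n ^ (-m) from rfl, h0]
    simp only [commutatorElement_def]
    group
  rw [hcom, _root_.commutator_def]
  exact Subgroup.commutator_mem_commutator (Subgroup.mem_top _) (Subgroup.mem_top _)

theorem comm_c {l : ℕ} (h3 : 3 ≤ l) (hl : l ≤ n - 1) : wc n l ∈ commutator (WB n) := by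
  have key : ∀ l, 1 ≤ l → l ≤ n - 1 → ∃ q : WB n, wσ n l = q * wσ n 1 * q⁻¹ := by
    intro l h1 hl
    induction l, h1 using Nat.le_induction with
    | base => exact ⟨1, by group⟩
    | succ l h1 ih =>
      obtain ⟨q, hq⟩ := ih (by omega)
      refine ⟨wσ n l * wσ n (l + 1) * q, ?_⟩
      have hb := braid_σ (n := n) h1 (by omega)
      rw [show wσ n l * wσ n (l + 1) * q * wσ n 1 * (wσ n l * wσ n (l + 1) * q)⁻¹
          = wσ n l * wσ n (l + 1) * (q * wσ n 1 * q⁻¹) * ((wσ n (l + 1))⁻¹ * (wσ n l)⁻¹) by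
            group, ← hq,
        show wσ n l * wσ n (l + 1) * wσ n l * ((wσ n (l + 1))⁻¹ * (wσ n l)⁻¹)
          = wσ n l * wσ n (l + 1) * wσ n l * (wσ n (l + 1))⁻¹ * (wσ n l)⁻¹ by group, hb]
      group
  obtain ⟨q, hq⟩ := key l (by omega) hl
  have hcq : wc n l = ⁅q, wσ n 1⁆ := by
    rw [wc, hq, commutatorElement_def]
  rw [hcq, _root_.commutator_def]
  exact Subgroup.commutator_mem_commutator (Subgroup.mem_top _) (Subgroup.mem_top _)

theorem HH_le_comm : HH n ≤ commutator (WB n) := by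
  rw [HH, Subgroup.closure_le]
  rintro x (hx | ⟨l, h3, hl, rfl⟩)
  · rcases hx with h | h | h
    · exact h ▸ comm_f hn 0
    · exact h ▸ comm_f hn 1
    · exact (Set.eq_of_mem_singleton h) ▸ comm_f hn 2
  · exact comm_c hn h3 hl

theorem main_result : commutator (WB n) = HH n :=
  le_antisymm ((Abelianization.commutator_subset_ker (φW n)).trans (ker_le_HH hn))
    (HH_le_comm hn)

end Final
end WBAux
/-- For `n ≥ 4`, `WB_n'` is the subgroup of `WB_n` generated by the
`n` elements `f_0, f_1, f_2, c_3, …, c_{n-1}`. -/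
theorem WB_commutator_generators (n : ℕ) (hn : 4 ≤ n) :
    commutator (WB n) = Subgroup.closure
      ({wf n 0 0, wf n 1 0, wf n 2 0} ∪
       {x | ∃ l, 3 ≤ l ∧ l ≤ n - 1 ∧ x = wc n l}) := by
  exact WBAux.main_result hn
end
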